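/- arXiv:math/0609235 — 5 statements merged into one kernel-verified Lean document; each statement's English description precedes it below -/
import Mathlib

section
/- (Golab semicontinuity) Let X be a complete metric space and C_n a sequence of continua in X converging in Hausdorff distance to C. Then C is a continuum and H^1(C) ≤ liminf_{n→∞} H^1(C_n), where H^1 denotes the one-dimensional Hausdorff measure. -/
open Metric MeasureTheory
open scoped ENNReal NNReal

/-- One-dimensional Hausdorff measure of a subset of a metric space
(with the Borel σ-algebra). -/
noncomputable def H1 (X : Type*) [MetricSpace X] : Set X → ℝ≥0∞ :=
  letI : MeasurableSpace X := borel X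
  haveI : BorelSpace X := ⟨rfl⟩
  fun A => MeasureTheory.Measure.hausdorffMeasure 1 A

/-- Packing number of a subset of a metric space: the supremum of cardinalities
of finite subsets of `A` whose open `ε`-balls are pairwise disjoint. -/
noncomputable def packingNumber {X : Type*} [MetricSpace X] (A : Set X) (ε : ℝ) : ℕ∞ :=
  ⨆ (s : Finset X) (_ : ↑s ⊆ A ∧ (s : Set X).Pairwise
      fun x y => Disjoint (Metric.ball x ε) (Metric.ball y ε)), (s.card : ℕ∞)

/-- Relative Steiner invariant of a subset `S` of a metric space `X`. -/
noncomputable def relSteiner (X : Type*) [MetricSpace X] (S : Set X) : ℝ≥0∞ :=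
  sInf {r : ℝ≥0∞ | ∃ C : Set X, IsCompact C ∧ IsConnected C ∧
    IsCompact (C ∪ S) ∧ IsConnected (C ∪ S) ∧ r = H1 X C}

/-- Absolute Steiner invariant of a compact metric space `S`. -/
noncomputable def absSteiner (S : Type*) [MetricSpace S] : ℝ≥0∞ :=
  sInf {r : ℝ≥0∞ | ∃ (X : Type) (_ : MetricSpace X) (ι : S → X),
    Isometry ι ∧ r = relSteiner X (Set.range ι)}

open Filter

section GolabAux
open Metric MeasureTheory Set Filter
open scoped ENNReal NNReal
variable {X : Type*} [MetricSpace X] [MeasurableSpace X] [BorelSpace X]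



/-- The 1-Hausdorff measure of the image of a set under a 1-Lipschitz map into ℝ bounds below. -/
lemma h1_image_le {f : X → ℝ} (hf : LipschitzWith 1 f) (S : Set X) :
    μH[1] (f '' S) ≤ μH[1] S := by
  simpa using hf.hausdorffMeasure_image_le (by norm_num : (0:ℝ) ≤ 1) S

lemma ofReal_le_h1_of_Icc_subset {S : Set X} {f : X → ℝ} (hf : LipschitzWith 1 f)
    {a b : ℝ} (h : Icc a b ⊆ f '' S) : ENNReal.ofReal (b - a) ≤ μH[1] S := by
  calc ENNReal.ofReal (b - a) = volume (Icc a b) := by rw [Real.volume_Icc]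
  _ = μH[1] (Icc a b) := by rw [MeasureTheory.hausdorffMeasure_real]
  _ ≤ μH[1] (f '' S) := measure_mono h
  _ ≤ μH[1] S := h1_image_le hf S

/-- A connected set has `H¹` measure at least its diameter. -/
lemma ediam_le_h1 {S : Set X} (hS : IsPreconnected S) : EMetric.diam S ≤ μH[1] S := by
  apply EMetric.diam_le
  intro x hx y hy
  have hf : LipschitzWith 1 (dist x) := LipschitzWith.dist_right x
  have h : Icc (dist x x) (dist x y) ⊆ (dist x) '' S :=
    hS.intermediate_value hx hy (hf.continuous.continuousOn)
  have h2 := ofReal_le_h1_of_Icc_subset hf h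
  rw [dist_self, sub_zero] at h2
  rwa [edist_dist]

/-- Measure of a distance-ball slice of a connected set. -/
lemma ofReal_le_h1_slice {S : Set X} (hS : IsPreconnected S) {x y : X} (hx : x ∈ S)
    (hy : y ∈ S) {t : ℝ} (ht0 : 0 ≤ t) (hty : t ≤ dist x y) :
    ENNReal.ofReal t ≤ μH[1] (S ∩ (dist x) ⁻¹' (Iic t)) := by
  have hf : LipschitzWith 1 (dist x) := LipschitzWith.dist_right x
  have main : Icc 0 t ⊆ (dist x) '' (S ∩ (dist x) ⁻¹' (Iic t)) := by
    intro s hs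
    have h : Icc (dist x x) (dist x y) ⊆ (dist x) '' S :=
      hS.intermediate_value hx hy (hf.continuous.continuousOn)
    obtain ⟨z, hz, hzs⟩ : s ∈ (dist x) '' S := by
      apply h; rw [dist_self]; exact ⟨hs.1, le_trans hs.2 hty⟩
    exact ⟨z, ⟨hz, by simp [hzs, hs.2]⟩, hzs⟩
  have := ofReal_le_h1_of_Icc_subset hf main
  rwa [sub_zero] at this


/-- Boundary bumping: in a compact connected set `K`, the connected component of any point of a
closed proper subset `A` reaches the closure of `K \ A`. -/
lemma bumping {K A : Set X} (hK : IsCompact K) (hKc : IsPreconnected K)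
    (hA : IsClosed A) (hAK : A ⊆ K) (hne : (K \ A).Nonempty) {p : X} (hp : p ∈ A) :
    (connectedComponentIn A p ∩ closure (K \ A)).Nonempty := by
  by_contra hcon
  rw [Set.not_nonempty_iff_eq_empty] at hcon
  have hAcomp : IsCompact A := hK.of_isClosed_subset hA hAK
  haveI : CompactSpace A := isCompact_iff_compactSpace.mp hAcomp
  set p' : A := ⟨p, hp⟩ with hp'
  have himg : connectedComponentIn A p = (↑) '' connectedComponent p' :=
    connectedComponentIn_eq_image hp
  set B' : Set A := (Subtype.val : A → X) ⁻¹' (closure (K \ A)) with hB'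
  have hB'closed : IsClosed B' := (isClosed_closure).preimage continuous_subtype_val
  have hB'comp : IsCompact B' := hB'closed.isCompact
  have hBcc : B' ∩ ⋂ (s : {s : Set A // IsClopen s ∧ p' ∈ s}), (s : Set A) = ∅ := by
    rw [← connectedComponent_eq_iInter_isClopen p']
    ext q
    simp only [Set.mem_inter_iff, Set.mem_empty_iff_false, iff_false, not_and]
    intro hqB hqc
    have : (q : X) ∈ connectedComponentIn A p ∩ closure (K \ A) :=
      ⟨himg ▸ ⟨q, hqc, rfl⟩, hqB⟩
    rw [hcon] at this; exact this
  obtain ⟨u, hu⟩ := hB'comp.elim_finite_subfamily_closed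
    (fun s : {s : Set A // IsClopen s ∧ p' ∈ s} => (s : Set A))
    (fun s => s.2.1.isClosed) hBcc
  set P' : Set A := ⋂ i ∈ u, (i : Set A) with hP'
  have hP'clopen : IsClopen P' := isClopen_biInter_finset fun i _ => i.2.1
  have hp'P' : p' ∈ P' := Set.mem_iInter₂.mpr fun i _ => i.2.2
  set P : Set X := Subtype.val '' P' with hPdef
  have hpP : p ∈ P := ⟨p', hp'P', rfl⟩
  have hPA : P ⊆ A := by rintro z ⟨w, _, rfl⟩; exact w.2
  have hPcomp : IsCompact P := (hP'clopen.isClosed.isCompact).image continuous_subtype_val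
  have hPB : P ∩ closure (K \ A) = ∅ := by
    ext z
    simp only [Set.mem_inter_iff, Set.mem_empty_iff_false, iff_false, not_and]
    rintro ⟨w, hw, rfl⟩ hz
    have : w ∈ B' ∩ ⋂ i ∈ u, (i : Set A) := ⟨hz, hw⟩
    rw [hu] at this; exact this
  obtain ⟨U, hUopen, hUP⟩ : ∃ U, IsOpen U ∧ Subtype.val ⁻¹' U = P' :=
    isOpen_induced_iff.mp hP'clopen.isOpen
  have hPAU : P = A ∩ U := by
    rw [hPdef, ← hUP, Subtype.image_preimage_coe]
  set V : Set X := (closure (K \ A))ᶜ with hV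
  have hVopen : IsOpen V := isClosed_closure.isOpen_compl
  have hPKUV : P = K ∩ (U ∩ V) := by
    apply Subset.antisymm
    · intro z hz
      refine ⟨hAK (hPA hz), (hPAU ▸ hz).2, ?_⟩
      intro hzc
      have : z ∈ P ∩ closure (K \ A) := ⟨hz, hzc⟩
      rw [hPB] at this; exact this
    · intro z hz
      obtain ⟨hzK, hzU, hzV⟩ := hz
      have hzA : z ∈ A := by
        by_contra hzA
        exact hzV (subset_closure ⟨hzK, hzA⟩)
      rw [hPAU]; exact ⟨hzA, hzU⟩
  haveI : PreconnectedSpace K := Subtype.preconnectedSpace hKc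
  set P'' : Set K := (Subtype.val : K → X) ⁻¹' P with hP''
  have hP''clopen : IsClopen P'' := by
    constructor
    · exact hPcomp.isClosed.preimage continuous_subtype_val
    · have : P'' = (Subtype.val : K → X) ⁻¹' (U ∩ V) := by
        ext z
        simp only [hP'', Set.mem_preimage, hPKUV, Set.mem_inter_iff]
        exact ⟨fun h => h.2, fun h => ⟨z.2, h⟩⟩
      rw [this]
      exact (hUopen.inter hVopen).preimage continuous_subtype_val
  rcases isClopen_iff.mp hP''clopen with h0 | h1
  · have : (⟨p, hAK hp⟩ : K) ∈ P'' := hpP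
    rw [h0] at this; exact this
  · obtain ⟨y, hy⟩ := hne
    have : (⟨y, hy.1⟩ : K) ∈ P'' := h1 ▸ Set.mem_univ _
    exact hy.2 (hPA this)


lemma exists_finite_fiber {Q : Set X} {f : X → ℝ} (hf : LipschitzWith 1 f)
    {a b : ℝ} (hab : a < b) (N : ℕ)
    (hN : 2 * μH[1] Q + 2 < ENNReal.ofReal (b - a) * (N + 1)) :
    ∃ t, a < t ∧ t < b ∧ (Q ∩ f ⁻¹' {t}).Finite ∧ (Q ∩ f ⁻¹' {t}).ncard ≤ N := by
  classical
  have hQfin : μH[1] Q < ⊤ := by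
    by_contra h
    rw [not_lt, top_le_iff] at h
    rw [h] at hN
    simp at hN
  -- extract good covers at every scale
  have hcov : ∀ k : ℕ, ∃ t : ℕ → Set X, (Q ⊆ ⋃ n, t n) ∧
      (∀ n, EMetric.diam (t n) ≤ ((k : ℝ≥0∞) + 1)⁻¹) ∧
      (∑' n, ⨆ _ : (t n).Nonempty, EMetric.diam (t n)) ≤ μH[1] Q + 1 := by
    intro k
    have hr : (0 : ℝ≥0∞) < ((k : ℝ≥0∞) + 1)⁻¹ := by
      simp [ENNReal.inv_pos]
    have hle : (⨅ (t : ℕ → Set X) (_ : Q ⊆ ⋃ n, t n)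
        (_ : ∀ n, EMetric.diam (t n) ≤ ((k : ℝ≥0∞) + 1)⁻¹),
          ∑' n, ⨆ _ : (t n).Nonempty, EMetric.diam (t n) ^ (1:ℝ)) ≤ μH[1] Q := by
      rw [Measure.hausdorffMeasure_apply]
      exact le_iSup₂ (f := fun r (_ : 0 < r) => ⨅ (t : ℕ → Set X) (_ : Q ⊆ ⋃ n, t n)
        (_ : ∀ n, EMetric.diam (t n) ≤ r),
          ∑' n, ⨆ _ : (t n).Nonempty, EMetric.diam (t n) ^ (1:ℝ)) _ hr
    have hlt : (⨅ (t : ℕ → Set X) (_ : Q ⊆ ⋃ n, t n)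
        (_ : ∀ n, EMetric.diam (t n) ≤ ((k : ℝ≥0∞) + 1)⁻¹),
          ∑' n, ⨆ _ : (t n).Nonempty, EMetric.diam (t n) ^ (1:ℝ)) < μH[1] Q + 1 :=
      hle.trans_lt (ENNReal.lt_add_right hQfin.ne one_ne_zero)
    obtain ⟨t, ht⟩ := iInf_lt_iff.mp hlt
    obtain ⟨h1, ht⟩ := iInf_lt_iff.mp ht
    obtain ⟨h2, ht⟩ := iInf_lt_iff.mp ht
    refine ⟨t, h1, h2, ?_⟩
    simpa [ENNReal.rpow_one] using ht.le
  choose t ht1 ht2 ht3 using hcov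
  set d : ℕ → ℕ → ℝ := fun k n => (EMetric.diam (t k n)).toReal with hd
  have hdiamne : ∀ k n, EMetric.diam (t k n) ≠ ⊤ := by
    intro k n
    refine ne_top_of_le_ne_top ?_ (ht2 k n)
    simp [ENNReal.inv_ne_top]
  set I : ℕ → ℕ → Set ℝ := fun k n =>
    if h : (Q ∩ t k n).Nonempty then Icc (f h.some - d k n) (f h.some + d k n) else ∅ with hI
  have hImeas : ∀ k n, MeasurableSet (I k n) := by
    intro k n
    simp only [hI]
    split_ifs
    · exact measurableSet_Icc
    · exact MeasurableSet.empty
  set G : ℕ → ℝ → ℝ≥0∞ := fun k s => ∑' n, (I k n).indicator (fun _ => (1:ℝ≥0∞)) s with hG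
  have hGmeas : ∀ k, Measurable (G k) := by
    intro k
    exact Measurable.ennreal_tsum fun n => measurable_const.indicator (hImeas k n)
  have hGint : ∀ k, (∫⁻ s, G k s) ≤ 2 * (μH[1] Q + 1) := by
    intro k
    rw [hG]
    simp only
    rw [lintegral_tsum (fun n => (measurable_const.indicator (hImeas k n)).aemeasurable)]
    have hterm : ∀ n, (∫⁻ s, (I k n).indicator (fun _ => (1:ℝ≥0∞)) s) ≤
        2 * ⨆ _ : (t k n).Nonempty, EMetric.diam (t k n) := by
      intro n
      rw [lintegral_indicator_const (hImeas k n), one_mul]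
      by_cases h : (Q ∩ t k n).Nonempty
      · have htn : (t k n).Nonempty := ⟨h.some, h.some_mem.2⟩
        rw [hI]
        simp only [dif_pos h]
        rw [Real.volume_Icc, iSup_pos htn]
        have : f h.some + d k n - (f h.some - d k n) = 2 * d k n := by ring
        rw [this, ENNReal.ofReal_mul (by norm_num : (0:ℝ) ≤ 2)]
        rw [ENNReal.ofReal_toReal (hdiamne k n)]
        simp [ENNReal.ofReal_ofNat]
      · rw [hI]; simp [dif_neg h]
    calc (∑' n, ∫⁻ s, (I k n).indicator (fun _ => (1:ℝ≥0∞)) s)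
        ≤ ∑' n, 2 * ⨆ _ : (t k n).Nonempty, EMetric.diam (t k n) := ENNReal.tsum_le_tsum hterm
      _ = 2 * ∑' n, ⨆ _ : (t k n).Nonempty, EMetric.diam (t k n) := ENNReal.tsum_mul_left
      _ ≤ 2 * (μH[1] Q + 1) := by exact mul_le_mul_right (ht3 k) 2
  -- counting lemma
  have hcount : ∀ (k : ℕ) (s : ℝ) (S : Finset X), (↑S : Set X) ⊆ Q ∩ f ⁻¹' {s} →
      (∀ x ∈ S, ∀ y ∈ S, x ≠ y → ((k : ℝ≥0∞) + 1)⁻¹ < edist x y) →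
      (S.card : ℝ≥0∞) ≤ G k s := by
    intro k s S hS hsep
    set g : X → ℕ := fun x => if hx : x ∈ Q then (mem_iUnion.mp (ht1 k hx)).choose else 0
      with hgdef
    have hg : ∀ x, x ∈ Q → x ∈ t k (g x) := by
      intro x hx
      rw [hgdef]
      simp only [dif_pos hx]
      exact (mem_iUnion.mp (ht1 k hx)).choose_spec
    have hinj : Set.InjOn g ↑S := by
      intro x hx y hy hxy
      by_contra hne
      have h1 : x ∈ t k (g x) := hg x (hS hx).1
      have h2 : y ∈ t k (g x) := hxy ▸ hg y (hS hy).1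
      have : edist x y ≤ ((k : ℝ≥0∞) + 1)⁻¹ :=
        (EMetric.edist_le_diam_of_mem h1 h2).trans (ht2 k (g x))
      exact absurd this (not_le.mpr (hsep x hx y hy hne))
    have hind : ∀ x ∈ S, (I k (g x)).indicator (fun _ => (1:ℝ≥0∞)) s = 1 := by
      intro x hx
      have hxQ : x ∈ Q := (hS hx).1
      have hxf : f x = s := (hS hx).2
      have hne : (Q ∩ t k (g x)).Nonempty := ⟨x, hxQ, hg x hxQ⟩
      have hmem : s ∈ I k (g x) := by
        rw [hI]
        simp only [dif_pos hne]
        have hp := hne.some_mem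
        have hdist : dist (f x) (f hne.some) ≤ d k (g x) := by
          calc dist (f x) (f hne.some) ≤ 1 * dist x hne.some := hf.dist_le_mul _ _
          _ = (edist x hne.some).toReal := by rw [one_mul, dist_edist]
          _ ≤ d k (g x) := ENNReal.toReal_mono (hdiamne k (g x))
              (EMetric.edist_le_diam_of_mem (hg x hxQ) hp.2)
        rw [Real.dist_eq, abs_sub_le_iff] at hdist
        rw [Set.mem_Icc]
        constructor
        · linarith [hdist.2, hxf]
        · linarith [hdist.1, hxf]
      rw [Set.indicator_of_mem hmem]
    calc (S.card : ℝ≥0∞) = ∑ x ∈ S, (I k (g x)).indicator (fun _ => (1:ℝ≥0∞)) s := by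
          rw [Finset.sum_congr rfl hind]; simp
      _ = ∑ n ∈ S.image g, (I k n).indicator (fun _ => (1:ℝ≥0∞)) s := by
          rw [Finset.sum_image (fun x hx y hy => hinj hx hy)]
      _ ≤ G k s := by rw [hG]; exact ENNReal.sum_le_tsum _
  -- conclude by contradiction
  by_contra hconc
  push_neg at hconc
  have hbad : ∀ s, a < s → s < b → ((N : ℝ≥0∞) + 1) ≤ liminf (fun k => G k s) atTop := by
    intro s hsa hsb
    obtain ⟨S, hSsub, hScard⟩ : ∃ S : Finset X, (↑S : Set X) ⊆ Q ∩ f ⁻¹' {s} ∧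
        S.card = N + 1 := by
      by_cases hfin : (Q ∩ f ⁻¹' {s}).Finite
      · have hcard := hconc s hsa hsb hfin
        have : N + 1 ≤ hfin.toFinset.card := by
          rw [Set.ncard_eq_toFinset_card _ hfin] at hcard
          omega
        obtain ⟨S, hSsub, hScard⟩ := Finset.exists_subset_card_eq this
        exact ⟨S, by intro x hx; exact hfin.mem_toFinset.mp (hSsub hx), hScard⟩
      · obtain ⟨S, hSsub, hScard⟩ := Set.Infinite.exists_subset_card_eq hfin (N + 1)
        exact ⟨S, hSsub, hScard⟩
    -- minimal separation
    have hpos : ∀ x ∈ S, ∀ y ∈ S, x ≠ y → 0 < edist x y := by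
      intro x _ y _ hxy; simpa [edist_pos] using hxy
    set m : ℝ≥0∞ := (S ×ˢ S).inf (fun p => if p.1 = p.2 then ⊤ else edist p.1 p.2) with hm
    have hmpos : 0 < m := by
      rw [hm, Finset.lt_inf_iff (by simp : (0:ℝ≥0∞) < ⊤)]
      rintro ⟨x, y⟩ hxy
      simp only [Finset.mem_product] at hxy
      by_cases h : x = y
      · simp [h]
      · simpa [h] using hpos x hxy.1 y hxy.2 h
    obtain ⟨k0, hk0⟩ := ENNReal.exists_inv_nat_lt hmpos.ne'
    have hev : ∀ k ≥ k0, ((N : ℝ≥0∞) + 1) ≤ G k s := by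
      intro k hk
      have hsep : ∀ x ∈ S, ∀ y ∈ S, x ≠ y → ((k : ℝ≥0∞) + 1)⁻¹ < edist x y := by
        intro x hx y hy hxy
        have h1 : ((k : ℝ≥0∞) + 1)⁻¹ ≤ ((k0 : ℝ≥0∞))⁻¹ := by
          apply ENNReal.inv_le_inv.mpr
          calc (k0 : ℝ≥0∞) ≤ (k : ℝ≥0∞) := by exact_mod_cast Nat.cast_le.mpr hk
          _ ≤ (k : ℝ≥0∞) + 1 := le_self_add
        refine lt_of_le_of_lt h1 (hk0.trans_le ?_)
        have hxy' : (x, y) ∈ S ×ˢ S := Finset.mem_product.mpr ⟨hx, hy⟩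
        have h2 := Finset.inf_le (f := fun p : X × X => if p.1 = p.2 then ⊤ else edist p.1 p.2) hxy'
        rw [hm]
        simpa [hxy] using h2
      have := hcount k s S hSsub hsep
      rwa [hScard, Nat.cast_add, Nat.cast_one] at this
    calc ((N : ℝ≥0∞) + 1) ≤ ⨅ k ∈ Set.Ici k0, G k s := by
          simp only [le_iInf_iff]
          intro k hk; exact hev k hk
      _ ≤ liminf (fun k => G k s) atTop := by
          rw [Filter.liminf_eq_iSup_iInf_of_nat]
          exact le_iSup_of_le k0 (by simp [Set.mem_Ici])
  -- integrate the contradiction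
  set Gl : ℝ → ℝ≥0∞ := fun s => liminf (fun k => G k s) atTop with hGl
  have hGlmeas : Measurable Gl := Measurable.liminf hGmeas
  have hup : (∫⁻ s, Gl s) ≤ 2 * (μH[1] Q + 1) := by
    calc (∫⁻ s, Gl s) ≤ liminf (fun k => ∫⁻ s, G k s) atTop := lintegral_liminf_le hGmeas
    _ ≤ 2 * (μH[1] Q + 1) := by
        apply Filter.liminf_le_of_le
        · exact ⟨0, by simp⟩
        · intro c hc
          obtain ⟨k, hk⟩ := hc.exists
          exact hk.trans (hGint k)
  have hlow : ENNReal.ofReal (b - a) * ((N : ℝ≥0∞) + 1) ≤ ∫⁻ s, Gl s := by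
    calc ENNReal.ofReal (b - a) * ((N : ℝ≥0∞) + 1)
        = ((N : ℝ≥0∞) + 1) * volume (Set.Ioo a b) := by rw [Real.volume_Ioo, mul_comm]
      _ = ∫⁻ s in Set.Ioo a b, ((N : ℝ≥0∞) + 1) := (setLIntegral_const _ _).symm
      _ ≤ ∫⁻ s in Set.Ioo a b, Gl s := by
          apply setLIntegral_mono hGlmeas
          intro s hs
          exact hbad s hs.1 hs.2
      _ ≤ ∫⁻ s, Gl s := setLIntegral_le_lintegral _ _
  have h2 : (2:ℝ≥0∞) * (μH[1] Q + 1) = 2 * μH[1] Q + 2 := by rw [mul_add, mul_one]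
  have hfin2 := hlow.trans (hup.trans_eq h2)
  exact absurd hN (not_lt.mpr hfin2)

section Helpers
variable {ι α : Type*}
open scoped ENNReal
lemma sum_union_le' [DecidableEq α] (s t : Finset α) (f : α → ℝ≥0∞) :
    ∑ x ∈ s ∪ t, f x ≤ ∑ x ∈ s, f x + ∑ x ∈ t, f x :=
  calc ∑ x ∈ s ∪ t, f x ≤ (∑ x ∈ s ∪ t, f x) + ∑ x ∈ s ∩ t, f x := le_self_add
  _ = _ := Finset.sum_union_inter

lemma sum_biUnion_le' [DecidableEq α] [DecidableEq ι] (s : Finset ι) (t : ι → Finset α)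
    (f : α → ℝ≥0∞) : ∑ x ∈ s.biUnion t, f x ≤ ∑ i ∈ s, ∑ x ∈ t i, f x := by
  induction s using Finset.induction_on with
  | empty => simp
  | insert a s ha ih =>
    rw [Finset.biUnion_insert, Finset.sum_insert ha]
    exact (sum_union_le' _ _ _).trans (add_le_add le_rfl ih)
end Helpers

/-- Closedness of connected components in closed sets. -/
lemma isClosed_connectedComponentIn' {A : Set X} (hA : IsClosed A) {q : X} :
    IsClosed (connectedComponentIn A q) := by
  by_cases hq : q ∈ A
  · have h1 : closure (connectedComponentIn A q) ⊆ connectedComponentIn A q :=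
      (isPreconnected_connectedComponentIn.closure).subset_connectedComponentIn
        (subset_closure (mem_connectedComponentIn hq))
        (closure_minimal (connectedComponentIn_subset _ _) hA)
    exact isClosed_of_closure_subset h1
  · rw [connectedComponentIn_eq_empty hq]; exact isClosed_empty

/-- The counting function for the decomposition. -/
def Mbd (B : ℕ) : ℕ → ℕ
  | 0 => 1
  | (j+1) => B * (1 + Mbd B j) + 1

/-- The decomposition lemma: a continuum of finite `H¹` measure can be covered by a controlled
number of subcontinua of small diameter with total measure not exceeding that of the whole. -/
lemma decomp {δ : ℝ} (hδ : 0 < δ) (B j0 : ℕ)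
    (hB : ∀ L : ℝ≥0∞, L ≤ ENNReal.ofReal (δ/4) * j0 →
      2 * L + 2 < ENNReal.ofReal (δ/4) * (B + 1)) :
    ∀ j, j ≤ j0 → ∀ Q : Set X, IsCompact Q → IsConnected Q →
    μH[1] Q ≤ ENNReal.ofReal (δ/4) * j →
    ∃ S : Finset (Set X), S.card ≤ Mbd B j ∧
      (∀ P ∈ S, IsCompact P ∧ IsConnected P ∧ EMetric.diam P ≤ ENNReal.ofReal δ) ∧
      Q ⊆ ⋃₀ ↑S ∧ ∑ P ∈ S, μH[1] P ≤ μH[1] Q := by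
  classical
  intro j
  induction j with
  | zero =>
    intro _ Q hQc hQconn hQm
    refine ⟨{Q}, by simp [Mbd], ?_, by simp, by simp⟩
    intro P hP
    rw [Finset.mem_singleton] at hP
    subst hP
    have hd0 : EMetric.diam P ≤ 0 := by
      refine (ediam_le_h1 hQconn.isPreconnected).trans ?_
      simpa using hQm
    exact ⟨hQc, hQconn, hd0.trans zero_le⟩
  | succ j ih =>
    intro hj Q hQc hQconn hQm
    by_cases hdiam : EMetric.diam Q ≤ ENNReal.ofReal δ
    · refine ⟨{Q}, ?_, ?_, by simp, by simp⟩
      · simp only [Finset.card_singleton, Mbd]; omega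
      · intro P hP
        rw [Finset.mem_singleton] at hP
        subst hP
        exact ⟨hQc, hQconn, hdiam⟩
    · push_neg at hdiam
      obtain ⟨x, hx⟩ := hQconn.nonempty
      set f : X → ℝ := dist x with hfdef
      have hf : LipschitzWith 1 f := LipschitzWith.dist_right x
      have hfc : Continuous f := hf.continuous
      -- measure bound for the fiber lemma
      have hQj0 : μH[1] Q ≤ ENNReal.ofReal (δ/4) * j0 :=
        hQm.trans (mul_le_mul_right (by exact_mod_cast Nat.cast_le.mpr hj) _)
      have hNQ : 2 * μH[1] Q + 2 < ENNReal.ofReal (δ/2 - δ/4) * (B + 1) := by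
        rw [show δ/2 - δ/4 = δ/4 by ring]
        exact hB _ hQj0
      obtain ⟨τ, hτ1, hτ2, hFfin, hFcard⟩ :=
        exists_finite_fiber hf (by linarith : δ/4 < δ/2) B hNQ
      have hτpos : 0 < τ := lt_trans (by linarith) hτ1
      set F : Set X := Q ∩ f ⁻¹' {τ} with hFdef
      set A : Set X := Q ∩ f ⁻¹' (Set.Iic τ) with hAdef
      set A' : Set X := Q ∩ f ⁻¹' (Set.Ici τ) with hA'def
      have hAclosed : IsClosed A := hQc.isClosed.inter (isClosed_Iic.preimage hfc)
      have hA'closed : IsClosed A' := hQc.isClosed.inter (isClosed_Ici.preimage hfc)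
      have hAcomp : IsCompact A := hQc.of_isClosed_subset hAclosed Set.inter_subset_left
      have hA'comp : IsCompact A' := hQc.of_isClosed_subset hA'closed Set.inter_subset_left
      have hfx : f x = 0 := dist_self x
      have hxA : x ∈ A := ⟨hx, by simp [hfx, hτpos.le]⟩
      -- a point far from x
      obtain ⟨y, hyQ, hyτ⟩ : ∃ y ∈ Q, τ < f y := by
        by_contra hcon
        push_neg at hcon
        apply absurd hdiam
        push_neg
        apply EMetric.diam_le
        intro a ha b hb
        calc edist a b ≤ edist a x + edist x b := edist_triangle _ _ _
          _ = ENNReal.ofReal (f a) + ENNReal.ofReal (f b) := by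
              rw [edist_dist, edist_dist, dist_comm a x]
          _ ≤ ENNReal.ofReal τ + ENNReal.ofReal τ :=
              add_le_add (ENNReal.ofReal_le_ofReal (hcon a ha))
                (ENNReal.ofReal_le_ofReal (hcon b hb))
          _ ≤ ENNReal.ofReal δ := by
              rw [← ENNReal.ofReal_add hτpos.le hτpos.le]
              exact ENNReal.ofReal_le_ofReal (by linarith)
      have hQA : (Q \ A).Nonempty := ⟨y, hyQ, fun hA => by
        simp only [hAdef, Set.mem_inter_iff, Set.mem_preimage, Set.mem_Iic] at hA
        linarith [hA.2]⟩
      have hQA' : (Q \ A').Nonempty := ⟨x, hx, fun hA => by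
        simp only [hA'def, Set.mem_inter_iff, Set.mem_preimage, Set.mem_Ici] at hA
        rw [hfx] at hA
        linarith [hA.2]⟩
      -- boundaries lie in the fiber
      have hbdA : A ∩ closure (Q \ A) ⊆ F := by
        rintro q ⟨⟨hqQ, hqle⟩, hqcl⟩
        have hsub : Q \ A ⊆ f ⁻¹' (Set.Ici τ) := by
          rintro z ⟨hzQ, hzA⟩
          simp only [Set.mem_preimage, Set.mem_Ici]
          by_contra hzf
          exact hzA ⟨hzQ, by simp only [Set.mem_preimage, Set.mem_Iic]; linarith⟩
        have : q ∈ f ⁻¹' (Set.Ici τ) :=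
          closure_minimal hsub (isClosed_Ici.preimage hfc) hqcl
        exact ⟨hqQ, le_antisymm hqle this⟩
      have hbdA' : A' ∩ closure (Q \ A') ⊆ F := by
        rintro q ⟨⟨hqQ, hqge⟩, hqcl⟩
        have hsub : Q \ A' ⊆ f ⁻¹' (Set.Iic τ) := by
          rintro z ⟨hzQ, hzA⟩
          simp only [Set.mem_preimage, Set.mem_Iic]
          by_contra hzf
          exact hzA ⟨hzQ, by simp only [Set.mem_preimage, Set.mem_Ici]; linarith⟩
        have : q ∈ f ⁻¹' (Set.Iic τ) :=
          closure_minimal hsub (isClosed_Iic.preimage hfc) hqcl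
        exact ⟨hqQ, le_antisymm this hqge⟩
      have hFA : F ⊆ A := fun q hq => ⟨hq.1, by
        simp only [Set.mem_preimage, Set.mem_Iic]
        simpa using (le_of_eq (hq.2 : f q = τ))⟩
      have hFA' : F ⊆ A' := fun q hq => ⟨hq.1, by
        simp only [Set.mem_preimage, Set.mem_Ici]
        exact ge_of_eq (hq.2 : f q = τ)⟩
      -- components cover
      have hcompA : A ⊆ ⋃ q ∈ F, connectedComponentIn A q := by
        intro p hp
        obtain ⟨q, hq1, hq2⟩ := bumping hQc hQconn.isPreconnected hAclosed
          Set.inter_subset_left hQA hp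
        have hqF : q ∈ F := hbdA ⟨connectedComponentIn_subset _ _ hq1, hq2⟩
        refine Set.mem_biUnion hqF ?_
        rw [← connectedComponentIn_eq hq1]
        exact mem_connectedComponentIn hp
      have hcompA' : A' ⊆ ⋃ q ∈ F, connectedComponentIn A' q := by
        intro p hp
        obtain ⟨q, hq1, hq2⟩ := bumping hQc hQconn.isPreconnected hA'closed
          Set.inter_subset_left hQA' hp
        have hqF : q ∈ F := hbdA' ⟨connectedComponentIn_subset _ _ hq1, hq2⟩
        refine Set.mem_biUnion hqF ?_
        rw [← connectedComponentIn_eq hq1]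
        exact mem_connectedComponentIn hp
      -- diameter bound for A
      have hdiamA : EMetric.diam A ≤ ENNReal.ofReal δ := by
        apply EMetric.diam_le
        intro a ha b hb
        calc edist a b ≤ edist a x + edist x b := edist_triangle _ _ _
          _ = ENNReal.ofReal (f a) + ENNReal.ofReal (f b) := by
              rw [edist_dist, edist_dist, dist_comm a x]
          _ ≤ ENNReal.ofReal τ + ENNReal.ofReal τ :=
              add_le_add (ENNReal.ofReal_le_ofReal ha.2) (ENNReal.ofReal_le_ofReal hb.2)
          _ ≤ ENNReal.ofReal δ := by
              rw [← ENNReal.ofReal_add hτpos.le hτpos.le]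
              exact ENNReal.ofReal_le_ofReal (by linarith)
      -- measure accounting
      haveI : NoAtoms (μH[1] : Measure X) := Measure.noAtoms_hausdorff X zero_lt_one
      have hFnull : μH[1] F = 0 := by
          haveI := Measure.noAtoms_hausdorff X zero_lt_one
          exact hFfin.countable.measure_zero _
      have hAA'union : A ∪ A' = Q := by
        apply Set.Subset.antisymm
        · exact Set.union_subset Set.inter_subset_left Set.inter_subset_left
        · intro z hz
          rcases le_total (f z) τ with h | h
          · exact Or.inl ⟨hz, h⟩
          · exact Or.inr ⟨hz, h⟩
      have hAA'inter : A ∩ A' = F := by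
        ext z
        simp only [hAdef, hA'def, hFdef, Set.mem_inter_iff, Set.mem_preimage, Set.mem_Iic,
          Set.mem_Ici, Set.mem_singleton_iff]
        constructor
        · rintro ⟨⟨h1, h2⟩, _, h4⟩; exact ⟨h1, le_antisymm h2 h4⟩
        · rintro ⟨h1, h2⟩; exact ⟨⟨h1, h2.le⟩, h1, h2.ge⟩
      have hsumAA' : μH[1] A + μH[1] A' = μH[1] Q := by
        have := measure_union_add_inter (μ := (μH[1] : Measure X)) A hA'closed.measurableSet
        rw [hAA'union, hAA'inter, hFnull, add_zero] at this
        exact this.symm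
      have hAlb : ENNReal.ofReal τ ≤ μH[1] A :=
        ofReal_le_h1_slice hQconn.isPreconnected hx hyQ hτpos.le hyτ.le
      have hA'ub : μH[1] A' + ENNReal.ofReal (δ/4) ≤ μH[1] Q := by
        calc μH[1] A' + ENNReal.ofReal (δ/4) ≤ μH[1] A' + ENNReal.ofReal τ :=
              add_le_add le_rfl (ENNReal.ofReal_le_ofReal hτ1.le)
          _ ≤ μH[1] A' + μH[1] A := add_le_add le_rfl hAlb
          _ = μH[1] Q := by rw [add_comm]; exact hsumAA'
      -- the small pieces
      set 𝒞 : Finset (Set X) := hFfin.toFinset.image (fun q => connectedComponentIn A q)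
        with h𝒞
      set 𝒟 : Finset (Set X) := hFfin.toFinset.image (fun q => connectedComponentIn A' q)
        with h𝒟
      have hcard𝒞 : 𝒞.card ≤ B := by
        refine Finset.card_image_le.trans ?_
        rw [← Set.ncard_eq_toFinset_card _ hFfin]
        exact hFcard
      have hcard𝒟 : 𝒟.card ≤ B := by
        refine Finset.card_image_le.trans ?_
        rw [← Set.ncard_eq_toFinset_card _ hFfin]
        exact hFcard
      have h𝒞prop : ∀ P ∈ 𝒞, IsCompact P ∧ IsConnected P ∧
          EMetric.diam P ≤ ENNReal.ofReal δ ∧ P ⊆ A := by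
        intro P hP
        rw [h𝒞, Finset.mem_image] at hP
        obtain ⟨q, hq, rfl⟩ := hP
        have hqF : q ∈ F := hFfin.mem_toFinset.mp hq
        have hcl : IsClosed (connectedComponentIn A q) := isClosed_connectedComponentIn' hAclosed
        refine ⟨hAcomp.of_isClosed_subset hcl (connectedComponentIn_subset _ _),
          isConnected_connectedComponentIn_iff.mpr (hFA hqF),
          le_trans (EMetric.diam_mono (connectedComponentIn_subset _ _)) hdiamA,
          connectedComponentIn_subset _ _⟩
      have h𝒟prop : ∀ P ∈ 𝒟, IsCompact P ∧ IsConnected P ∧ P ⊆ A' := by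
        intro P hP
        rw [h𝒟, Finset.mem_image] at hP
        obtain ⟨q, hq, rfl⟩ := hP
        have hqF : q ∈ F := hFfin.mem_toFinset.mp hq
        have hcl : IsClosed (connectedComponentIn A' q) := isClosed_connectedComponentIn' hA'closed
        exact ⟨hA'comp.of_isClosed_subset hcl (connectedComponentIn_subset _ _),
          isConnected_connectedComponentIn_iff.mpr (hFA' hqF),
          connectedComponentIn_subset _ _⟩
      -- disjointness of distinct components
      have hdisj : ∀ (W : Set X), ((hFfin.toFinset.image
          (fun q => connectedComponentIn W q) : Finset (Set X)) : Set (Set X)).PairwiseDisjoint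
          id := by
        intro W P1 hP1 P2 hP2 hne
        simp only [Finset.coe_image, Set.mem_image] at hP1 hP2
        obtain ⟨q1, _, rfl⟩ := hP1
        obtain ⟨q2, _, rfl⟩ := hP2
        rw [Function.onFun, Set.disjoint_left]
        intro z hz1 hz2
        exact hne (by rw [connectedComponentIn_eq hz1, connectedComponentIn_eq hz2])
      -- measure of the unions
      have hsum𝒞 : ∑ P ∈ 𝒞, μH[1] P ≤ μH[1] A := by
        have hmeas : ∀ P ∈ 𝒞, MeasurableSet P := fun P hP => by
          rw [h𝒞, Finset.mem_image] at hP
          obtain ⟨q, _, rfl⟩ := hP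
          exact (isClosed_connectedComponentIn' hAclosed).measurableSet
        have heq := measure_biUnion_finset (μ := (μH[1] : Measure X)) (hdisj A) hmeas
        simp only [id_eq] at heq
        rw [h𝒞, ← heq]
        apply measure_mono
        intro z hz
        simp only [Set.mem_iUnion] at hz
        obtain ⟨P, hP, hzP⟩ := hz
        exact (h𝒞prop P hP).2.2.2 hzP
      have hsum𝒟 : ∑ P ∈ 𝒟, μH[1] P ≤ μH[1] A' := by
        have hmeas : ∀ P ∈ 𝒟, MeasurableSet P := fun P hP => by
          rw [h𝒟, Finset.mem_image] at hP
          obtain ⟨q, _, rfl⟩ := hP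
          exact (isClosed_connectedComponentIn' hA'closed).measurableSet
        have heq := measure_biUnion_finset (μ := (μH[1] : Measure X)) (hdisj A') hmeas
        simp only [id_eq] at heq
        rw [h𝒟, ← heq]
        apply measure_mono
        intro z hz
        simp only [Set.mem_iUnion] at hz
        obtain ⟨P, hP, hzP⟩ := hz
        exact (h𝒟prop P hP).2.2 hzP
      -- children via induction hypothesis
      have hchild : ∀ T ∈ 𝒟, ∃ S : Finset (Set X), S.card ≤ Mbd B j ∧
          (∀ P ∈ S, IsCompact P ∧ IsConnected P ∧ EMetric.diam P ≤ ENNReal.ofReal δ) ∧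
          T ⊆ ⋃₀ ↑S ∧ ∑ P ∈ S, μH[1] P ≤ μH[1] T := by
        intro T hT
        obtain ⟨hTc, hTconn, hTA'⟩ := h𝒟prop T hT
        have hbudget : μH[1] T ≤ ENNReal.ofReal (δ/4) * j := by
          have h1 : μH[1] T + ENNReal.ofReal (δ/4) ≤ μH[1] Q :=
            le_trans (add_le_add (measure_mono hTA') le_rfl) hA'ub
          have h2 : μH[1] Q ≤ ENNReal.ofReal (δ/4) * j + ENNReal.ofReal (δ/4) := by
            refine hQm.trans (le_of_eq ?_)
            rw [Nat.cast_succ, mul_add, mul_one]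
          have h3 := le_trans h1 h2
          exact (ENNReal.add_le_add_iff_right ENNReal.ofReal_ne_top).mp h3
        exact ih (Nat.le_of_succ_le hj) T hTc hTconn hbudget
      choose! ch hch1 hch2 hch3 hch4 using hchild
      set S : Finset (Set X) := 𝒞 ∪ 𝒟.biUnion ch with hSdef
      refine ⟨S, ?_, ?_, ?_, ?_⟩
      · -- cardinality
        calc S.card ≤ 𝒞.card + (𝒟.biUnion ch).card := Finset.card_union_le _ _
          _ ≤ B + ∑ T ∈ 𝒟, (ch T).card := add_le_add hcard𝒞 Finset.card_biUnion_le
          _ ≤ B + ∑ _T ∈ 𝒟, Mbd B j := by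
              refine add_le_add le_rfl (Finset.sum_le_sum ?_)
              intro T hT; exact hch1 T hT
          _ ≤ B + B * Mbd B j := by
              rw [Finset.sum_const, smul_eq_mul]
              exact add_le_add le_rfl (Nat.mul_le_mul_right _ hcard𝒟)
          _ ≤ Mbd B (j+1) := by simp [Mbd]; ring_nf; omega
      · -- properties
        intro P hP
        rw [hSdef, Finset.mem_union] at hP
        rcases hP with hP | hP
        · obtain ⟨h1, h2, h3, _⟩ := h𝒞prop P hP
          exact ⟨h1, h2, h3⟩
        · rw [Finset.mem_biUnion] at hP
          obtain ⟨T, hT, hPT⟩ := hP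
          exact hch2 T hT P hPT
      · -- covering
        rw [← hAA'union]
        apply Set.union_subset
        · refine hcompA.trans ?_
          intro z hz
          simp only [Set.mem_iUnion] at hz
          obtain ⟨q, hq, hzq⟩ := hz
          refine ⟨connectedComponentIn A q, ?_, hzq⟩
          rw [hSdef]
          simp only [Finset.coe_union, Set.mem_union, Finset.mem_coe]
          exact Or.inl (Finset.mem_image_of_mem _ (hFfin.mem_toFinset.mpr hq))
        · refine hcompA'.trans ?_
          intro z hz
          simp only [Set.mem_iUnion] at hz
          obtain ⟨q, hq, hzq⟩ := hz
          have hT𝒟 : connectedComponentIn A' q ∈ 𝒟 :=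
            Finset.mem_image_of_mem _ (hFfin.mem_toFinset.mpr hq)
          obtain ⟨P, hP, hzP⟩ := hch3 _ hT𝒟 hzq
          refine ⟨P, ?_, hzP⟩
          rw [hSdef]
          simp only [Finset.coe_union, Set.mem_union, Finset.mem_coe]
          exact Or.inr (Finset.mem_biUnion.mpr ⟨_, hT𝒟, hP⟩)
      · -- total measure
        calc ∑ P ∈ S, μH[1] P
            ≤ ∑ P ∈ 𝒞, μH[1] P + ∑ P ∈ 𝒟.biUnion ch, μH[1] P := sum_union_le' _ _ _
          _ ≤ μH[1] A + ∑ T ∈ 𝒟, ∑ P ∈ ch T, μH[1] P :=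
              add_le_add hsum𝒞 (sum_biUnion_le' _ _ _)
          _ ≤ μH[1] A + ∑ T ∈ 𝒟, μH[1] T := by
              refine add_le_add le_rfl (Finset.sum_le_sum ?_)
              intro T hT; exact hch4 T hT
          _ ≤ μH[1] A + μH[1] A' := add_le_add le_rfl hsum𝒟
          _ = μH[1] Q := hsumAA'

end GolabAux


/-- **Golab's semicontinuity theorem.** If a sequence of continua `Cₙ` in a complete
metric space `X` converges in the Hausdorff distance to a closed set `C`, then `C` is
a continuum and `H¹(C) ≤ liminf H¹(Cₙ)`. -/
theorem golab_semicontinuity (X : Type*) [MetricSpace X] [CompleteSpace X]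
    (Cn : ℕ → Set X) (hcomp : ∀ n, IsCompact (Cn n)) (hconn : ∀ n, IsConnected (Cn n))
    (C : Set X) (hC : IsClosed C)
    (hlim : Tendsto (fun n => EMetric.hausdorffEdist (Cn n) C) atTop (nhds 0)) :
    IsCompact C ∧ IsConnected C ∧ H1 X C ≤ atTop.liminf (fun n => H1 X (Cn n)) := by
  classical
  letI : MeasurableSpace X := borel X
  haveI : BorelSpace X := ⟨rfl⟩
  -- C is nonempty
  have hne : C.Nonempty := by
    have hev : ∀ᶠ n in atTop, EMetric.hausdorffEdist (Cn n) C < 1 :=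
      hlim.eventually_lt_const (by norm_num)
    obtain ⟨n, hn⟩ := hev.exists
    exact EMetric.nonempty_of_hausdorffEdist_ne_top (hconn n).nonempty hn.ne_top
  -- C is compact
  have hCcomp : IsCompact C := by
    rw [isCompact_iff_totallyBounded_isComplete]
    refine ⟨?_, hC.isComplete⟩
    rw [Metric.totallyBounded_iff]
    intro ε hε
    have hev : ∀ᶠ n in atTop, EMetric.hausdorffEdist (Cn n) C < ENNReal.ofReal (ε/2) :=
      hlim.eventually_lt_const (ENNReal.ofReal_pos.mpr (by linarith))
    obtain ⟨n, hn⟩ := hev.exists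
    obtain ⟨s, hsfin, hscov⟩ :=
      (Metric.totallyBounded_iff.mp (hcomp n).totallyBounded) (ε/2) (by linarith)
    refine ⟨s, hsfin, ?_⟩
    intro c hc
    have hn' : EMetric.hausdorffEdist C (Cn n) < ENNReal.ofReal (ε/2) := by
      exact EMetric.hausdorffEdist_comm.trans_lt hn
    obtain ⟨p, hp, hcp⟩ := EMetric.exists_edist_lt_of_hausdorffEdist_lt hc hn'
    obtain ⟨y, hy, hpy⟩ := Set.mem_iUnion₂.mp (hscov hp)
    refine Set.mem_iUnion₂.mpr ⟨y, hy, ?_⟩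
    rw [Metric.mem_ball] at hpy ⊢
    have hcpd : dist c p < ε/2 := edist_lt_ofReal.mp hcp
    calc dist c y ≤ dist c p + dist p y := dist_triangle _ _ _
      _ < ε/2 + ε/2 := by linarith
      _ = ε := by ring
  -- C is connected
  have hCconn : IsConnected C := by
    refine ⟨hne, ?_⟩
    intro U V hU hV hUV hCU hCV
    by_contra hcon
    rw [Set.not_nonempty_iff_eq_empty] at hcon
    set A : Set X := C ∩ U with hA
    set B : Set X := C ∩ V with hB
    have hAeq : A = C \ V := by
      ext z
      constructor
      · rintro ⟨h1, h2⟩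
        refine ⟨h1, fun hz => ?_⟩
        have : z ∈ C ∩ (U ∩ V) := ⟨h1, h2, hz⟩
        rw [hcon] at this; exact this
      · rintro ⟨h1, h2⟩
        rcases hUV h1 with h | h
        · exact ⟨h1, h⟩
        · exact absurd h h2
    have hBeq : B = C \ U := by
      ext z
      constructor
      · rintro ⟨h1, h2⟩
        refine ⟨h1, fun hz => ?_⟩
        have : z ∈ C ∩ (U ∩ V) := ⟨h1, hz, h2⟩
        rw [hcon] at this; exact this
      · rintro ⟨h1, h2⟩
        rcases hUV h1 with h | h
        · exact absurd h h2
        · exact ⟨h1, h⟩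
    have hAclosed : IsClosed A := by rw [hAeq]; exact hC.sdiff hV
    have hBclosed : IsClosed B := by rw [hBeq]; exact hC.sdiff hU
    have hAcomp : IsCompact A := hCcomp.of_isClosed_subset hAclosed Set.inter_subset_left
    have hdisj : Disjoint A B := by
      rw [Set.disjoint_left]
      intro z hzA hzB
      have : z ∈ C ∩ (U ∩ V) := ⟨hzA.1, hzA.2, hzB.2⟩
      rw [hcon] at this; exact this
    obtain ⟨ρ, hρ, hthick⟩ := hdisj.exists_thickenings hAcomp hBclosed
    have hev : ∀ᶠ n in atTop, EMetric.hausdorffEdist (Cn n) C < ENNReal.ofReal ρ :=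
      hlim.eventually_lt_const (ENNReal.ofReal_pos.mpr hρ)
    obtain ⟨n, hn⟩ := hev.exists
    have hn' : EMetric.hausdorffEdist C (Cn n) < ENNReal.ofReal ρ := by
      exact EMetric.hausdorffEdist_comm.trans_lt hn
    have hsub : Cn n ⊆ Metric.thickening ρ A ∪ Metric.thickening ρ B := by
      intro z hz
      obtain ⟨c, hc, hzc⟩ := EMetric.exists_edist_lt_of_hausdorffEdist_lt hz hn
      rcases hUV hc with h | h
      · left
        rw [Metric.mem_thickening_iff_infEdist_lt]
        exact lt_of_le_of_lt (EMetric.infEdist_le_edist_of_mem ⟨hc, h⟩) hzc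
      · right
        rw [Metric.mem_thickening_iff_infEdist_lt]
        exact lt_of_le_of_lt (EMetric.infEdist_le_edist_of_mem ⟨hc, h⟩) hzc
    have hAne : (Cn n ∩ Metric.thickening ρ A).Nonempty := by
      obtain ⟨a, ha⟩ := hCU
      obtain ⟨z, hz, haz⟩ := EMetric.exists_edist_lt_of_hausdorffEdist_lt ha.1 hn'
      refine ⟨z, hz, ?_⟩
      rw [Metric.mem_thickening_iff_infEdist_lt]
      refine lt_of_le_of_lt (EMetric.infEdist_le_edist_of_mem ha) ?_
      rwa [edist_comm]
    have hBne : (Cn n ∩ Metric.thickening ρ B).Nonempty := by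
      obtain ⟨b, hb⟩ := hCV
      obtain ⟨z, hz, hbz⟩ := EMetric.exists_edist_lt_of_hausdorffEdist_lt hb.1 hn'
      refine ⟨z, hz, ?_⟩
      rw [Metric.mem_thickening_iff_infEdist_lt]
      refine lt_of_le_of_lt (EMetric.infEdist_le_edist_of_mem hb) ?_
      rwa [edist_comm]
    obtain ⟨w, hwCn, hwA, hwB⟩ := (hconn n).isPreconnected _ _
      (Metric.isOpen_thickening) (Metric.isOpen_thickening) hsub hAne hBne
    exact Set.disjoint_left.mp hthick hwA hwB
  refine ⟨hCcomp, hCconn, ?_⟩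
  show μH[1] C ≤ atTop.liminf (fun n => μH[1] (Cn n))
  set m : ℝ≥0∞ := atTop.liminf (fun n => μH[1] (Cn n)) with hm
  apply ENNReal.le_of_forall_pos_le_add
  intro ε hε hmfin
  set εr : ℝ := (ε : ℝ) with hεr
  have hεrpos : 0 < εr := hε
  rw [Measure.hausdorffMeasure_apply]
  apply iSup₂_le
  intro r hr
  -- scale
  obtain ⟨ρ, hρpos, hρr⟩ : ∃ ρ : ℝ, 0 < ρ ∧ ENNReal.ofReal ρ ≤ r := by
    rcases eq_top_or_lt_top r with hrt | hrt
    · exact ⟨1, one_pos, by rw [hrt]; exact le_top⟩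
    · exact ⟨r.toReal, ENNReal.toReal_pos hr.ne' hrt.ne, by
        rw [ENNReal.ofReal_toReal hrt.ne]⟩
  set δ : ℝ := ρ/2 with hδdef
  have hδpos : 0 < δ := by positivity
  -- budget
  set Lm : ℝ≥0∞ := m + ENNReal.ofReal (εr/2) with hLm
  have hLmfin : Lm ≠ ⊤ := by
    rw [hLm]
    exact ENNReal.add_ne_top.mpr ⟨hmfin.ne, ENNReal.ofReal_ne_top⟩
  set j0 : ℕ := ⌈Lm.toReal / (δ/4)⌉₊ + 1 with hj0
  have hbudgetLm : Lm ≤ ENNReal.ofReal (δ/4) * j0 := by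
    have h1 : Lm.toReal ≤ (δ/4) * j0 := by
      have h2 : Lm.toReal / (δ/4) ≤ (j0 : ℝ) := by
        refine (Nat.le_ceil _).trans ?_
        exact_mod_cast Nat.le_succ _
      calc Lm.toReal = (Lm.toReal / (δ/4)) * (δ/4) := by field_simp
        _ ≤ (j0 : ℝ) * (δ/4) := by
            apply mul_le_mul_of_nonneg_right h2 (by positivity)
        _ = (δ/4) * j0 := by ring
    calc Lm = ENNReal.ofReal Lm.toReal := (ENNReal.ofReal_toReal hLmfin).symm
      _ ≤ ENNReal.ofReal ((δ/4) * j0) := ENNReal.ofReal_le_ofReal h1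
      _ = ENNReal.ofReal (δ/4) * ENNReal.ofReal (j0 : ℝ) :=
          ENNReal.ofReal_mul (by positivity)
      _ = ENNReal.ofReal (δ/4) * j0 := by rw [ENNReal.ofReal_natCast]
  -- fiber bound
  set B : ℕ := 2*j0 + ⌈8/δ⌉₊ + 1 with hBdef
  have hB : ∀ L : ℝ≥0∞, L ≤ ENNReal.ofReal (δ/4) * j0 →
      2 * L + 2 < ENNReal.ofReal (δ/4) * (B + 1) := by
    intro L hL
    have hRfin : (ENNReal.ofReal (δ/4)) ≠ ⊤ := ENNReal.ofReal_ne_top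
    have hRpos : (0:ℝ≥0∞) < ENNReal.ofReal (δ/4) := ENNReal.ofReal_pos.mpr (by positivity)
    have hc2 : (2:ℝ≥0∞) ≤ ENNReal.ofReal (δ/4) * (⌈8/δ⌉₊ : ℝ≥0∞) := by
      have h28 : (2:ℝ≥0∞) = ENNReal.ofReal ((δ/4) * (8/δ)) := by
        rw [show (δ/4) * (8/δ) = 2 by field_simp; ring]
        norm_num
      rw [h28, ENNReal.ofReal_mul (by positivity)]
      apply mul_le_mul_right
      rw [← ENNReal.ofReal_natCast]
      exact ENNReal.ofReal_le_ofReal (Nat.le_ceil _)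
    have hexp : ENNReal.ofReal (δ/4) * ((B:ℝ≥0∞) + 1)
        = 2 * (ENNReal.ofReal (δ/4) * (j0:ℝ≥0∞)) +
          (ENNReal.ofReal (δ/4) * (⌈8/δ⌉₊:ℝ≥0∞) + 2 * ENNReal.ofReal (δ/4)) := by
      rw [hBdef]
      push_cast
      ring
    have hfinL : 2 * (ENNReal.ofReal (δ/4) * (j0:ℝ≥0∞)) ≠ ⊤ :=
      ENNReal.mul_ne_top (by norm_num)
        (ENNReal.mul_ne_top hRfin (ENNReal.natCast_ne_top _))
    calc 2 * L + 2 ≤ 2 * (ENNReal.ofReal (δ/4) * (j0:ℝ≥0∞)) + 2 :=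
          add_le_add (mul_le_mul_right hL 2) le_rfl
      _ < 2 * (ENNReal.ofReal (δ/4) * (j0:ℝ≥0∞)) +
          (ENNReal.ofReal (δ/4) * (⌈8/δ⌉₊:ℝ≥0∞) + 2 * ENNReal.ofReal (δ/4)) := by
          apply ENNReal.add_lt_add_left hfinL
          calc (2:ℝ≥0∞) < 2 + 2 * ENNReal.ofReal (δ/4) :=
                ENNReal.lt_add_right (by norm_num)
                  (ENNReal.mul_pos (by norm_num) hRpos.ne').ne'
            _ ≤ ENNReal.ofReal (δ/4) * (⌈8/δ⌉₊:ℝ≥0∞) + 2 * ENNReal.ofReal (δ/4) :=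
                add_le_add hc2 le_rfl
      _ = ENNReal.ofReal (δ/4) * ((B:ℝ≥0∞) + 1) := hexp.symm
  set M0 : ℕ := Mbd B j0 with hM0
  -- thickening radius
  set η : ℝ := min (ρ/8) (εr/(4*(M0+1))) with hη
  have hηpos : 0 < η := by
    apply lt_min (by positivity) (by positivity)
  -- pick a good index n
  have hfreq : ∃ᶠ n in atTop, μH[1] (Cn n) < m + ENNReal.ofReal (εr/2) := by
    exact frequently_lt_of_liminf_lt (by isBoundedDefault)
      (ENNReal.lt_add_right hmfin.ne (ENNReal.ofReal_pos.mpr (by positivity)).ne')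
  have hev : ∀ᶠ n in atTop, EMetric.hausdorffEdist (Cn n) C < ENNReal.ofReal η :=
    hlim.eventually_lt_const (ENNReal.ofReal_pos.mpr hηpos)
  obtain ⟨n, hn1, hn2⟩ := (hfreq.and_eventually hev).exists
  have hn2' : EMetric.hausdorffEdist C (Cn n) < ENNReal.ofReal η := by
    exact EMetric.hausdorffEdist_comm.trans_lt hn2
  have hbudget : μH[1] (Cn n) ≤ ENNReal.ofReal (δ/4) * j0 := (hn1.le).trans hbudgetLm
  -- decompose
  obtain ⟨S, hScard, hSprop, hScov, hSsum⟩ :=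
    decomp hδpos B j0 hB j0 le_rfl (Cn n) (hcomp n) (hconn n) hbudget
  -- build the cover of C
  set l : List (Set X) := S.toList with hl
  set Tn : ℕ → Set X := fun i =>
    if h : i < l.length then Metric.cthickening η (l.get ⟨i, h⟩) else ∅ with hTn
  have hcover : C ⊆ ⋃ i, Tn i := by
    intro c hc
    obtain ⟨p, hp, hcp⟩ := EMetric.exists_edist_lt_of_hausdorffEdist_lt hc hn2'
    obtain ⟨P, hPS, hpP⟩ := hScov hp
    rw [Finset.mem_coe, ← Finset.mem_toList, List.mem_iff_get] at hPS
    obtain ⟨i, hiP⟩ := hPS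
    refine Set.mem_iUnion.mpr ⟨i, ?_⟩
    rw [hTn]
    simp only [dif_pos i.isLt]
    rw [dif_pos (show (i:ℕ) < l.length from i.isLt)]
    rw [Fin.eta, hiP, Metric.mem_cthickening_iff]
    exact (EMetric.infEdist_le_edist_of_mem hpP).trans hcp.le
  have hdiamTn : ∀ i, EMetric.diam (Tn i) ≤ r := by
    intro i
    rw [hTn]
    by_cases h : i < l.length
    · simp only [dif_pos h]
      set P := l.get ⟨i, h⟩ with hP
      have hPS : P ∈ S := by
        rw [← Finset.mem_toList]
        exact List.get_mem l ⟨i, h⟩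
      have hdP : EMetric.diam P ≤ ENNReal.ofReal δ := (hSprop P hPS).2.2
      have hcoe : ((η.toNNReal : ℝ≥0) : ℝ) = η := Real.coe_toNNReal η hηpos.le
      calc EMetric.diam (Metric.cthickening η P)
          = EMetric.diam (Metric.cthickening ((η.toNNReal : ℝ≥0) : ℝ) P) := by rw [hcoe]
        _ ≤ EMetric.diam P + 2 * (η.toNNReal : ℝ≥0∞) := Metric.ediam_cthickening_le _
        _ = EMetric.diam P + 2 * ENNReal.ofReal η := rfl
        _ ≤ ENNReal.ofReal δ + 2 * ENNReal.ofReal η := add_le_add hdP le_rfl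
        _ ≤ ENNReal.ofReal δ + ENNReal.ofReal (ρ/2) := by
            apply add_le_add le_rfl
            rw [← ENNReal.ofReal_ofNat, ← ENNReal.ofReal_mul (by norm_num : (0:ℝ) ≤ 2)]
            apply ENNReal.ofReal_le_ofReal
            have : η ≤ ρ/8 := min_le_left _ _
            linarith
        _ = ENNReal.ofReal ρ := by
            rw [← ENNReal.ofReal_add (by positivity) (by positivity)]
            congr 1
            rw [hδdef]; ring
        _ ≤ r := hρr
    · simp only [dif_neg h, EMetric.diam_empty]
      exact (le_of_eq EMetric.diam_empty).trans zero_le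
  -- bound the sum
  have hsumbound : (∑' i, ⨆ _ : (Tn i).Nonempty, EMetric.diam (Tn i) ^ (1:ℝ)) ≤ m + ↑ε := by
    simp only [ENNReal.rpow_one]
    have hzero : ∀ i ∉ Finset.range l.length,
        (⨆ _ : (Tn i).Nonempty, EMetric.diam (Tn i)) = 0 := by
      intro i hi
      rw [Finset.mem_range, not_lt] at hi
      rw [hTn]
      simp only [dif_neg (not_lt.mpr hi)]
      simp [Set.not_nonempty_empty]
    rw [tsum_eq_sum hzero]
    have hstep1 : (∑ i ∈ Finset.range l.length, ⨆ _ : (Tn i).Nonempty, EMetric.diam (Tn i))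
        ≤ ∑ i ∈ Finset.range l.length, EMetric.diam (Tn i) := by
      apply Finset.sum_le_sum
      intro i _
      exact iSup_le fun _ => le_rfl
    have hstep2 : (∑ i ∈ Finset.range l.length, EMetric.diam (Tn i))
        = ∑ P ∈ S, EMetric.diam (Metric.cthickening η P) := by
      have e1 : (∑ i ∈ Finset.range l.length, EMetric.diam (Tn i))
          = ∑ i : Fin l.length, EMetric.diam (Tn i) :=
        (Fin.sum_univ_eq_sum_range (fun i => EMetric.diam (Tn i)) l.length).symm
      have e2 : (∑ i : Fin l.length, EMetric.diam (Tn i))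
          = ∑ i : Fin l.length, EMetric.diam (Metric.cthickening η (l.get i)) := by
        apply Finset.sum_congr rfl
        intro i _
        rw [hTn]
        simp only [dif_pos i.isLt, Fin.eta]
      have e3 : (l.map (fun P => EMetric.diam (Metric.cthickening η P))).sum
          = ∑ i : Fin l.length, EMetric.diam (Metric.cthickening η (l.get i)) := by
        conv_lhs => rw [← List.ofFn_get l, List.map_ofFn]
        rw [List.sum_ofFn]
        rfl
      rw [e1, e2, ← e3, hl, Finset.sum_map_toList]
    have hstep3 : (∑ P ∈ S, EMetric.diam (Metric.cthickening η P))
        ≤ (∑ P ∈ S, μH[1] P) + (S.card : ℝ≥0∞) * (2 * ENNReal.ofReal η) := by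
      have hperP : ∀ P ∈ S, EMetric.diam (Metric.cthickening η P)
          ≤ μH[1] P + 2 * ENNReal.ofReal η := by
        intro P hP
        have hcoe : ((η.toNNReal : ℝ≥0) : ℝ) = η := Real.coe_toNNReal η hηpos.le
        calc EMetric.diam (Metric.cthickening η P)
            = EMetric.diam (Metric.cthickening ((η.toNNReal : ℝ≥0) : ℝ) P) := by rw [hcoe]
          _ ≤ EMetric.diam P + 2 * (η.toNNReal : ℝ≥0∞) := Metric.ediam_cthickening_le _
          _ = EMetric.diam P + 2 * ENNReal.ofReal η := rfl
          _ ≤ μH[1] P + 2 * ENNReal.ofReal η :=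
              add_le_add (ediam_le_h1 (hSprop P hP).2.1.isPreconnected) le_rfl
      calc (∑ P ∈ S, EMetric.diam (Metric.cthickening η P))
          ≤ ∑ P ∈ S, (μH[1] P + 2 * ENNReal.ofReal η) := Finset.sum_le_sum hperP
        _ = (∑ P ∈ S, μH[1] P) + S.card • (2 * ENNReal.ofReal η) := by
            rw [Finset.sum_add_distrib, Finset.sum_const]
        _ = (∑ P ∈ S, μH[1] P) + (S.card : ℝ≥0∞) * (2 * ENNReal.ofReal η) := by
            rw [nsmul_eq_mul]
    have hcardbound : (S.card : ℝ≥0∞) * (2 * ENNReal.ofReal η) ≤ ENNReal.ofReal (εr/2) := by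
      have hη2 : η ≤ εr/(4*(M0+1)) := min_le_right _ _
      calc (S.card : ℝ≥0∞) * (2 * ENNReal.ofReal η)
          ≤ (M0 : ℝ≥0∞) * (2 * ENNReal.ofReal η) := by
            apply mul_le_mul_left
            exact_mod_cast Nat.cast_le.mpr hScard
        _ = ENNReal.ofReal ((M0:ℝ) * (2 * η)) := by
            rw [ENNReal.ofReal_mul (by positivity : (0:ℝ) ≤ (M0:ℝ))]
            rw [ENNReal.ofReal_mul (by norm_num : (0:ℝ) ≤ 2)]
            rw [ENNReal.ofReal_natCast, ENNReal.ofReal_ofNat]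
        _ ≤ ENNReal.ofReal (εr/2) := by
            apply ENNReal.ofReal_le_ofReal
            have hM0pos : (0:ℝ) < (M0:ℝ) + 1 := by positivity
            have h1 : (M0:ℝ) * (2 * η) ≤ (M0:ℝ) * (2 * (εr/(4*((M0:ℝ)+1)))) := by
              apply mul_le_mul_of_nonneg_left _ (by positivity)
              apply mul_le_mul_of_nonneg_left _ (by norm_num)
              exact_mod_cast hη2
            refine h1.trans ?_
            have h2 : (M0:ℝ) * (2 * (εr/(4*((M0:ℝ)+1)))) = (M0:ℝ)/((M0:ℝ)+1) * (εr/2) := by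
              field_simp
              ring
            rw [h2]
            exact mul_le_of_le_one_left (by positivity)
              ((div_le_one hM0pos).mpr (by linarith))
    calc (∑ i ∈ Finset.range l.length, ⨆ _ : (Tn i).Nonempty, EMetric.diam (Tn i))
        ≤ ∑ P ∈ S, EMetric.diam (Metric.cthickening η P) := by rw [← hstep2]; exact hstep1
      _ ≤ (∑ P ∈ S, μH[1] P) + (S.card : ℝ≥0∞) * (2 * ENNReal.ofReal η) := hstep3
      _ ≤ μH[1] (Cn n) + ENNReal.ofReal (εr/2) := add_le_add hSsum hcardbound
      _ ≤ (m + ENNReal.ofReal (εr/2)) + ENNReal.ofReal (εr/2) := add_le_add hn1.le le_rfl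
      _ = m + (ENNReal.ofReal (εr/2) + ENNReal.ofReal (εr/2)) := by rw [add_assoc]
      _ = m + ENNReal.ofReal εr := by
          rw [← ENNReal.ofReal_add (by positivity) (by positivity)]
          norm_num
      _ = m + ↑ε := by rw [hεr, ENNReal.ofReal_coe_nnreal]
  exact le_trans (iInf_le_of_le Tn (iInf_le_of_le hcover (iInf_le _ hdiamTn))) hsumbound
end

section
/- Let C be a continuum in a metric space with diam(C) > 0, and let 0 < ε < diam(C)/2. Then the packing number satisfies P(C,ε) ≤ H^1(C)/ε, where P(C,ε) is the maximal number of points x_1,...,x_n in C with pairwise disjoint open balls B(x_i,ε). -/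
open Metric MeasureTheory
open scoped ENNReal NNReal

/-!
Fix `x ∈ C`. Since `ε < diam C / 2`, some point of `C` lies at distance `> ε` from `x`, so the
connected image of `C` under the `1`-Lipschitz map `dist x` covers `[0, ε)`, and this part of the
image comes from `C ∩ B(x, ε)`. Hence `H¹(C ∩ B(x, ε)) ≥ H¹([0, ε)) = ε`. For a packing by `n`
disjoint balls these pieces of `C` are disjoint, so `n ε ≤ H¹(C)`.
-/

section

variable {X : Type*} [MetricSpace X]

lemma exists_mem_lt_dist_of_lt_diam_half {s : Set X} {x : X} (hx : x ∈ s) {r : ℝ}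
    (hr : r < diam s / 2) : ∃ y ∈ s, r < dist x y := by
  by_contra! hfar
  have hr₀ : 0 ≤ r := dist_self x ▸ hfar x hx
  have : diam s ≤ 2 * r :=
    diam_le_of_subset_closedBall hr₀ fun y hy => mem_closedBall'.2 (hfar y hy)
  linarith

lemma Ico_subset_image_dist_inter_ball {s : Set X} (hs : IsPreconnected s) {x y : X}
    (hx : x ∈ s) (hy : y ∈ s) {r : ℝ} (hr : r ≤ dist x y) :
    Set.Ico 0 r ⊆ dist x '' (s ∩ ball x r) := by
  rintro t ⟨ht₀, htr⟩
  have hIcc : Set.Icc 0 (dist x y) ⊆ dist x '' s :=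
    (hs.image _ (continuous_const.dist continuous_id).continuousOn).Icc_subset
      ⟨x, hx, dist_self x⟩ ⟨y, hy, rfl⟩
  obtain ⟨z, hz, rfl⟩ := hIcc ⟨ht₀, htr.le.trans hr⟩
  exact ⟨z, ⟨hz, mem_ball'.2 htr⟩, rfl⟩

variable [MeasurableSpace X] [BorelSpace X]

lemma ofReal_le_hausdorffMeasure_inter_ball {s : Set X} (hs : IsPreconnected s) {x y : X}
    (hx : x ∈ s) (hy : y ∈ s) {r : ℝ} (hr : r ≤ dist x y) :
    ENNReal.ofReal r ≤ μH[1] (s ∩ ball x r) :=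
  calc ENNReal.ofReal r = μH[1] (Set.Ico (0 : ℝ) r) := by
        rw [hausdorffMeasure_real, Real.volume_Ico, sub_zero]
    _ ≤ μH[1] (dist x '' (s ∩ ball x r)) :=
        measure_mono (Ico_subset_image_dist_inter_ball hs hx hy hr)
    _ ≤ μH[1] (s ∩ ball x r) := by
        simpa using (LipschitzWith.dist_right x).hausdorffMeasure_image_le zero_le_one
          (s ∩ ball x r)

lemma ofReal_le_hausdorffMeasure_inter_ball_of_lt_diam_half {s : Set X}
    (hs : IsPreconnected s) {x : X} (hx : x ∈ s) {r : ℝ} (hr : r < diam s / 2) :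
    ENNReal.ofReal r ≤ μH[1] (s ∩ ball x r) :=
  let ⟨_, hy, hxy⟩ := exists_mem_lt_dist_of_lt_diam_half hx hr
  ofReal_le_hausdorffMeasure_inter_ball hs hx hy hxy.le

end

lemma card_mul_le_measure_of_pairwise_disjoint_ball {X : Type*} [MetricSpace X]
    [MeasurableSpace X] [OpensMeasurableSpace X] (μ : Measure X) {A : Set X} {t : Finset X}
    {r : ℝ} (ht : (t : Set X).Pairwise fun x y => Disjoint (ball x r) (ball y r))
    {m : ℝ≥0∞} (hm : ∀ x ∈ t, m ≤ μ (A ∩ ball x r)) :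
    t.card * m ≤ μ A :=
  -- working with `μ.restrict A` means `A` itself need not be measurable
  calc (t.card : ℝ≥0∞) * m = ∑ _x ∈ t, m := by rw [Finset.sum_const, nsmul_eq_mul]
    _ ≤ ∑ x ∈ t, μ.restrict A (ball x r) := Finset.sum_le_sum fun x hx => by
        rw [Measure.restrict_apply measurableSet_ball, Set.inter_comm]
        exact hm x hx
    _ = μ.restrict A (⋃ x ∈ t, ball x r) :=
        (measure_biUnion_finset ht fun _ _ => measurableSet_ball).symm
    _ ≤ μ A := (measure_mono (Set.subset_univ _)).trans_eq (Measure.restrict_apply_univ A)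

lemma packingNumber_le_of_forall_card_le {X : Type*} [MetricSpace X] {A : Set X} {r : ℝ}
    {B : ℝ≥0∞} (h : ∀ t : Finset X, ↑t ⊆ A →
      (t : Set X).Pairwise (fun x y => Disjoint (ball x r) (ball y r)) → (t.card : ℝ≥0∞) ≤ B) :
    (packingNumber A r : ℝ≥0∞) ≤ B := by
  simp only [_root_.packingNumber, ENat.toENNReal_iSup]
  exact iSup₂_le fun t ht => by exact_mod_cast h t ht.1 ht.2

theorem packing_le_h1_div_general (X : Type*) [MetricSpace X]
    (C : Set X) (hconn : IsConnected C)
    (ε : ℝ) (hε : 0 < ε) (hε' : ε < Metric.diam C / 2) :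
    (packingNumber C ε : ℝ≥0∞) ≤ H1 X C / ENNReal.ofReal ε := by
  let : MeasurableSpace X := borel X
  have : BorelSpace X := ⟨rfl⟩
  refine packingNumber_le_of_forall_card_le fun t htC ht => ?_
  rw [ENNReal.le_div_iff_mul_le (Or.inl (ENNReal.ofReal_pos.2 hε).ne')
    (Or.inl ENNReal.ofReal_ne_top)]
  exact card_mul_le_measure_of_pairwise_disjoint_ball μH[1] ht fun x hx =>
    ofReal_le_hausdorffMeasure_inter_ball_of_lt_diam_half hconn.isPreconnected (htC hx) hε'

/-- For a continuum `C` in a metric space with `diam C > 0` and `0 < ε < diam C / 2`,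
the packing number satisfies `P(C,ε) ≤ H¹(C) / ε`. -/
theorem packing_le_h1_div (X : Type*) [MetricSpace X]
    (C : Set X) (hcomp : IsCompact C) (hconn : IsConnected C)
    (hdiam : 0 < Metric.diam C) (ε : ℝ) (hε : 0 < ε) (hε' : ε < Metric.diam C / 2) :
    (packingNumber C ε : ℝ≥0∞) ≤ H1 X C / ENNReal.ofReal ε :=
  packing_le_h1_div_general X C hconn ε hε hε'
end

section
/- A continuum C (nonempty compact connected metric space) with finite one-dimensional Hausdorff measure H^1(C) < ∞ is totally bounded, hence its isometry class has P(C,ε) < ∞ for every ε > 0, with the bound P(C,ε) ≤ max(1, H^1(C)/ε) whenever 0 < ε < diam(C)/2. -/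
open Metric MeasureTheory
open scoped ENNReal NNReal

/-! In a connected space, a ball `B(x, ε)` that does not exhaust the space is mapped by the
1-Lipschitz function `dist x` onto a set containing `[0, ε)`, so `H¹(B(x, ε)) ≥ ε`. Pairwise
disjoint `ε`-balls therefore number at most `H¹(C) / ε`. Total boundedness is just compactness. -/

open Set

theorem exists_le_dist_of_two_mul_lt_diam {X : Type*} [PseudoMetricSpace X] {ε : ℝ}
    (hε : 2 * ε < Metric.diam (univ : Set X)) (x : X) : ∃ z, ε ≤ dist x z := by
  by_contra! h
  have hdiam : Metric.diam (univ : Set X) ≤ 2 * ε :=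
    (Metric.diam_mono (fun z _ => Metric.mem_ball'.2 (h z)) Metric.isBounded_ball).trans
      (Metric.diam_ball (dist_nonneg.trans (h x).le))
  linarith

theorem Ico_subset_image_dist_ball {X : Type*} [PseudoMetricSpace X] [PreconnectedSpace X]
    {x z : X} {ε : ℝ} (hz : ε ≤ dist x z) : Ico 0 ε ⊆ dist x '' Metric.ball x ε := by
  rintro t ⟨ht0, htε⟩
  obtain ⟨y, rfl⟩ := intermediate_value_univ x z (continuous_const.dist continuous_id)
    ⟨by simpa using ht0, htε.le.trans hz⟩
  exact ⟨y, Metric.mem_ball'.2 htε, rfl⟩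

theorem ofReal_le_hausdorffMeasure_ball {X : Type*} [MetricSpace X] [MeasurableSpace X]
    [BorelSpace X] [PreconnectedSpace X] {x z : X} {ε : ℝ} (hz : ε ≤ dist x z) :
    ENNReal.ofReal ε ≤ μH[1] (Metric.ball x ε) :=
  calc ENNReal.ofReal ε = μH[1] (Ico (0 : ℝ) ε) := by
        rw [hausdorffMeasure_real, Real.volume_Ico, sub_zero]
    _ ≤ μH[1] (dist x '' Metric.ball x ε) := measure_mono (Ico_subset_image_dist_ball hz)
    _ ≤ μH[1] (Metric.ball x ε) := by
        simpa using (LipschitzWith.dist_right x).hausdorffMeasure_image_le zero_le_one _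

theorem packingNumber_mul_le_measure_univ {X : Type*} [MetricSpace X] [MeasurableSpace X]
    [OpensMeasurableSpace X] (μ : Measure X) {A : Set X} {ε : ℝ} {m : ℝ≥0∞}
    (hm : ∀ x ∈ A, m ≤ μ (Metric.ball x ε)) :
    (packingNumber A ε : ℝ≥0∞) * m ≤ μ univ := by
  simp only [_root_.packingNumber, ENat.toENNReal_iSup, ENNReal.iSup_mul, ENat.toENNReal_coe]
  refine iSup₂_le fun s ⟨hsA, hdisj⟩ => ?_
  calc (s.card : ℝ≥0∞) * m = ∑ _x ∈ s, m := by simp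
    _ ≤ ∑ x ∈ s, μ (Metric.ball x ε) := Finset.sum_le_sum fun x hx => hm x (hsA hx)
    _ = μ (⋃ x ∈ s, Metric.ball x ε) :=
        (measure_biUnion_finset hdisj fun _ _ => Metric.isOpen_ball.measurableSet).symm
    _ ≤ μ univ := measure_mono (subset_univ _)

theorem continuum_totallyBounded_packing_general (C : Type*) [MetricSpace C] [CompactSpace C]
    [ConnectedSpace C] :
    TotallyBounded (Set.univ : Set C) ∧
      ∀ ε : ℝ, 0 < ε → ε < Metric.diam (Set.univ : Set C) / 2 →
        (packingNumber (Set.univ : Set C) ε : ℝ≥0∞) ≤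
          max 1 (H1 C Set.univ / ENNReal.ofReal ε) := by
  let : MeasurableSpace C := borel C
  have : BorelSpace C := ⟨rfl⟩
  refine ⟨isCompact_univ.totallyBounded, fun ε hε hdiam => le_max_of_le_right ?_⟩
  have hball : ∀ x ∈ (univ : Set C), ENNReal.ofReal ε ≤ μH[1] (Metric.ball x ε) := fun x _ =>
    let ⟨_, hz⟩ := exists_le_dist_of_two_mul_lt_diam (by linarith) x
    ofReal_le_hausdorffMeasure_ball hz
  exact (ENNReal.le_div_iff_mul_le (.inl (ENNReal.ofReal_pos.2 hε).ne')
    (.inl ENNReal.ofReal_ne_top)).2 (packingNumber_mul_le_measure_univ μH[1] hball)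

/-- A continuum `C` (a nonempty compact connected metric space) with finite
one-dimensional Hausdorff measure is totally bounded; moreover for every
`0 < ε < diam C / 2` the packing number satisfies `P(C,ε) ≤ max 1 (H¹(C)/ε)`. -/
theorem continuum_totallyBounded_packing (C : Type*) [MetricSpace C] [CompactSpace C]
    [ConnectedSpace C] [Nonempty C] (hfin : H1 C Set.univ < ⊤) :
    TotallyBounded (Set.univ : Set C) ∧
      ∀ ε : ℝ, 0 < ε → ε < Metric.diam (Set.univ : Set C) / 2 →
        (packingNumber (Set.univ : Set C) ε : ℝ≥0∞) ≤
          max 1 (H1 C Set.univ / ENNReal.ofReal ε) :=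
  continuum_totallyBounded_packing_general C
end

section
/- (Gromov–Hausdorff semicontinuity of H^1) Let {X_n} be a sequence of compact connected metric spaces converging in the Gromov–Hausdorff sense to a compact metric space X. Then X is compact and connected, and H^1(X) ≤ liminf_{n→∞} H^1(X_n). -/
open Metric MeasureTheory
open scoped ENNReal NNReal

set_option linter.unusedSectionVars false

namespace Golab

open Set

variable {Z : Type*} [MetricSpace Z]

noncomputable local instance : DecidableEq (Set Z) := Classical.decEq _
noncomputable local instance : DecidableEq (Finset (Set Z)) := Classical.decEq _

/-- Total weight (sum of diameters) of a finite family of sets. -/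
noncomputable def wt (F : Finset (Set Z)) : ℝ≥0∞ := ∑ E ∈ F, EMetric.diam E

/-- A finite family of sets is linked if it cannot be split into two nonempty
subfamilies with no two pieces from different sides intersecting. -/
def Linked (F : Finset (Set Z)) : Prop :=
  ∀ G ⊆ F, G.Nonempty → G ≠ F → ∃ A ∈ G, ∃ B ∈ F, B ∉ G ∧ (A ∩ B).Nonempty

theorem wt_mono {F G : Finset (Set Z)} (h : F ⊆ G) : wt F ≤ wt G :=
  Finset.sum_le_sum_of_subset h

theorem edist_le_wt {F : Finset (Set Z)} (hF : Linked F) {x y : Z}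
    (hx : x ∈ ⋃₀ (F : Set (Set Z))) (hy : y ∈ ⋃₀ (F : Set (Set Z))) :
    edist x y ≤ wt F := by
  classical
  obtain ⟨Ex, hEx, hxEx⟩ := hx
  rw [Finset.mem_coe] at hEx
  set 𝒢 : Finset (Finset (Set Z)) :=
    F.powerset.filter (fun G => Ex ∈ G ∧ ∀ z ∈ ⋃₀ (G : Set (Set Z)), edist x z ≤ wt G) with h𝒢
  have hsingle : {Ex} ∈ 𝒢 := by
    simp only [h𝒢, Finset.mem_filter, Finset.mem_powerset]
    refine ⟨by simpa using hEx, by simp, ?_⟩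
    intro z hz
    simp only [Finset.coe_singleton, sUnion_singleton] at hz
    have : edist x z ≤ EMetric.diam Ex := EMetric.edist_le_diam_of_mem hxEx hz
    simpa [wt] using this
  obtain ⟨G, hGmem, hGmax⟩ := Finset.exists_max_image 𝒢 Finset.card ⟨_, hsingle⟩
  simp only [h𝒢, Finset.mem_filter, Finset.mem_powerset] at hGmem
  obtain ⟨hGF, hExG, hGbound⟩ := hGmem
  have hGeq : G = F := by
    by_contra hne
    obtain ⟨A, hA, B, hBF, hBG, w, hwA, hwB⟩ := hF G hGF ⟨Ex, hExG⟩ hne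
    have hmem : insert B G ∈ 𝒢 := by
      simp only [h𝒢, Finset.mem_filter, Finset.mem_powerset]
      refine ⟨Finset.insert_subset hBF hGF, Finset.mem_insert_of_mem hExG, ?_⟩
      intro z hz
      have hwt : wt (insert B G) = EMetric.diam B + wt G := by
        simp [wt, Finset.sum_insert hBG]
      obtain ⟨E, hE, hzE⟩ := hz
      rw [Finset.coe_insert, Set.mem_insert_iff] at hE
      rcases hE with hEB | hE
      · rw [hEB] at hzE
        have h1 : edist x w ≤ wt G := hGbound w ⟨A, by simpa using hA, hwA⟩
        have h2 : edist w z ≤ EMetric.diam B := EMetric.edist_le_diam_of_mem hwB hzE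
        calc edist x z ≤ edist x w + edist w z := edist_triangle _ _ _
          _ ≤ wt G + EMetric.diam B := add_le_add h1 h2
          _ = EMetric.diam B + wt G := add_comm _ _
          _ = wt (insert B G) := hwt.symm
      · have : edist x z ≤ wt G := hGbound z ⟨E, hE, hzE⟩
        rw [hwt]
        exact this.trans le_add_self
    have hcard := hGmax _ hmem
    rw [Finset.card_insert_of_notMem hBG] at hcard
    omega
  subst hGeq
  exact hGbound y hy

theorem diam_sUnion_le {F : Finset (Set Z)} (hF : Linked F) :
    EMetric.diam (⋃₀ (F : Set (Set Z))) ≤ wt F :=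
  EMetric.diam_le fun _ hx _ hy => edist_le_wt hF hx hy

theorem Linked.union {F G : Finset (Set Z)} (hF : Linked F) (hG : Linked G)
    (h : ∃ A ∈ F, ∃ B ∈ G, (A ∩ B).Nonempty) : Linked (F ∪ G) := by
  classical
  intro H hH hHne hHne'
  by_cases h1 : H ∩ F = ∅ ∨ H ∩ F = F
  case neg =>
    push_neg at h1
    obtain ⟨h1a, h1b⟩ := h1
    obtain ⟨A, hA, B, hBF, hBH, hAB⟩ :=
      hF (H ∩ F) Finset.inter_subset_right h1a h1b
    refine ⟨A, (Finset.mem_inter.1 hA).1, B, Finset.mem_union_left _ hBF, ?_, hAB⟩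
    intro hBH'
    exact hBH (Finset.mem_inter.2 ⟨hBH', hBF⟩)
  by_cases h2 : H ∩ G = ∅ ∨ H ∩ G = G
  case neg =>
    push_neg at h2
    obtain ⟨h2a, h2b⟩ := h2
    obtain ⟨A, hA, B, hBG, hBH, hAB⟩ :=
      hG (H ∩ G) Finset.inter_subset_right h2a h2b
    refine ⟨A, (Finset.mem_inter.1 hA).1, B, Finset.mem_union_right _ hBG, ?_, hAB⟩
    intro hBH'
    exact hBH (Finset.mem_inter.2 ⟨hBH', hBG⟩)
  -- degenerate cases
  obtain ⟨A, hA, B, hB, hAB⟩ := h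
  have hHsub : H = (H ∩ F) ∪ (H ∩ G) := by
    rw [← Finset.inter_union_distrib_left]
    exact (Finset.inter_eq_left.2 hH).symm
  rcases h1 with h1 | h1 <;> rcases h2 with h2 | h2
  · exfalso; apply hHne.ne_empty; rw [hHsub, h1, h2]; simp
  · -- H ∩ F = ∅, H ∩ G = G : G ⊆ H, F ∩ H = ∅
    refine ⟨B, ?_, A, Finset.mem_union_left _ hA, ?_, ?_⟩
    · rw [hHsub, h1]; simp [h2, hB]
    · intro hAH
      have : A ∈ H ∩ F := Finset.mem_inter.2 ⟨hAH, hA⟩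
      rw [h1] at this; exact absurd this (Finset.notMem_empty _)
    · exact hAB.imp fun w hw => ⟨hw.2, hw.1⟩
  · -- H ∩ F = F, H ∩ G = ∅
    refine ⟨A, ?_, B, Finset.mem_union_right _ hB, ?_, hAB⟩
    · rw [hHsub, h2]; simp [h1, hA]
    · intro hBH
      have : B ∈ H ∩ G := Finset.mem_inter.2 ⟨hBH, hB⟩
      rw [h2] at this; exact absurd this (Finset.notMem_empty _)
  · exfalso; apply hHne'
    rw [hHsub, h1, h2]

theorem linked_singleton (E : Set Z) : Linked ({E} : Finset (Set Z)) := by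
  intro G hG hGne hGne'
  rcases Finset.subset_singleton_iff.1 hG with h | h
  · exact absurd h hGne.ne_empty
  · exact absurd h hGne' 

theorem sum_image_le' {α β : Type*} [DecidableEq β] (s : Finset α) (g : α → β)
    (f : β → ℝ≥0∞) : ∑ b ∈ s.image g, f b ≤ ∑ a ∈ s, f (g a) := by
  classical
  induction s using Finset.induction_on with
  | empty => simp
  | @insert a s ha ih =>
    rw [Finset.image_insert, Finset.sum_insert ha]
    by_cases h : g a ∈ s.image g
    · rw [Finset.insert_eq_self.2 h]
      exact ih.trans le_add_self
    · rw [Finset.sum_insert h]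
      exact add_le_add le_rfl ih

theorem chunk_aux {θ : ℝ≥0∞} :
    ∀ (n : ℕ) (F : Finset (Set Z)) (Pc : Finset (Finset (Set Z))),
      Pc.card = n → Linked F →
      (∀ C ∈ Pc, Linked C) → (∀ C ∈ Pc, C.Nonempty) → (∀ C ∈ Pc, wt C ≤ 2 * θ) →
      (∀ C ∈ Pc, ∀ D ∈ Pc, C ≠ D → Disjoint C D) →
      Pc.biUnion id = F →
      ∃ Q : Finset (Set Z),
        (⋃₀ (F : Set (Set Z)) ⊆ ⋃₀ (Q : Set (Set Z))) ∧
        (∀ q ∈ Q, EMetric.diam q ≤ 4 * θ) ∧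
        (∑ q ∈ Q, EMetric.diam q ≤ wt F) ∧
        ((Q.card : ℝ≥0∞) * θ ≤ wt F + θ) := by
  classical
  intro n
  induction n using Nat.strong_induction_on with
  | _ n IH =>
  intro F Pc hcard hLF hLC hCne hCwt hdisj hbiU
  by_cases hmerge : ∃ C₁ ∈ Pc, ∃ C₂ ∈ Pc, C₁ ≠ C₂ ∧
      (∃ A ∈ C₁, ∃ B ∈ C₂, (A ∩ B).Nonempty) ∧ wt C₁ + wt C₂ ≤ 2 * θ
  · -- merge step
    obtain ⟨C₁, hC₁, C₂, hC₂, hne, htouch, hwt⟩ := hmerge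
    set Pc' : Finset (Finset (Set Z)) := insert (C₁ ∪ C₂) ((Pc.erase C₁).erase C₂) with hPc'
    have hC₂' : C₂ ∈ Pc.erase C₁ := Finset.mem_erase.2 ⟨hne.symm, hC₂⟩
    have hUnotmem : C₁ ∪ C₂ ∉ (Pc.erase C₁).erase C₂ := by
      intro hmem
      have h1 : C₁ ∪ C₂ ∈ Pc := Finset.mem_of_mem_erase (Finset.mem_of_mem_erase hmem)
      have h2 : C₁ ∪ C₂ ≠ C₁ := (Finset.mem_erase.1 (Finset.mem_of_mem_erase hmem)).1
      have hd := hdisj _ h1 _ hC₁ h2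
      obtain ⟨a, ha⟩ := hCne C₁ hC₁
      exact (Finset.disjoint_left.1 hd) (Finset.mem_union_left _ ha) ha
    have hcard' : Pc'.card = n - 1 := by
      rw [hPc', Finset.card_insert_of_notMem hUnotmem,
        Finset.card_erase_of_mem hC₂', Finset.card_erase_of_mem hC₁, hcard]
      have : 2 ≤ n := by
        rw [← hcard]
        exact Finset.one_lt_card.2 ⟨C₁, hC₁, C₂, hC₂, hne⟩
      omega
    have hlt : n - 1 < n := by
      have : 2 ≤ n := by
        rw [← hcard]
        exact Finset.one_lt_card.2 ⟨C₁, hC₁, C₂, hC₂, hne⟩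
      omega
    have hmem' : ∀ C ∈ Pc', C = C₁ ∪ C₂ ∨ (C ∈ Pc ∧ C ≠ C₁ ∧ C ≠ C₂) := by
      intro C hC
      rcases Finset.mem_insert.1 hC with h | h
      · exact Or.inl h
      · have h2 := Finset.mem_erase.1 h
        have h3 := Finset.mem_erase.1 h2.2
        exact Or.inr ⟨h3.2, h3.1, h2.1⟩
    refine IH (n - 1) hlt F Pc' hcard' hLF ?_ ?_ ?_ ?_ ?_
    · intro C hC
      rcases hmem' C hC with rfl | ⟨h, _, _⟩
      · exact (hLC C₁ hC₁).union (hLC C₂ hC₂) htouch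
      · exact hLC C h
    · intro C hC
      rcases hmem' C hC with rfl | ⟨h, _, _⟩
      · obtain ⟨a, ha⟩ := hCne C₁ hC₁
        exact ⟨a, Finset.mem_union_left _ ha⟩
      · exact hCne C h
    · intro C hC
      rcases hmem' C hC with rfl | ⟨h, _, _⟩
      · rw [wt, Finset.sum_union (hdisj _ hC₁ _ hC₂ hne)]
        exact hwt
      · exact hCwt C h
    · intro C hC D hD hCD
      rcases hmem' C hC with rfl | ⟨hC', hC1, hC2⟩ <;>
        rcases hmem' D hD with rfl | ⟨hD', hD1, hD2⟩
      · exact absurd rfl hCD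
      · exact Finset.disjoint_union_left.2
          ⟨hdisj _ hC₁ _ hD' (Ne.symm hD1), hdisj _ hC₂ _ hD' (Ne.symm hD2)⟩
      · exact (Finset.disjoint_union_left.2
          ⟨hdisj _ hC₁ _ hC' (Ne.symm hC1), hdisj _ hC₂ _ hC' (Ne.symm hC2)⟩).symm
      · exact hdisj _ hC' _ hD' hCD
    · rw [← hbiU]
      ext a
      simp only [Finset.mem_biUnion, id]
      constructor
      · rintro ⟨C, hC, ha⟩
        rcases hmem' C hC with rfl | ⟨h, _, _⟩
        · rcases Finset.mem_union.1 ha with h | h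
          · exact ⟨C₁, hC₁, h⟩
          · exact ⟨C₂, hC₂, h⟩
        · exact ⟨C, h, ha⟩
      · rintro ⟨C, hC, ha⟩
        by_cases h1 : C = C₁
        · exact ⟨C₁ ∪ C₂, Finset.mem_insert_self _ _, Finset.mem_union_left _ (h1 ▸ ha)⟩
        by_cases h2 : C = C₂
        · exact ⟨C₁ ∪ C₂, Finset.mem_insert_self _ _, Finset.mem_union_right _ (h2 ▸ ha)⟩
        · exact ⟨C, Finset.mem_insert_of_mem (Finset.mem_erase.2 ⟨h2,
            Finset.mem_erase.2 ⟨h1, hC⟩⟩), ha⟩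
  · -- terminal step
    push_neg at hmerge
    by_cases hsmall : Pc.card ≤ 1
    · interval_cases h : Pc.card
      · -- empty
        have hPc : Pc = ∅ := Finset.card_eq_zero.1 h
        have hF : F = ∅ := by rw [← hbiU, hPc]; rfl
        refine ⟨∅, ?_, ?_, ?_, ?_⟩ <;> simp [hF, wt]
      · -- single cluster
        obtain ⟨C, hC⟩ := Finset.card_eq_one.1 h
        have hCmem : C ∈ Pc := by rw [hC]; exact Finset.mem_singleton_self _
        have hF : F = C := by rw [← hbiU, hC]; simp
        refine ⟨{⋃₀ (C : Set (Set Z))}, ?_, ?_, ?_, ?_⟩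
        · rw [hF]; intro x hx; simpa using hx
        · intro q hq
          rw [Finset.mem_singleton] at hq
          subst hq
          calc EMetric.diam _ ≤ wt C := diam_sUnion_le (hLC C hCmem)
            _ ≤ 2 * θ := hCwt C hCmem
            _ ≤ 4 * θ := by
                gcongr
                norm_num
        · rw [Finset.sum_singleton, hF]
          exact diam_sUnion_le (hLC C hCmem)
        · rw [Finset.card_singleton]
          simp only [Nat.cast_one, one_mul]
          exact le_add_self
    · -- at least two clusters
      push_neg at hsmall
      have hassign : ∀ C ∈ Pc, wt C < θ →
          ∃ D, D ∈ Pc ∧ θ ≤ wt D ∧ ∃ A ∈ C, ∃ B ∈ D, (A ∩ B).Nonempty := by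
        intro C hC hClight
        have hCF : C ⊆ F := by
          intro a ha
          rw [← hbiU]
          exact Finset.mem_biUnion.2 ⟨C, hC, ha⟩
        have hCneF : C ≠ F := by
          obtain ⟨D₀, hD₀, hD₀ne⟩ := Finset.exists_mem_ne hsmall C
          obtain ⟨b, hb⟩ := hCne D₀ hD₀
          intro hEq
          have hbF : b ∈ F := by rw [← hbiU]; exact Finset.mem_biUnion.2 ⟨D₀, hD₀, hb⟩
          have : b ∈ C := hEq ▸ hbF
          exact (Finset.disjoint_left.1 (hdisj _ hD₀ _ hC hD₀ne)) hb this
        obtain ⟨A, hA, B, hBF, hBC, htouch⟩ := hLF C hCF (hCne C hC) hCneF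
        obtain ⟨D, hD, hBD⟩ := Finset.mem_biUnion.1 (hbiU ▸ hBF)
        have hDC : C ≠ D := by
          rintro rfl
          exact hBC hBD
        have hlt := hmerge C hC D hD hDC ⟨A, hA, B, hBD, htouch⟩
        refine ⟨D, hD, ?_, A, hA, B, hBD, htouch⟩
        by_contra hDlight
        push_neg at hDlight
        have : wt C + wt D < 2 * θ := by
          calc wt C + wt D < θ + θ := ENNReal.add_lt_add hClight hDlight
            _ = 2 * θ := (two_mul θ).symm
        exact lt_irrefl _ (this.trans hlt)
      choose! Dfun hD1 hD2 hD3 using hassign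
      set ℋ : Finset (Finset (Set Z)) := Pc.filter (fun C => θ ≤ wt C) with hℋ
      set lights : Finset (Set Z) → Finset (Finset (Set Z)) :=
        fun H => Pc.filter (fun C => wt C < θ ∧ Dfun C = H) with hlights
      set part : Finset (Set Z) → Finset (Set Z) :=
        fun H => H ∪ (lights H).biUnion id with hpart
      refine ⟨ℋ.image (fun H => ⋃₀ ((part H : Finset (Set Z)) : Set (Set Z))), ?_, ?_, ?_, ?_⟩
      · -- coverage
        intro x hx
        obtain ⟨E, hE, hxE⟩ := hx
        rw [Finset.mem_coe, ← hbiU] at hE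
        obtain ⟨C, hC, hEC⟩ := Finset.mem_biUnion.1 hE
        by_cases hCl : wt C < θ
        · have hDH : Dfun C ∈ ℋ := Finset.mem_filter.2 ⟨hD1 C hC hCl, hD2 C hC hCl⟩
          refine ⟨⋃₀ ((part (Dfun C) : Finset (Set Z)) : Set (Set Z)), ?_, ?_⟩
          · exact Finset.mem_coe.2 (Finset.mem_image_of_mem _ hDH)
          · exact ⟨E, Finset.mem_coe.2 (Finset.mem_union_right _ (Finset.mem_biUnion.2
              ⟨C, Finset.mem_filter.2 ⟨hC, hCl, rfl⟩, hEC⟩)), hxE⟩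
        · push_neg at hCl
          have hCH : C ∈ ℋ := Finset.mem_filter.2 ⟨hC, hCl⟩
          refine ⟨⋃₀ ((part C : Finset (Set Z)) : Set (Set Z)), ?_, ?_⟩
          · exact Finset.mem_coe.2 (Finset.mem_image_of_mem _ hCH)
          · exact ⟨E, Finset.mem_coe.2 (Finset.mem_union_left _ hEC), hxE⟩
      · -- diameter bound
        intro q hq
        obtain ⟨H, hH, rfl⟩ := Finset.mem_image.1 hq
        have hHmem : H ∈ Pc := (Finset.mem_filter.1 hH).1
        have hHwt : wt H ≤ 2 * θ := hCwt H hHmem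
        have hreach : ∀ z ∈ ⋃₀ ((part H : Finset (Set Z)) : Set (Set Z)),
            ∃ w ∈ ⋃₀ ((H : Finset (Set Z)) : Set (Set Z)), edist z w ≤ θ := by
          intro z hz
          obtain ⟨E, hE, hzE⟩ := hz
          rw [Finset.mem_coe] at hE
          rcases Finset.mem_union.1 hE with hEH | hEL
          · exact ⟨z, ⟨E, hEH, hzE⟩, by simp⟩
          · obtain ⟨C, hCmem, hEC⟩ := Finset.mem_biUnion.1 hEL
            obtain ⟨hCPc, hCl, hCD⟩ := Finset.mem_filter.1 hCmem
            obtain ⟨A, hA, B, hB, pt, hptA, hptB⟩ := hD3 C hCPc hCl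
            refine ⟨pt, ⟨B, by rw [← hCD]; exact hB, hptB⟩, ?_⟩
            have h1 : edist z pt ≤ wt C :=
              edist_le_wt (hLC C hCPc) ⟨E, hEC, hzE⟩ ⟨A, hA, hptA⟩
            exact h1.trans hCl.le
        refine EMetric.diam_le ?_
        intro x hx y hy
        obtain ⟨wx, hwx, hwxe⟩ := hreach x hx
        obtain ⟨wy, hwy, hwye⟩ := hreach y hy
        have hmid : edist wx wy ≤ wt H := edist_le_wt (hLC H hHmem) hwx hwy
        calc edist x y ≤ edist x wx + edist wx wy + edist wy y := edist_triangle4 _ _ _ _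
          _ ≤ θ + 2 * θ + θ :=
              add_le_add (add_le_add hwxe (hmid.trans hHwt))
                (by rw [edist_comm]; exact hwye)
          _ = 4 * θ := by ring
      · -- sum bound
        have hLpart : ∀ H ∈ ℋ, Linked (part H) := by
          intro H hH
          have hHmem : H ∈ Pc := (Finset.mem_filter.1 hH).1
          have : ∀ 𝒮 ⊆ lights H, Linked (H ∪ 𝒮.biUnion id) := by
            intro 𝒮 h𝒮
            induction 𝒮 using Finset.induction_on with
            | empty => simpa using hLC H hHmem
            | @insert C 𝒮' hC𝒮' ih =>
              have hC : C ∈ lights H := h𝒮 (Finset.mem_insert_self _ _)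
              have h𝒮'' : 𝒮' ⊆ lights H := fun a ha => h𝒮 (Finset.mem_insert_of_mem ha)
              obtain ⟨hCPc, hCl, hCD⟩ := Finset.mem_filter.1 hC
              obtain ⟨A, hA, B, hB, hAB⟩ := hD3 C hCPc hCl
              have heq : H ∪ (insert C 𝒮').biUnion id = (H ∪ 𝒮'.biUnion id) ∪ C := by
                rw [Finset.biUnion_insert]
                simp only [id_eq]
                rw [Finset.union_comm C (𝒮'.biUnion id), ← Finset.union_assoc]
              rw [heq]
              refine (ih h𝒮'').union (hLC C hCPc) ?_
              refine ⟨B, Finset.mem_union_left _ (by rw [← hCD]; exact hB), A, hA, ?_⟩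
              exact hAB.imp fun w hw => ⟨hw.2, hw.1⟩
          simpa using this (lights H) Finset.Subset.rfl
        have hdisjHL : ∀ H ∈ ℋ, Disjoint H ((lights H).biUnion id) := by
          intro H hH
          have hHmem : H ∈ Pc := (Finset.mem_filter.1 hH).1
          have hHheavy : θ ≤ wt H := (Finset.mem_filter.1 hH).2
          refine Finset.disjoint_biUnion_right _ _ _ |>.2 ?_
          intro C hC
          obtain ⟨hCPc, hCl, _⟩ := Finset.mem_filter.1 hC
          refine hdisj _ hHmem _ hCPc ?_
          rintro rfl
          exact absurd hHheavy (not_le.2 hCl)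
        have hwtpart : ∀ H ∈ ℋ, wt (part H) = wt H + ∑ C ∈ lights H, wt C := by
          intro H hH
          rw [hpart]
          show wt (H ∪ (lights H).biUnion id) = _
          rw [wt, Finset.sum_union (hdisjHL H hH), Finset.sum_biUnion]
          · rfl
          · intro C hC D hD hCD
            obtain ⟨hCPc, _, _⟩ := Finset.mem_filter.1 (Finset.mem_coe.1 hC)
            obtain ⟨hDPc, _, _⟩ := Finset.mem_filter.1 (Finset.mem_coe.1 hD)
            exact hdisj _ hCPc _ hDPc hCD
        have hsum1 : ∑ H ∈ ℋ, wt (part H) ≤ wt F := by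
          have e1 : ∑ H ∈ ℋ, wt (part H)
              = ∑ H ∈ ℋ, wt H + ∑ H ∈ ℋ, ∑ C ∈ lights H, wt C := by
            rw [← Finset.sum_add_distrib]
            exact Finset.sum_congr rfl hwtpart
          have e2 : ∑ H ∈ ℋ, ∑ C ∈ lights H, wt C
              = ∑ C ∈ ℋ.biUnion lights, wt C := by
            rw [Finset.sum_biUnion]
            intro H hH H' hH' hne'
            rw [Function.onFun]
            refine Finset.disjoint_left.2 ?_
            intro C hC hC'
            obtain ⟨_, _, h1⟩ := Finset.mem_filter.1 hC
            obtain ⟨_, _, h2⟩ := Finset.mem_filter.1 hC'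
            exact hne' (h1 ▸ h2 ▸ rfl)
          have e3 : ℋ.biUnion lights = Pc.filter (fun C => wt C < θ) := by
            ext C
            simp only [Finset.mem_biUnion, Finset.mem_filter]
            constructor
            · rintro ⟨H, hH, hmem⟩
              obtain ⟨hC, hCl, _⟩ := Finset.mem_filter.1 hmem
              exact ⟨hC, hCl⟩
            · rintro ⟨hC, hCl⟩
              exact ⟨Dfun C, Finset.mem_filter.2 ⟨hD1 C hC hCl, hD2 C hC hCl⟩,
                Finset.mem_filter.2 ⟨hC, hCl, rfl⟩⟩
          have e4 : ∑ H ∈ ℋ, wt H + ∑ C ∈ Pc.filter (fun C => wt C < θ), wt C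
              = ∑ C ∈ Pc, wt C := by
            rw [hℋ]
            rw [← Finset.sum_filter_add_sum_filter_not Pc (fun C => θ ≤ wt C) wt]
            congr 1
            apply Finset.sum_congr _ (fun _ _ => rfl)
            ext C
            simp [not_le]
          have e5 : ∑ C ∈ Pc, wt C = wt F := by
            rw [← hbiU, wt, Finset.sum_biUnion]
            · rfl
            · intro C hC D hD hCD
              exact hdisj _ (Finset.mem_coe.1 hC) _ (Finset.mem_coe.1 hD) hCD
          rw [e1, e2, e3, e4, e5]
        calc ∑ q ∈ ℋ.image (fun H => ⋃₀ ((part H : Finset (Set Z)) : Set (Set Z))),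
              EMetric.diam q
            ≤ ∑ H ∈ ℋ, EMetric.diam (⋃₀ ((part H : Finset (Set Z)) : Set (Set Z))) :=
              sum_image_le' _ _ _
          _ ≤ ∑ H ∈ ℋ, wt (part H) :=
              Finset.sum_le_sum fun H hH => diam_sUnion_le (hLpart H hH)
          _ ≤ wt F := hsum1
      · -- cardinality bound
        have h1 : ((ℋ.image (fun H => ⋃₀ ((part H : Finset (Set Z)) : Set (Set Z)))).card
            : ℝ≥0∞) ≤ (ℋ.card : ℝ≥0∞) := Nat.cast_le.2 Finset.card_image_le
        have h2 : (ℋ.card : ℝ≥0∞) * θ ≤ ∑ H ∈ ℋ, wt H := by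
          have := Finset.card_nsmul_le_sum ℋ wt θ (fun H hH => (Finset.mem_filter.1 hH).2)
          simpa [nsmul_eq_mul] using this
        have h3 : ∑ H ∈ ℋ, wt H ≤ wt F := by
          have e5 : ∑ C ∈ Pc, wt C = wt F := by
            rw [← hbiU, wt, Finset.sum_biUnion]
            · rfl
            · intro C hC D hD hCD
              exact hdisj _ (Finset.mem_coe.1 hC) _ (Finset.mem_coe.1 hD) hCD
          rw [← e5]
          exact Finset.sum_le_sum_of_subset (Finset.filter_subset _ _)
        calc _ ≤ (ℋ.card : ℝ≥0∞) * θ := mul_le_mul_left h1 θ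
          _ ≤ wt F := h2.trans h3
          _ ≤ wt F + θ := le_self_add

theorem chunking {θ : ℝ≥0∞} {F : Finset (Set Z)} (hLF : Linked F)
    (hdiam : ∀ E ∈ F, EMetric.diam E ≤ θ) :
    ∃ Q : Finset (Set Z),
      (⋃₀ (F : Set (Set Z)) ⊆ ⋃₀ (Q : Set (Set Z))) ∧
      (∀ q ∈ Q, EMetric.diam q ≤ 4 * θ) ∧
      (∑ q ∈ Q, EMetric.diam q ≤ wt F) ∧
      ((Q.card : ℝ≥0∞) * θ ≤ wt F + θ) := by
  classical
  refine chunk_aux (F.image (fun E => ({E} : Finset (Set Z)))).card F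
    (F.image (fun E => ({E} : Finset (Set Z)))) rfl hLF ?_ ?_ ?_ ?_ ?_
  · intro C hC
    obtain ⟨E, _, rfl⟩ := Finset.mem_image.1 hC
    exact linked_singleton E
  · intro C hC
    obtain ⟨E, _, rfl⟩ := Finset.mem_image.1 hC
    exact ⟨E, Finset.mem_singleton_self E⟩
  · intro C hC
    obtain ⟨E, hE, rfl⟩ := Finset.mem_image.1 hC
    rw [wt, Finset.sum_singleton]
    calc EMetric.diam E ≤ θ := hdiam E hE
      _ ≤ 2 * θ := by rw [two_mul]; exact le_self_add
  · intro C hC D hD hne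
    obtain ⟨E, _, rfl⟩ := Finset.mem_image.1 hC
    obtain ⟨E', _, rfl⟩ := Finset.mem_image.1 hD
    refine Finset.disjoint_singleton.2 ?_
    intro h
    exact hne (by rw [h])
  · ext a
    simp

theorem linked_of_cover {K : Set Z} (hKc : IsPreconnected K) (F : Finset (Set Z))
    (hcl : ∀ E ∈ F, IsClosed E) (hmeets : ∀ E ∈ F, (E ∩ K).Nonempty)
    (hcov : K ⊆ ⋃₀ (F : Set (Set Z))) : Linked F := by
  classical
  intro G hG hGne hGneF
  by_contra hno
  push_neg at hno
  have hno' : ∀ A ∈ G, ∀ B ∈ F, B ∉ G → A ∩ B = ∅ := by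
    intro A hA B hB hBG
    exact hno A hA B hB hBG
  set u : Set Z := ⋃₀ (G : Set (Set Z)) with hu
  set v : Set Z := ⋃₀ ((F \ G : Finset (Set Z)) : Set (Set Z)) with hv
  have hucl : IsClosed u := by
    rw [hu, Set.sUnion_eq_biUnion]
    exact Set.Finite.isClosed_biUnion G.finite_toSet
      (fun E hE => hcl E (hG (Finset.mem_coe.1 hE)))
  have hvcl : IsClosed v := by
    rw [hv, Set.sUnion_eq_biUnion]
    exact Set.Finite.isClosed_biUnion (F \ G).finite_toSet
      (fun E hE => hcl E (Finset.mem_sdiff.1 (Finset.mem_coe.1 hE)).1)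
  have hcov' : K ⊆ u ∪ v := by
    intro x hx
    obtain ⟨E, hE, hxE⟩ := hcov hx
    rw [Finset.mem_coe] at hE
    by_cases hEG : E ∈ G
    · exact Or.inl ⟨E, hEG, hxE⟩
    · exact Or.inr ⟨E, Finset.mem_sdiff.2 ⟨hE, hEG⟩, hxE⟩
  have hdisj' : K ∩ (u ∩ v) = ∅ := by
    rw [Set.eq_empty_iff_forall_notMem]
    rintro z ⟨_, ⟨A, hA, hzA⟩, ⟨B, hB, hzB⟩⟩
    rw [Finset.mem_coe] at hA hB
    obtain ⟨hBF, hBG⟩ := Finset.mem_sdiff.1 hB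
    have := hno' A hA B hBF hBG
    rw [Set.eq_empty_iff_forall_notMem] at this
    exact this z ⟨hzA, hzB⟩
  rcases isPreconnected_iff_subset_of_disjoint_closed.1 hKc u v hucl hvcl hcov' hdisj' with h | h
  · obtain ⟨B, hBF, hBG⟩ := Finset.exists_of_ssubset (Finset.ssubset_iff_subset_ne.2 ⟨hG, hGneF⟩)
    obtain ⟨z, hzB, hzK⟩ := hmeets B hBF
    obtain ⟨A, hA, hzA⟩ := h hzK
    rw [Finset.mem_coe] at hA
    have := hno' A hA B hBF hBG
    rw [Set.eq_empty_iff_forall_notMem] at this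
    exact this z ⟨hzA, hzB⟩
  · obtain ⟨A, hA⟩ := hGne
    obtain ⟨z, hzA, hzK⟩ := hmeets A (hG hA)
    obtain ⟨B, hB, hzB⟩ := h hzK
    rw [Finset.mem_coe] at hB
    obtain ⟨hBF, hBG⟩ := Finset.mem_sdiff.1 hB
    have := hno' A hA B hBF hBG
    rw [Set.eq_empty_iff_forall_notMem] at this
    exact this z ⟨hzA, hzB⟩

theorem exists_nice_cover [MeasurableSpace Z] [BorelSpace Z]
    {K : Set Z} (hK : IsCompact K) (hKc : IsPreconnected K)
    {c : ℝ≥0∞} (hμ : μH[(1:ℝ)] K < c)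
    {θ : ℝ≥0∞} (hθ0 : 0 < θ) (hθtop : θ ≠ ⊤) :
    ∃ Q : Finset (Set Z), (K ⊆ ⋃₀ (Q : Set (Set Z))) ∧
      (∀ q ∈ Q, EMetric.diam q ≤ 4 * θ) ∧
      (∑ q ∈ Q, EMetric.diam q ≤ c) ∧
      ((Q.card : ℝ≥0∞) * θ ≤ c + θ) := by
  classical
  have hμtop : μH[(1:ℝ)] K ≠ ⊤ := (hμ.trans_le le_top).ne
  obtain ⟨m, hm0, hmc⟩ := ENNReal.lt_iff_exists_add_pos_lt.1 hμ
  have hhalf : (0:ℝ≥0∞) < θ / 2 := ENNReal.div_pos hθ0.ne' (by norm_num)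
  have hiInf : (⨅ (t : ℕ → Set Z) (_ : K ⊆ Set.iUnion t)
      (_ : ∀ n, EMetric.diam (t n) ≤ θ / 2),
      ∑' n, ⨆ _ : (t n).Nonempty, EMetric.diam (t n) ^ (1:ℝ)) ≤ μH[(1:ℝ)] K := by
    rw [Measure.hausdorffMeasure_apply]
    exact le_iSup₂ (f := fun (r : ℝ≥0∞) (_ : 0 < r) =>
      ⨅ (t : ℕ → Set Z) (_ : K ⊆ Set.iUnion t) (_ : ∀ n, EMetric.diam (t n) ≤ r),
      ∑' n, ⨆ _ : (t n).Nonempty, EMetric.diam (t n) ^ (1:ℝ)) (θ / 2) hhalf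
  have hlt : (⨅ (t : ℕ → Set Z) (_ : K ⊆ Set.iUnion t)
      (_ : ∀ n, EMetric.diam (t n) ≤ θ / 2),
      ∑' n, ⨆ _ : (t n).Nonempty, EMetric.diam (t n) ^ (1:ℝ))
      < μH[(1:ℝ)] K + (m : ℝ≥0∞) / 2 := by
    refine hiInf.trans_lt (ENNReal.lt_add_right hμtop ?_)
    simp only [ne_eq, ENNReal.div_eq_zero_iff]
    push_neg
    exact ⟨by exact_mod_cast hm0.ne', by norm_num⟩
  simp only [iInf_lt_iff] at hlt
  obtain ⟨t, htcov, htdiam, htsum⟩ := hlt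
  simp only [ENNReal.rpow_one] at htsum
  -- thickening radii
  set σ : ℝ≥0∞ := min ((m : ℝ≥0∞) / 2) (θ / 2) with hσ
  have hσ0 : 0 < σ := lt_min
    (ENNReal.div_pos (by exact_mod_cast hm0.ne') (by norm_num))
    (ENNReal.div_pos hθ0.ne' (by norm_num))
  have hσtop : σ ≠ ⊤ := by
    refine ne_top_of_le_ne_top ?_ ((min_le_right _ _).trans ENNReal.half_le_self)
    exact hθtop
  have h2 : (2 : ℝ≥0∞) * 2⁻¹ = 1 := ENNReal.mul_inv_cancel (by norm_num) (by norm_num)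
  have h2' : (2 : ℝ≥0∞)⁻¹ * 2 = 1 := by rw [mul_comm]; exact h2
  set x : ℝ≥0∞ := (2 : ℝ≥0∞)⁻¹ with hx
  have hxtop : x ≠ ⊤ := by rw [hx]; simp
  set δ : ℕ → ℝ≥0 := fun n => (σ * x ^ (n + 2)).toNNReal with hδ
  have hδcoe : ∀ n, ((δ n : ℝ≥0)  : ℝ≥0∞) = σ * x ^ (n + 2) := by
    intro n
    rw [hδ]
    refine ENNReal.coe_toNNReal ?_
    exact ENNReal.mul_ne_top hσtop (ENNReal.pow_ne_top hxtop)
  have hx0 : x ≠ 0 := by rw [hx]; exact ENNReal.inv_ne_zero.2 (by norm_num)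
  have hδ0 : ∀ n, (0 : ℝ) < (δ n : ℝ) := by
    intro n
    have h : (0 : ℝ≥0∞) < σ * x ^ (n + 2) := ENNReal.mul_pos hσ0.ne' (pow_ne_zero _ hx0)
    rw [← hδcoe n] at h
    have h2 : (0 : ℝ≥0) < δ n := by exact_mod_cast h
    exact_mod_cast h2
  have hkey : ∀ n, 2 * ((δ n : ℝ≥0) : ℝ≥0∞) = σ * x ^ (n + 1) := by
    intro n
    rw [hδcoe]
    calc 2 * (σ * x ^ (n + 2)) = σ * x ^ (n + 1) * (2 * x) := by ring
      _ = σ * x ^ (n + 1) := by rw [hx, h2, mul_one]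
  have hxle1 : x ≤ 1 := by rw [hx]; exact ENNReal.inv_le_one.2 (by norm_num)
  have hδle : ∀ n, 2 * ((δ n : ℝ≥0) : ℝ≥0∞) ≤ θ / 2 := by
    intro n
    rw [hkey]
    calc σ * x ^ (n + 1) ≤ σ * 1 := mul_le_mul_right (pow_le_one' hxle1 _) σ
      _ = σ := mul_one σ
      _ ≤ θ / 2 := min_le_right _ _
  have hδsum : ∑' n, 2 * ((δ n : ℝ≥0) : ℝ≥0∞) ≤ (m : ℝ≥0∞) / 2 := by
    have hgeo : ∑' n : ℕ, x ^ n = 2 := by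
      rw [hx, ENNReal.tsum_geometric, ENNReal.one_sub_inv_two, inv_inv]
    calc ∑' n, 2 * ((δ n : ℝ≥0) : ℝ≥0∞) = ∑' n, σ * x * x ^ n := by
          refine tsum_congr fun n => ?_
          rw [hkey, pow_succ]
          ring
      _ = σ * x * ∑' n : ℕ, x ^ n := ENNReal.tsum_mul_left
      _ = σ * (x * 2) := by rw [hgeo]; ring
      _ = σ := by rw [hx, h2', mul_one]
      _ ≤ (m : ℝ≥0∞) / 2 := min_le_left _ _
  -- the thickened cover and its finite subcover
  set P : ℕ → Set Z := fun n => closure (Metric.thickening (δ n) (t n)) with hP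
  have hPopen : ∀ n, IsOpen (Metric.thickening ((δ n : ℝ)) (t n)) :=
    fun n => Metric.isOpen_thickening
  have hcov2 : K ⊆ ⋃ n, Metric.thickening ((δ n : ℝ)) (t n) := by
    intro y hy
    obtain ⟨n, hn⟩ := Set.mem_iUnion.1 (htcov hy)
    exact Set.mem_iUnion.2 ⟨n, Metric.self_subset_thickening (hδ0 n) _ hn⟩
  obtain ⟨sfin, hsfin⟩ := hK.elim_finite_subcover _ hPopen hcov2
  set s' : Finset ℕ := sfin.filter (fun n => (P n ∩ K).Nonempty) with hs'
  set F : Finset (Set Z) := s'.image P with hF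
  have hcovF : K ⊆ ⋃₀ (F : Set (Set Z)) := by
    intro y hy
    obtain ⟨n, hn, hyn⟩ := Set.mem_iUnion₂.1 (hsfin hy)
    have hyP : y ∈ P n := subset_closure hyn
    have hns' : n ∈ s' := Finset.mem_filter.2 ⟨hn, ⟨y, hyP, hy⟩⟩
    exact ⟨P n, Finset.mem_coe.2 (Finset.mem_image_of_mem P hns'), hyP⟩
  have htne : ∀ n ∈ s', (t n).Nonempty := by
    intro n hn
    obtain ⟨_, hne⟩ := Finset.mem_filter.1 hn
    rcases Set.eq_empty_or_nonempty (t n) with h | h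
    · exfalso
      have : P n = ∅ := by rw [hP]; simp [h, Metric.thickening_empty]
      rw [this] at hne
      simp at hne
    · exact h
  have hdiamP : ∀ n, EMetric.diam (P n) ≤ EMetric.diam (t n) + 2 * ((δ n : ℝ≥0) : ℝ≥0∞) := by
    intro n
    rw [hP]
    calc EMetric.diam (closure (Metric.thickening ((δ n : ℝ)) (t n)))
        = EMetric.diam (Metric.thickening ((δ n : ℝ)) (t n)) := EMetric.diam_closure _
      _ ≤ EMetric.diam (t n) + 2 * ((δ n : ℝ≥0) : ℝ≥0∞) := Metric.ediam_thickening_le _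
  have hdiamθ : ∀ E ∈ F, EMetric.diam E ≤ θ := by
    intro E hE
    obtain ⟨n, hn, rfl⟩ := Finset.mem_image.1 hE
    calc EMetric.diam (P n) ≤ EMetric.diam (t n) + 2 * ((δ n : ℝ≥0) : ℝ≥0∞) := hdiamP n
      _ ≤ θ / 2 + θ / 2 := add_le_add (htdiam n) (hδle n)
      _ = θ := ENNReal.add_halves θ
  have hLF : Linked F := by
    refine linked_of_cover hKc F ?_ ?_ hcovF
    · intro E hE
      obtain ⟨n, _, rfl⟩ := Finset.mem_image.1 hE
      exact isClosed_closure
    · intro E hE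
      obtain ⟨n, hn, rfl⟩ := Finset.mem_image.1 hE
      exact (Finset.mem_filter.1 hn).2
  have hwtF : wt F ≤ c := by
    have h1 : wt F ≤ ∑ n ∈ s', EMetric.diam (P n) := sum_image_le' _ _ _
    have h2 : ∑ n ∈ s', EMetric.diam (P n)
        ≤ ∑ n ∈ s', EMetric.diam (t n) + ∑ n ∈ s', 2 * ((δ n : ℝ≥0) : ℝ≥0∞) := by
      rw [← Finset.sum_add_distrib]
      exact Finset.sum_le_sum fun n _ => hdiamP n
    have h3 : ∑ n ∈ s', EMetric.diam (t n)
        ≤ ∑' n, ⨆ _ : (t n).Nonempty, EMetric.diam (t n) := by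
      refine (Finset.sum_le_sum fun n hn => ?_).trans (ENNReal.sum_le_tsum s')
      rw [iSup_pos (htne n hn)]
    have h4 : ∑ n ∈ s', 2 * ((δ n : ℝ≥0) : ℝ≥0∞) ≤ (m : ℝ≥0∞) / 2 :=
      (ENNReal.sum_le_tsum s').trans hδsum
    calc wt F ≤ (μH[(1:ℝ)] K + (m : ℝ≥0∞) / 2) + (m : ℝ≥0∞) / 2 := by
          refine h1.trans (h2.trans (add_le_add (h3.trans ?_) h4))
          exact htsum.le
      _ = μH[(1:ℝ)] K + ((m : ℝ≥0∞) / 2 + (m : ℝ≥0∞) / 2) := by ring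
      _ = μH[(1:ℝ)] K + (m : ℝ≥0∞) := by rw [ENNReal.add_halves]
      _ ≤ c := hmc.le
  obtain ⟨Q, hQcov, hQdiam, hQsum, hQcard⟩ := chunking hLF hdiamθ
  exact ⟨Q, hcovF.trans hQcov, hQdiam, hQsum.trans hwtF,
    hQcard.trans (add_le_add hwtF le_rfl)⟩

end Golab


open Filter GromovHausdorff Golab

theorem golab_connected (X : ℕ → Type) [∀ n, MetricSpace (X n)]
    [∀ n, CompactSpace (X n)] [∀ n, Nonempty (X n)] [∀ n, ConnectedSpace (X n)]
    (L : Type) [MetricSpace L] [CompactSpace L] [Nonempty L]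
    (hlim : Tendsto (fun n => GromovHausdorff.toGHSpace (X n)) atTop
      (nhds (GromovHausdorff.toGHSpace L))) : ConnectedSpace L := by
  classical
  have hdist : Tendsto (fun n => dist (toGHSpace (X n)) (toGHSpace L)) atTop (nhds 0) :=
    tendsto_iff_dist_tendsto_zero.1 hlim
  rw [connectedSpace_iff_univ]
  refine ⟨Set.univ_nonempty, ?_⟩
  by_contra hnc
  rw [isPreconnected_iff_subset_of_disjoint_closed] at hnc
  push_neg at hnc
  obtain ⟨u, v, hu, hv, hcov, hdisj, hnu, hnv⟩ := hnc
  obtain ⟨p, -, hpu⟩ := Set.not_subset.1 hnu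
  obtain ⟨p', -, hpv⟩ := Set.not_subset.1 hnv
  have huv : u ∩ v = ∅ := by
    rw [Set.eq_empty_iff_forall_notMem]
    intro z hz
    rw [Set.eq_empty_iff_forall_notMem] at hdisj
    exact hdisj z ⟨Set.mem_univ z, hz⟩
  have hune : u.Nonempty := by
    rcases hcov (Set.mem_univ p') with h | h
    · exact ⟨p', h⟩
    · exact absurd h hpv
  have hvne : v.Nonempty := by
    rcases hcov (Set.mem_univ p) with h | h
    · exact absurd h hpu
    · exact ⟨p, h⟩
  have hdisj2 : Disjoint u v := Set.disjoint_iff_inter_eq_empty.2 huv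
  obtain ⟨δ, hδ0, hδdisj⟩ := hdisj2.exists_thickenings (hu.isCompact) hv
  have hsep : ∀ a ∈ u, ∀ b ∈ v, δ ≤ dist a b := by
    intro a ha b hb
    by_contra hlt
    push_neg at hlt
    have h1 : b ∈ Metric.thickening δ u := Metric.mem_thickening_iff.2 ⟨a, ha, by
      rwa [dist_comm]⟩
    have h2 : b ∈ Metric.thickening δ v := Metric.self_subset_thickening hδ0 v hb
    exact Set.disjoint_left.1 hδdisj h1 h2
  obtain ⟨n, hn⟩ := (hdist.eventually (gt_mem_nhds (by positivity : (0:ℝ) < δ / 3))).exists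
  set W := GromovHausdorff.OptimalGHCoupling (X n) L with hW
  set Φ : X n → W := GromovHausdorff.optimalGHInjl (X n) L with hΦdef
  set Ψ : L → W := GromovHausdorff.optimalGHInjr (X n) L with hΨdef
  have hΦ : Isometry Φ := GromovHausdorff.isometry_optimalGHInjl (X n) L
  have hΨ : Isometry Ψ := GromovHausdorff.isometry_optimalGHInjr (X n) L
  have hhd : Metric.hausdorffDist (Set.range Φ) (Set.range Ψ) < δ / 3 := by
    have h := GromovHausdorff.hausdorffDist_optimal (X := X n) (Y := L)
    rw [GromovHausdorff.ghDist] at h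
    rw [hΦdef, hΨdef, h]
    exact hn
  have hfin : EMetric.hausdorffEdist (Set.range Φ) (Set.range Ψ) ≠ ⊤ :=
    Metric.hausdorffEdist_ne_top_of_nonempty_of_bounded (Set.range_nonempty Φ)
      (Set.range_nonempty Ψ) (isCompact_range hΦ.continuous).isBounded
      (isCompact_range hΨ.continuous).isBounded
  set U : Set (X n) := Φ ⁻¹' (Metric.thickening (δ/3) (Ψ '' u)) with hU
  set V : Set (X n) := Φ ⁻¹' (Metric.thickening (δ/3) (Ψ '' v)) with hV
  have hUopen : IsOpen U := Metric.isOpen_thickening.preimage hΦ.continuous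
  have hVopen : IsOpen V := Metric.isOpen_thickening.preimage hΦ.continuous
  have hcovX : (Set.univ : Set (X n)) ⊆ U ∪ V := by
    intro x _
    obtain ⟨y, hy, hxy⟩ := Metric.exists_dist_lt_of_hausdorffDist_lt
      (Set.mem_range_self x) hhd hfin
    obtain ⟨b, rfl⟩ := hy
    rcases hcov (Set.mem_univ b) with hb | hb
    · exact Or.inl (Metric.mem_thickening_iff.2 ⟨Ψ b, ⟨b, hb, rfl⟩, hxy⟩)
    · exact Or.inr (Metric.mem_thickening_iff.2 ⟨Ψ b, ⟨b, hb, rfl⟩, hxy⟩)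
  have hdisjX : (Set.univ : Set (X n)) ∩ (U ∩ V) = ∅ := by
    rw [Set.eq_empty_iff_forall_notMem]
    rintro x ⟨-, hxU, hxV⟩
    obtain ⟨ya, ⟨a, ha, rfl⟩, hda⟩ := Metric.mem_thickening_iff.1 hxU
    obtain ⟨yb, ⟨b, hb, rfl⟩, hdb⟩ := Metric.mem_thickening_iff.1 hxV
    have hab : dist (Ψ a) (Ψ b) < 2 * δ / 3 := by
      calc dist (Ψ a) (Ψ b) ≤ dist (Φ x) (Ψ a) + dist (Φ x) (Ψ b) := dist_triangle_left _ _ _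
        _ < δ/3 + δ/3 := add_lt_add hda hdb
        _ = 2 * δ / 3 := by ring
    rw [hΨ.dist_eq] at hab
    have hge := hsep a ha b hb
    linarith
  have hXne : ∀ (s : Set L), s.Nonempty →
      (Φ ⁻¹' (Metric.thickening (δ/3) (Ψ '' s))).Nonempty := by
    rintro s ⟨a, ha⟩
    obtain ⟨y, hy, hxy⟩ := Metric.exists_dist_lt_of_hausdorffDist_lt'
      (Set.mem_range_self a) hhd hfin
    obtain ⟨x, rfl⟩ := hy
    exact ⟨x, Metric.mem_thickening_iff.2 ⟨Ψ a, ⟨a, ha, rfl⟩, hxy⟩⟩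
  rcases isPreconnected_iff_subset_of_disjoint.1 isPreconnected_univ U V hUopen hVopen
      hcovX hdisjX with h | h
  · obtain ⟨x, hx⟩ := hXne v hvne
    rw [Set.eq_empty_iff_forall_notMem] at hdisjX
    exact hdisjX x ⟨Set.mem_univ x, h (Set.mem_univ x), hx⟩
  · obtain ⟨x, hx⟩ := hXne u hune
    rw [Set.eq_empty_iff_forall_notMem] at hdisjX
    exact hdisjX x ⟨Set.mem_univ x, hx, h (Set.mem_univ x)⟩

/-- **Gromov–Hausdorff semicontinuity of `H¹`.** If compact connected metric spaces
`Xₙ` converge in the Gromov–Hausdorff sense to a compact metric space `L`, then `L` is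
compact and connected and `H¹(L) ≤ liminf H¹(Xₙ)`. -/
theorem gh_semicontinuity_H1 (X : ℕ → Type) [∀ n, MetricSpace (X n)]
    [∀ n, CompactSpace (X n)] [∀ n, Nonempty (X n)] [∀ n, ConnectedSpace (X n)]
    (L : Type) [MetricSpace L] [CompactSpace L] [Nonempty L]
    (hlim : Tendsto (fun n => GromovHausdorff.toGHSpace (X n)) atTop
      (nhds (GromovHausdorff.toGHSpace L))) :
    ConnectedSpace L ∧
      H1 L Set.univ ≤ atTop.liminf fun n => H1 (X n) Set.univ := by
  classical
  refine ⟨golab_connected X L hlim, ?_⟩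
  set M : ℝ≥0∞ := atTop.liminf (fun n => H1 (X n) Set.univ) with hM
  rcases eq_top_or_lt_top M with hMtop | hMlt
  · rw [hMtop]; exact le_top
  letI : MeasurableSpace L := borel L
  haveI : BorelSpace L := ⟨rfl⟩
  have hH1L : H1 L Set.univ = μH[(1:ℝ)] (Set.univ : Set L) := rfl
  rw [hH1L]
  have hdist : Tendsto (fun n => dist (toGHSpace (X n)) (toGHSpace L)) atTop (nhds 0) :=
    tendsto_iff_dist_tendsto_zero.1 hlim
  set ε : ℕ → ℝ≥0∞ := fun k => ((k : ℝ≥0∞) + 1)⁻¹ with hε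
  have hε0 : ∀ k, 0 < ε k := fun k =>
    ENNReal.inv_pos.2 (ENNReal.add_ne_top.2 ⟨ENNReal.natCast_ne_top k, ENNReal.one_ne_top⟩)
  have hεtop : ∀ k, ε k ≠ ⊤ := fun k => by
    rw [hε]
    simp only [ne_eq, ENNReal.inv_eq_top]
    simp
  have hεtend : Tendsto ε atTop (nhds 0) := by
    have h1 : Tendsto (fun k : ℕ => (((k + 1 : ℕ)) : ℝ≥0∞)⁻¹) atTop (nhds 0) :=
      ENNReal.tendsto_inv_nat_nhds_zero.comp (tendsto_add_atTop_nat 1)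
    convert h1 using 2 with k
    push_cast
    ring
  have hcover : ∀ k : ℕ, ∃ Qk : Finset (Set L),
      ((Set.univ : Set L) ⊆ ⋃ q ∈ Qk, (q : Set L)) ∧
      (∀ q ∈ Qk, EMetric.diam q ≤ ε k) ∧
      (∑ q ∈ Qk, EMetric.diam q ≤ M + ε k) := by
    intro k
    set θ : ℝ≥0∞ := ε k / 8 with hθ
    have hθ0 : 0 < θ := ENNReal.div_pos (hε0 k).ne' (by norm_num)
    have hθtop : θ ≠ ⊤ := by
      rw [hθ]
      intro h
      rw [ENNReal.div_eq_top] at h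
      rcases h with ⟨_, h8⟩ | ⟨htop, _⟩
      · norm_num at h8
      · exact hεtop k htop
    have h8θ : 8 * θ = ε k := ENNReal.mul_div_cancel' (by norm_num) (by norm_num)
    have hMθ : M < M + θ := ENNReal.lt_add_right hMlt.ne hθ0.ne'
    set c : ℝ≥0∞ := M + θ with hc
    have hcne : c ≠ ⊤ := ENNReal.add_ne_top.2 ⟨hMlt.ne, hθtop⟩
    set Cb : ℝ≥0∞ := (c + θ) / θ with hCb
    have hCbtop : Cb ≠ ⊤ := by
      rw [hCb]
      intro h
      rw [ENNReal.div_eq_top] at h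
      rcases h with ⟨_, hz⟩ | ⟨htop, _⟩
      · exact hθ0.ne' hz
      · exact ENNReal.add_ne_top.2 ⟨hcne, hθtop⟩ htop
    have hden0 : (2 : ℝ≥0∞) * (Cb + 1) ≠ 0 := by
      refine mul_ne_zero (by norm_num) ?_
      simp
    have hdentop : (2 : ℝ≥0∞) * (Cb + 1) ≠ ⊤ :=
      ENNReal.mul_ne_top (by norm_num) (ENNReal.add_ne_top.2 ⟨hCbtop, ENNReal.one_ne_top⟩)
    set β : ℝ≥0∞ := θ / (2 * (Cb + 1)) with hβ
    have hβ0 : 0 < β := ENNReal.div_pos hθ0.ne' hdentop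
    have hβtop : β ≠ ⊤ := by
      rw [hβ]
      intro h
      rw [ENNReal.div_eq_top] at h
      rcases h with ⟨_, hz⟩ | ⟨htop, _⟩
      · exact hden0 hz
      · exact hθtop htop
    have hβkey : 2 * β * (Cb + 1) = θ := by
      rw [hβ, show (2:ℝ≥0∞) * (θ / (2*(Cb+1))) * (Cb+1)
        = θ / (2*(Cb+1)) * (2*(Cb+1)) by ring]
      exact ENNReal.div_mul_cancel hden0 hdentop
    have h2β : 2 * β ≤ θ := by
      calc 2*β = 2*β*1 := (mul_one _).symm
        _ ≤ 2*β*(Cb+1) := mul_le_mul_right le_add_self _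
        _ = θ := hβkey
    have hCb2β : Cb * (2 * β) ≤ θ := by
      calc Cb * (2*β) ≤ (Cb+1) * (2*β) := mul_le_mul_left le_self_add _
        _ = 2*β*(Cb+1) := by ring
        _ = θ := hβkey
    set bN : ℝ≥0 := β.toNNReal with hbN
    have hbNcoe : (bN : ℝ≥0∞) = β := ENNReal.coe_toNNReal hβtop
    have hbN0 : (0:ℝ) < (bN : ℝ) := by
      have := ENNReal.toNNReal_pos hβ0.ne' hβtop
      exact_mod_cast this
    have hlim2 : atTop.liminf (fun n => H1 (X n) Set.univ) < c := by
      rw [← hM]; exact hMθ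
    have hfreq : ∃ᶠ n in atTop, H1 (X n) Set.univ < c :=
      frequently_lt_of_liminf_lt (by isBoundedDefault) hlim2
    have hev : ∀ᶠ n in atTop, dist (toGHSpace (X n)) (toGHSpace L) < (bN:ℝ) :=
      hdist.eventually (gt_mem_nhds hbN0)
    obtain ⟨n, hn1, hn2⟩ := (hfreq.and_eventually hev).exists
    set W := GromovHausdorff.OptimalGHCoupling (X n) L with hW
    set Φ : X n → W := GromovHausdorff.optimalGHInjl (X n) L with hΦdef
    set Ψ : L → W := GromovHausdorff.optimalGHInjr (X n) L with hΨdef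
    have hΦ : Isometry Φ := GromovHausdorff.isometry_optimalGHInjl (X n) L
    have hΨ : Isometry Ψ := GromovHausdorff.isometry_optimalGHInjr (X n) L
    have hhd : Metric.hausdorffDist (Set.range Φ) (Set.range Ψ) < (bN:ℝ) := by
      have h := GromovHausdorff.hausdorffDist_optimal (X := X n) (Y := L)
      rw [GromovHausdorff.ghDist] at h
      rw [hΦdef, hΨdef, h]
      exact hn2
    have hfin : EMetric.hausdorffEdist (Set.range Φ) (Set.range Ψ) ≠ ⊤ :=
      Metric.hausdorffEdist_ne_top_of_nonempty_of_bounded (Set.range_nonempty Φ)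
        (Set.range_nonempty Ψ) (isCompact_range hΦ.continuous).isBounded
        (isCompact_range hΨ.continuous).isBounded
    letI : MeasurableSpace W := borel W
    haveI : BorelSpace W := ⟨rfl⟩
    have hμK : μH[(1:ℝ)] (Set.range Φ) < c := by
      letI : MeasurableSpace (X n) := borel (X n)
      haveI : BorelSpace (X n) := ⟨rfl⟩
      have himg : μH[(1:ℝ)] (Φ '' Set.univ) = μH[(1:ℝ)] (Set.univ : Set (X n)) :=
        hΦ.hausdorffMeasure_image (Or.inl (by norm_num)) _
      rw [Set.image_univ] at himg
      rw [himg]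
      have heq : H1 (X n) Set.univ = μH[(1:ℝ)] (Set.univ : Set (X n)) := rfl
      rw [← heq]
      exact hn1
    have hK'cpt : IsCompact (Set.range Φ) := isCompact_range hΦ.continuous
    have hK'conn : IsPreconnected (Set.range Φ) := by
      rw [← Set.image_univ]
      exact isPreconnected_univ.image Φ hΦ.continuous.continuousOn
    obtain ⟨Q', hQ'cov, hQ'diam, hQ'sum, hQ'card⟩ :=
      Golab.exists_nice_cover hK'cpt hK'conn hμK hθ0 hθtop
    have hcard : (Q'.card : ℝ≥0∞) ≤ Cb := by
      rw [hCb, ENNReal.le_div_iff_mul_le (Or.inl hθ0.ne') (Or.inl hθtop)]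
      exact hQ'card
    have hpre : ∀ q : Set W, EMetric.diam (Ψ ⁻¹' (Metric.thickening (bN:ℝ) q))
        ≤ EMetric.diam q + 2 * β := by
      intro q
      have h1 : EMetric.diam (Ψ ⁻¹' (Metric.thickening (bN:ℝ) q))
          ≤ EMetric.diam (Metric.thickening (bN:ℝ) q) := by
        refine EMetric.diam_le fun a ha b hb => ?_
        rw [← hΨ.edist_eq]
        exact EMetric.edist_le_diam_of_mem ha hb
      refine h1.trans ?_
      rw [← hbNcoe]
      exact Metric.ediam_thickening_le bN
    refine ⟨Q'.image (fun q => Ψ ⁻¹' (Metric.thickening (bN:ℝ) q)), ?_, ?_, ?_⟩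
    · -- coverage
      intro z _
      obtain ⟨y, hy, hzy⟩ := Metric.exists_dist_lt_of_hausdorffDist_lt'
        (Set.mem_range_self z) hhd hfin
      obtain ⟨q, hq, hyq⟩ := hQ'cov hy
      rw [Finset.mem_coe] at hq
      refine Set.mem_biUnion (Finset.mem_image_of_mem _ hq) ?_
      exact Metric.mem_thickening_iff.2 ⟨y, hyq, by rwa [dist_comm] at hzy⟩
    · -- diameters
      intro q hq
      obtain ⟨q', hq', rfl⟩ := Finset.mem_image.1 hq
      calc EMetric.diam (Ψ ⁻¹' (Metric.thickening (bN:ℝ) q'))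
          ≤ EMetric.diam q' + 2 * β := hpre q'
        _ ≤ 4 * θ + θ := add_le_add (hQ'diam q' hq') h2β
        _ = 5 * θ := by ring
        _ ≤ 8 * θ := mul_le_mul_left (by norm_num) θ
        _ = ε k := h8θ
    · -- sum
      calc ∑ q ∈ Q'.image (fun q => Ψ ⁻¹' (Metric.thickening (bN:ℝ) q)), EMetric.diam q
          ≤ ∑ q ∈ Q', EMetric.diam (Ψ ⁻¹' (Metric.thickening (bN:ℝ) q)) :=
            Golab.sum_image_le' _ _ _
        _ ≤ ∑ q ∈ Q', (EMetric.diam q + 2 * β) := Finset.sum_le_sum fun q _ => hpre q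
        _ = ∑ q ∈ Q', EMetric.diam q + (Q'.card : ℝ≥0∞) * (2 * β) := by
            rw [Finset.sum_add_distrib, Finset.sum_const, nsmul_eq_mul]
        _ ≤ c + Cb * (2 * β) := add_le_add hQ'sum (mul_le_mul_left hcard _)
        _ ≤ c + θ := add_le_add le_rfl hCb2β
        _ = M + (θ + θ) := by rw [hc]; ring
        _ ≤ M + 8 * θ := by
            refine add_le_add le_rfl ?_
            calc θ + θ = 2 * θ := (two_mul θ).symm
              _ ≤ 8 * θ := mul_le_mul_left (by norm_num) θ
        _ = M + ε k := by rw [h8θ]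
  choose Q hQcov hQdiam hQsum using hcover
  have hle : μH[(1:ℝ)] (Set.univ : Set L)
      ≤ atTop.liminf (fun k => ∑ i : {q // q ∈ Q k}, EMetric.diam (i : Set L) ^ (1:ℝ)) := by
    refine Measure.hausdorffMeasure_le_liminf_sum (1:ℝ) (Set.univ : Set L) ε hεtend
      (fun k (i : {q // q ∈ Q k}) => (i : Set L)) ?_ ?_
    · refine Filter.Eventually.of_forall fun k => ?_
      intro i
      exact hQdiam k _ i.2
    · refine Filter.Eventually.of_forall fun k => ?_
      intro z hz
      obtain ⟨q, hq, hzq⟩ := Set.mem_iUnion₂.1 (hQcov k hz)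
      exact Set.mem_iUnion.2 ⟨⟨q, hq⟩, hzq⟩
  refine hle.trans ?_
  have hsums : ∀ k, ∑ i : {q // q ∈ Q k}, EMetric.diam (i : Set L) ^ (1:ℝ) ≤ M + ε k := by
    intro k
    simp only [ENNReal.rpow_one]
    rw [Finset.sum_coe_sort (Q k) EMetric.diam]
    exact hQsum k
  refine (Filter.liminf_le_liminf (Filter.Eventually.of_forall hsums)).trans ?_
  have htend : Tendsto (fun k => M + ε k) atTop (nhds M) := by
    have := Filter.Tendsto.add (tendsto_const_nhds (x := M) (f := atTop)) hεtend
    rwa [add_zero] at this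
  exact htend.liminf_eq.le
end

section
/- (Hopf–Rinow for proper spaces, via Steiner realization) In a proper metric space X in which St({x,y},X) < ∞ for two points x, y, there exists a continuum C containing x and y with H^1(C) = St({x,y},X); in particular the two points can be joined by a compact connected set of minimal one-dimensional Hausdorff measure. -/
open Metric MeasureTheory
open scoped ENNReal NNReal

open Set Filter
open scoped Topology

set_option linter.unusedSectionVars false
set_option linter.unusedVariables false

section Aux

variable {X : Type*} [MetricSpace X] [MeasurableSpace X] [BorelSpace X]

lemma escape_lemma {D : Set X} (hD : IsPreconnected D) {z w : X} (hz : z ∈ D) (hw : w ∈ D)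
    {r : ℝ} (hr : 0 ≤ r) (hrw : r ≤ dist z w) :
    ENNReal.ofReal r ≤ μH[1] (D ∩ Metric.closedBall z r) := by
  have hf : LipschitzWith 1 (fun u : X => dist u z) := LipschitzWith.dist_left z
  have himg : Set.Icc 0 r ⊆ (fun u : X => dist u z) '' (D ∩ Metric.closedBall z r) := by
    intro t ht
    have h1 : IsPreconnected ((fun u : X => dist u z) '' D) :=
      hD.image _ hf.continuous.continuousOn
    have h0 : (0:ℝ) ∈ (fun u : X => dist u z) '' D := ⟨z, hz, dist_self z⟩
    have hdzw : dist w z ∈ (fun u : X => dist u z) '' D := ⟨w, hw, rfl⟩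
    have hsub : Set.Icc 0 (dist w z) ⊆ (fun u : X => dist u z) '' D :=
      h1.Icc_subset h0 hdzw
    obtain ⟨u, hu, hut⟩ := hsub ⟨ht.1, ht.2.trans (by rwa [dist_comm])⟩
    refine ⟨u, ⟨hu, ?_⟩, hut⟩
    simp only [Metric.mem_closedBall]; rw [show dist u z = t from hut]
    exact ht.2
  calc ENNReal.ofReal r = μH[1] (Set.Icc (0:ℝ) r) := by
        rw [MeasureTheory.hausdorffMeasure_real, Real.volume_Icc, sub_zero]
    _ ≤ μH[1] ((fun u : X => dist u z) '' (D ∩ Metric.closedBall z r)) := measure_mono himg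
    _ ≤ (1:ℝ≥0∞) ^ (1:ℝ) * μH[1] (D ∩ Metric.closedBall z r) :=
        hf.lipschitzOnWith.hausdorffMeasure_image_le (by norm_num)
    _ = μH[1] (D ∩ Metric.closedBall z r) := by rw [ENNReal.one_rpow, one_mul]

lemma dist_le_H1' {D : Set X} (hD : IsPreconnected D) {z w : X} (hz : z ∈ D) (hw : w ∈ D) :
    ENNReal.ofReal (dist z w) ≤ μH[1] D :=
  (escape_lemma hD hz hw dist_nonneg le_rfl).trans (measure_mono inter_subset_left)


def IsChainIn (D : Set X) (ε : ℝ) (x y : X) (n : ℕ) (p : ℕ → X) : Prop :=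
  p 0 = x ∧ p n = y ∧ (∀ i ≤ n, p i ∈ D) ∧ ∀ i < n, dist (p i) (p (i+1)) ≤ ε

lemma chain_exists {D : Set X} (hD : IsPreconnected D) {x y : X} (hx : x ∈ D) (hy : y ∈ D)
    {ε : ℝ} (hε : 0 < ε) : ∃ n p, IsChainIn D ε x y n p := by
  set R : Set X := {z | z ∈ D ∧ ∃ n p, IsChainIn D ε x z n p} with hR
  have hext : ∀ z ∈ R, ∀ w ∈ D, dist z w ≤ ε → w ∈ R := by
    rintro z ⟨hzD, n, p, hp0, hpn, hpD, hps⟩ w hwD hzw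
    refine ⟨hwD, n+1, fun i => if i ≤ n then p i else w, by simp [hp0], by simp, ?_, ?_⟩
    · intro i hi
      by_cases h : i ≤ n
      · simpa [h] using hpD i h
      · simpa [h] using hwD
    · intro i hi
      rcases Nat.lt_or_ge i n with h | h
      · simpa [Nat.le_of_lt h, Nat.succ_le_of_lt h] using hps i h
      · have hin : i = n := by omega
        subst hin
        simpa [hpn] using hzw
  have hxR : x ∈ R := ⟨hx, 0, fun _ => x, rfl, rfl, fun i hi => by simpa [Nat.le_zero.mp hi] using hx,
    fun i hi => by omega⟩
  by_contra hyR'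
  have hyR : y ∉ R := fun h => hyR' h.2
  set U : Set X := ⋃ z ∈ R, ball z ε
  set V : Set X := ⋃ z ∈ D \ R, ball z ε
  have hDUV : D ⊆ U ∪ V := by
    intro z hz
    by_cases h : z ∈ R
    · exact Or.inl (Set.mem_biUnion h (mem_ball_self hε))
    · exact Or.inr (Set.mem_biUnion ⟨hz, h⟩ (mem_ball_self hε))
  have h1 : (D ∩ U).Nonempty := ⟨x, hx, Set.mem_biUnion hxR (mem_ball_self hε)⟩
  have h2 : (D ∩ V).Nonempty := ⟨y, hy, Set.mem_biUnion ⟨hy, hyR⟩ (mem_ball_self hε)⟩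
  obtain ⟨w, hwD, hwU, hwV⟩ := hD U V (isOpen_biUnion fun _ _ => isOpen_ball)
    (isOpen_biUnion fun _ _ => isOpen_ball) hDUV h1 h2
  obtain ⟨z, hzR, hwz⟩ := Set.mem_iUnion₂.mp hwU
  obtain ⟨z', hz'DR, hwz'⟩ := Set.mem_iUnion₂.mp hwV
  have hwR : w ∈ R := hext z hzR w hwD (by rw [dist_comm]; exact le_of_lt (mem_ball.mp hwz))
  exact hz'DR.2 (hext w hwR z' hz'DR.1 (le_of_lt (mem_ball.mp hwz')))

lemma chain_min {D : Set X} (hD : IsPreconnected D) {x y : X} (hx : x ∈ D) (hy : y ∈ D)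
    {ε : ℝ} (hε : 0 < ε) :
    ∃ n p, IsChainIn D ε x y n p ∧ ∀ i j, i + 2 ≤ j → j ≤ n → ε < dist (p i) (p j) := by
  classical
  have hne : ∃ n, ∃ p, IsChainIn D ε x y n p := chain_exists hD hx hy hε
  set N := Nat.find hne with hN
  obtain ⟨p, hp⟩ := Nat.find_spec hne
  refine ⟨N, p, hp, ?_⟩
  intro i j hij hj
  by_contra hle
  push_neg at hle
  obtain ⟨hp0, hpn, hpD, hps⟩ := hp
  set n' := N - (j - i - 1) with hn'
  have hjN : j ≤ N := hj
  have hkey : ∃ p', IsChainIn D ε x y n' p' := by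
    refine ⟨fun k => if k ≤ i then p k else p (k + (j - i - 1)), by simp [hp0], ?_, ?_, ?_⟩
    · have : ¬ n' ≤ i := by omega
      simp only [this, if_false]
      rw [show n' + (j - i - 1) = N by omega, hpn]
    · intro k hk
      by_cases h : k ≤ i
      · exact by simpa [h] using hpD k (by omega)
      · exact by simpa [h] using hpD (k + (j - i - 1)) (by omega)
    · intro k hk
      rcases Nat.lt_or_ge k i with h | h
      · simpa [Nat.le_of_lt h, Nat.succ_le_of_lt h] using hps k (by omega)
      · by_cases h2 : k ≤ i
        · have hk2 : k = i := by omega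
          have h1 : ¬ (k + 1 ≤ i) := by omega
          simp only [if_pos h2, if_neg h1]
          rw [hk2, show i + 1 + (j - i - 1) = j by omega]
          exact hle
        · have h1 : ¬ (k + 1 ≤ i) := by omega
          simp only [if_neg h1, if_neg h2]
          rw [show k + 1 + (j - i - 1) = (k + (j-i-1)) + 1 by omega]
          exact hps (k + (j - i - 1)) (by omega)
  have : N ≤ n' := Nat.find_min' hne hkey
  omega

lemma chain_triangle {p : ℕ → X} {ε : ℝ} {n : ℕ} (h : ∀ k < n, dist (p k) (p (k+1)) ≤ ε)
    (hε : 0 ≤ ε) {i j : ℕ} (hij : i ≤ j) (hj : j ≤ n) :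
    dist (p i) (p j) ≤ ((j - i : ℕ) : ℝ) * ε := by
  induction j, hij using Nat.le_induction with
  | base => simp
  | succ j hij ih =>
    calc dist (p i) (p (j+1)) ≤ dist (p i) (p j) + dist (p j) (p (j+1)) := dist_triangle _ _ _
      _ ≤ ((j - i : ℕ) : ℝ) * ε + ε := by
          gcongr
          · exact ih (by omega)
          · exact h j (by omega)
      _ ≤ ((j + 1 - i : ℕ) : ℝ) * ε := by
          have h3 : j + 1 - i = (j - i) + 1 := by omega
          rw [h3]
          push_cast
          nlinarith


lemma chain_count {D : Set X} (hDcl : IsClosed D) (hD : IsPreconnected D)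
    {x y : X} (hx : x ∈ D) (hy : y ∈ D) {ε : ℝ} (hε : 0 < ε) (hεd : ε < dist x y)
    (hfin : μH[1] D ≠ ⊤) :
    ∃ n p, IsChainIn D ε x y n p ∧ 0 < n ∧ (n:ℝ) * ε ≤ 4 * (μH[1] D).toReal := by
  obtain ⟨n, p, hp, hsep⟩ := chain_min hD hx hy hε
  have hn0 : 0 < n := by
    rcases Nat.eq_zero_or_pos n with h | h
    · exfalso
      subst h
      have : x = y := hp.1.symm.trans hp.2.1
      rw [this] at hεd
      simp at hεd
      linarith
    · exact h
  refine ⟨n, p, hp, hn0, ?_⟩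
  obtain ⟨hp0, hpn, hpD, hps⟩ := hp
  set K := n / 2 + 1 with hK
  set t : ℕ → Set X := fun i => D ∩ Metric.closedBall (p (2*i)) (ε/2) with ht
  have hdisj : (Finset.range K : Set ℕ).PairwiseDisjoint t := by
    intro i hi j hj hij
    have key : ∀ a b : ℕ, a < b → b < K → Disjoint (t a) (t b) := by
      intro a b hab hbK
      have hsepab : ε < dist (p (2*a)) (p (2*b)) :=
        hsep (2*a) (2*b) (by omega) (by simp only [Finset.coe_range, mem_Iio] at *; omega)
      rw [Set.disjoint_left]
      rintro u ⟨-, hu1⟩ ⟨-, hu2⟩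
      have h1 : dist u (p (2*a)) ≤ ε/2 := mem_closedBall.mp hu1
      have h2 : dist u (p (2*b)) ≤ ε/2 := mem_closedBall.mp hu2
      have : dist (p (2*a)) (p (2*b)) ≤ ε := by
        calc dist (p (2*a)) (p (2*b)) ≤ dist (p (2*a)) u + dist u (p (2*b)) := dist_triangle _ _ _
          _ ≤ ε/2 + ε/2 := by rw [dist_comm (p (2*a)) u]; gcongr
          _ = ε := by ring
      linarith
    simp only [Finset.coe_range, mem_Iio] at hi hj
    rcases Nat.lt_or_ge i j with h | h
    · exact key i j h hj
    · exact (key j i (by omega) hi).symm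
  have hmeas : ∀ i ∈ Finset.range K, MeasurableSet (t i) := fun i _ =>
    (hDcl.inter Metric.isClosed_closedBall).measurableSet
  have hlow : ∀ i ∈ Finset.range K, ENNReal.ofReal (ε/2) ≤ μH[1] (t i) := by
    intro i hi
    simp only [Finset.mem_range] at hi
    have hpiD : p (2*i) ∈ D := hpD (2*i) (by omega)
    have hw : ∃ w ∈ D, ε/2 ≤ dist (p (2*i)) w := by
      by_contra hcon
      push_neg at hcon
      have h1 := hcon x hx
      have h2 := hcon y hy
      have : dist x y < ε := by
        calc dist x y ≤ dist x (p (2*i)) + dist (p (2*i)) y := dist_triangle _ _ _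
          _ < ε/2 + ε/2 := by rw [dist_comm x (p (2*i))]; gcongr
          _ = ε := by ring
      linarith
    obtain ⟨w, hwD, hww⟩ := hw
    exact escape_lemma hD hpiD hwD (by linarith) hww
  have hsum : (K : ℝ≥0∞) * ENNReal.ofReal (ε/2) ≤ μH[1] D := by
    calc (K : ℝ≥0∞) * ENNReal.ofReal (ε/2)
        = ∑ _i ∈ Finset.range K, ENNReal.ofReal (ε/2) := by
          rw [Finset.sum_const, Finset.card_range, nsmul_eq_mul]
      _ ≤ ∑ i ∈ Finset.range K, μH[1] (t i) := Finset.sum_le_sum hlow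
      _ = μH[1] (⋃ i ∈ Finset.range K, t i) := (measure_biUnion_finset hdisj hmeas).symm
      _ ≤ μH[1] D := measure_mono (by
          intro u hu
          simp only [Set.mem_iUnion] at hu
          obtain ⟨i, _, hui, -⟩ := hu
          exact hui)
  have hreal : (K : ℝ) * (ε/2) ≤ (μH[1] D).toReal := by
    have h1 : ENNReal.ofReal ((K:ℝ) * (ε/2)) ≤ μH[1] D := by
      rw [ENNReal.ofReal_mul (by positivity)]
      calc ENNReal.ofReal (K:ℝ) * ENNReal.ofReal (ε/2)
          = (K : ℝ≥0∞) * ENNReal.ofReal (ε/2) := by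
            rw [ENNReal.ofReal_natCast]
        _ ≤ μH[1] D := hsum
    exact (ENNReal.ofReal_le_iff_le_toReal hfin).mp h1
  have hnK : (n : ℝ) ≤ 2 * K := by
    have : n ≤ 2 * K := by omega
    calc (n:ℝ) ≤ ((2*K : ℕ) : ℝ) := by exact_mod_cast this
      _ = 2 * K := by push_cast; ring
  calc (n:ℝ) * ε ≤ (2*(K:ℝ)) * ε := by
        apply mul_le_mul_of_nonneg_right hnK (le_of_lt hε)
    _ = 4 * ((K:ℝ) * (ε/2)) := by ring
    _ ≤ 4 * (μH[1] D).toReal := by linarith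


omit [MeasurableSpace X] [BorelSpace X] in
lemma ultra_limit {K : Set X} (hK : IsCompact K) (U : Ultrafilter ℕ)
    (q : ℕ → ℝ → X) (hq : ∀ j, ∀ t ∈ Set.Icc (0:ℝ) 1, q j t ∈ K) :
    ∃ g : ℝ → X, (∀ t ∈ Set.Icc (0:ℝ) 1, g t ∈ K) ∧
      ∀ t ∈ Set.Icc (0:ℝ) 1, Tendsto (fun j => q j t) (U : Filter ℕ) (𝓝 (g t)) := by
  have hch : ∀ t : ℝ, ∃ z : X, t ∈ Set.Icc (0:ℝ) 1 →
      (z ∈ K ∧ Tendsto (fun j => q j t) (U : Filter ℕ) (𝓝 z)) := by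
    intro t
    by_cases ht : t ∈ Set.Icc (0:ℝ) 1
    · have hle : (Ultrafilter.map (fun j => q j t) U : Filter X) ≤ Filter.principal K := by
        rw [Filter.le_principal_iff, Ultrafilter.coe_map, Filter.mem_map]
        exact Filter.univ_mem' (fun j => hq j t ht)
      obtain ⟨z, hzK, hz⟩ := hK.ultrafilter_le_nhds (Ultrafilter.map (fun j => q j t) U) hle
      rw [Ultrafilter.coe_map] at hz
      exact ⟨z, fun _ => ⟨hzK, hz⟩⟩
    · exact ⟨q 0 t, fun h => absurd h ht⟩
  choose g hg using hch
  exact ⟨g, fun t ht => (hg t ht).1, fun t ht => (hg t ht).2⟩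

lemma exists_lipschitz_curve {D : Set X} (hDc : IsCompact D) (hD : IsPreconnected D)
    {x y : X} (hx : x ∈ D) (hy : y ∈ D) (hxy : x ≠ y) (hfin : μH[1] D ≠ ⊤) :
    ∃ (L : ℝ≥0) (f : ℝ → X), LipschitzOnWith L f (Set.Icc 0 1) ∧ f 0 = x ∧ f 1 = y ∧
      ∀ t ∈ Set.Icc (0:ℝ) 1, f t ∈ D := by
  set B : ℝ := 4 * (μH[1] D).toReal with hB
  have hB0 : 0 ≤ B := by positivity
  have hd : 0 < dist x y := dist_pos.mpr hxy
  set ε : ℕ → ℝ := fun j => dist x y / (j + 2) with hεdef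
  have hε : ∀ j : ℕ, 0 < ε j ∧ ε j < dist x y := by
    intro j
    constructor
    · apply div_pos hd
      positivity
    · rw [div_lt_iff₀ (by positivity)]
      nlinarith [hd]
  choose n p hchain hn0 hbound using
    fun j => chain_count hDc.isClosed hD hx hy (hε j).1 (hε j).2 hfin
  set q : ℕ → ℝ → X := fun j t => p j (min (Nat.floor (t * n j)) (n j)) with hq
  have hqD : ∀ j, ∀ t ∈ Set.Icc (0:ℝ) 1, q j t ∈ D :=
    fun j t _ => (hchain j).2.2.1 _ (min_le_right _ _)
  -- quasi-Lipschitz estimate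
  have hquasi : ∀ j, ∀ s ∈ Set.Icc (0:ℝ) 1, ∀ t ∈ Set.Icc (0:ℝ) 1, s ≤ t →
      dist (q j s) (q j t) ≤ B * (t - s) + ε j := by
    intro j s hs t ht hst
    set i := min (Nat.floor (s * n j)) (n j) with hi
    set k := min (Nat.floor (t * n j)) (n j) with hk
    have hik : i ≤ k := by
      apply min_le_min _ le_rfl
      apply Nat.floor_le_floor
      nlinarith [hs.1]
    have hkn : k ≤ n j := min_le_right _ _
    have hdistik : dist (p j i) (p j k) ≤ ((k - i : ℕ) : ℝ) * ε j :=
      chain_triangle (hchain j).2.2.2 (le_of_lt (hε j).1) hik hkn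
    have hki : ((k - i : ℕ) : ℝ) ≤ (n j : ℝ) * (t - s) + 1 := by
      by_cases hcase : Nat.floor (s * n j) ≥ n j
      · have hieq : i = n j := by rw [hi]; omega
        have : k = i := by omega
        rw [this]
        simp only [Nat.sub_self, Nat.cast_zero]
        have : (0:ℝ) ≤ (n j : ℝ) * (t - s) := by
          apply mul_nonneg (Nat.cast_nonneg _)
          linarith
        linarith
      · push_neg at hcase
        have hieq : i = Nat.floor (s * n j) := by rw [hi]; omega
        have h1 : (k:ℝ) ≤ t * n j := by
          calc (k:ℝ) ≤ (Nat.floor (t * n j) : ℝ) := by exact_mod_cast min_le_left _ _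
            _ ≤ t * n j := Nat.floor_le (by nlinarith [ht.1])
        have h2 : s * n j - 1 < (i:ℝ) := by
          rw [hieq]
          have := Nat.lt_floor_add_one (s * (n j : ℝ))
          push_cast
          linarith [Nat.lt_floor_add_one (s * (n j : ℝ))]
        have h3 : ((k - i : ℕ) : ℝ) = (k:ℝ) - (i:ℝ) := by
          push_cast [Nat.cast_sub hik]
          ring
        rw [h3]
        nlinarith
    calc dist (q j s) (q j t) ≤ ((k - i : ℕ) : ℝ) * ε j := hdistik
      _ ≤ ((n j : ℝ) * (t - s) + 1) * ε j := by
          apply mul_le_mul_of_nonneg_right hki (le_of_lt (hε j).1)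
      _ = ((n j : ℝ) * ε j) * (t - s) + ε j := by ring
      _ ≤ B * (t - s) + ε j := by
          have := hbound j
          nlinarith [sub_nonneg.mpr hst, (hε j).1]
  -- ultrafilter limit
  set U : Ultrafilter ℕ := Ultrafilter.of Filter.atTop with hU
  have hUle : (U : Filter ℕ) ≤ Filter.atTop := Ultrafilter.of_le _
  obtain ⟨g, hgD, hgT⟩ := ultra_limit hDc U q hqD
  have hεlim : Tendsto ε Filter.atTop (𝓝 0) := by
    rw [hεdef]
    apply Filter.Tendsto.div_atTop tendsto_const_nhds
    apply Filter.tendsto_atTop_add_const_right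
    exact tendsto_natCast_atTop_atTop
  have hgdist : ∀ s ∈ Set.Icc (0:ℝ) 1, ∀ t ∈ Set.Icc (0:ℝ) 1, s ≤ t →
      dist (g s) (g t) ≤ B * (t - s) := by
    intro s hs t ht hst
    have h1 : Tendsto (fun j => dist (q j s) (q j t)) (U : Filter ℕ)
        (𝓝 (dist (g s) (g t))) := (hgT s hs).dist (hgT t ht)
    have h2 : Tendsto (fun j => B * (t - s) + ε j) (U : Filter ℕ) (𝓝 (B * (t - s))) := by
      have : Tendsto (fun j => B * (t - s) + ε j) Filter.atTop (𝓝 (B * (t - s) + 0)) :=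
        tendsto_const_nhds.add hεlim
      rw [add_zero] at this
      exact this.mono_left hUle
    exact le_of_tendsto_of_tendsto' h1 h2 (fun j => hquasi j s hs t ht hst)
  refine ⟨B.toNNReal, g, ?_, ?_, ?_, hgD⟩
  · rw [lipschitzOnWith_iff_dist_le_mul]
    intro s hs t ht
    rw [Real.coe_toNNReal _ hB0, Real.dist_eq]
    rcases le_total s t with h | h
    · rw [abs_of_nonpos (by linarith), show B * -(s-t) = B * (t-s) by ring]
      exact hgdist s hs t ht h
    · rw [abs_of_nonneg (by linarith)]
      have := hgdist t ht s hs h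
      rw [dist_comm] at this
      linarith
  · have hconst : ∀ j, q j 0 = x := by
      intro j
      simp only [hq, zero_mul, Nat.floor_zero, Nat.zero_min]
      exact (hchain j).1
    have : Tendsto (fun j => q j 0) (U : Filter ℕ) (𝓝 x) := by
      simp only [hconst]
      exact tendsto_const_nhds
    exact tendsto_nhds_unique (hgT 0 (by norm_num)) this
  · have hconst : ∀ j, q j 1 = y := by
      intro j
      simp only [hq, one_mul, Nat.floor_natCast, min_self]
      exact (hchain j).2.1
    have : Tendsto (fun j => q j 1) (U : Filter ℕ) (𝓝 y) := by
      simp only [hconst]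
      exact tendsto_const_nhds
    exact tendsto_nhds_unique (hgT 1 (by norm_num)) this


/-- The set of (coerced) Lipschitz constants of curves from `x` to `y` through `D`. -/
def CurveSet (D : Set X) (x y : X) : Set ℝ≥0∞ :=
  {L : ℝ≥0∞ | ∃ (L' : ℝ≥0) (f : ℝ → X), L = (L' : ℝ≥0∞) ∧
    LipschitzOnWith L' f (Set.Icc 0 1) ∧ f 0 = x ∧ f 1 = y ∧
    ∀ t ∈ Set.Icc (0:ℝ) 1, f t ∈ D}

lemma curveSet_inf_ne_top {D : Set X} {x y : X} (hA : (CurveSet D x y).Nonempty) :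
    sInf (CurveSet D x y) ≠ ⊤ := by
  obtain ⟨L, hL⟩ := hA
  intro h
  have h1 : sInf (CurveSet D x y) ≤ L := sInf_le hL
  obtain ⟨L', f, rfl, -⟩ := hL
  rw [h, top_le_iff] at h1
  exact ENNReal.coe_ne_top h1

lemma exists_min_curve {D : Set X} (hDc : IsCompact D) {x y : X}
    (hA : (CurveSet D x y).Nonempty) :
    ∃ g : ℝ → X, LipschitzOnWith (sInf (CurveSet D x y)).toNNReal g (Set.Icc 0 1) ∧
      g 0 = x ∧ g 1 = y ∧ (∀ t ∈ Set.Icc (0:ℝ) 1, g t ∈ D) := by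
  set lam := sInf (CurveSet D x y) with hlam
  have hlamtop : lam ≠ ⊤ := curveSet_inf_ne_top hA
  have hsel : ∀ j : ℕ, ∃ L ∈ CurveSet D x y, L < lam + ENNReal.ofReal (1/(j+1)) := by
    intro j
    apply sInf_lt_iff.mp
    exact ENNReal.lt_add_right hlamtop (by positivity)
  choose L hLmem hLlt using hsel
  have hsel2 : ∀ j : ℕ, ∃ (L' : ℝ≥0) (f : ℝ → X), L j = (L' : ℝ≥0∞) ∧
      LipschitzOnWith L' f (Set.Icc 0 1) ∧ f 0 = x ∧ f 1 = y ∧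
      ∀ t ∈ Set.Icc (0:ℝ) 1, f t ∈ D := fun j => hLmem j
  choose L' f hL'eq hlip hf0 hf1 hfD using hsel2
  have hL'bound : ∀ j : ℕ, (L' j : ℝ) ≤ lam.toReal + 1/(j+1) := by
    intro j
    have h1 : (L' j : ℝ≥0∞) < lam + ENNReal.ofReal (1/(j+1)) := (hL'eq j) ▸ hLlt j
    have h2 : (lam + ENNReal.ofReal (1/(j+1))).toReal = lam.toReal + 1/(j+1) := by
      rw [ENNReal.toReal_add hlamtop ENNReal.ofReal_ne_top, ENNReal.toReal_ofReal (by positivity)]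
    calc (L' j : ℝ) = ((L' j : ℝ≥0∞)).toReal := by simp
      _ ≤ (lam + ENNReal.ofReal (1/(j+1))).toReal := by
          apply ENNReal.toReal_mono _ h1.le
          exact ENNReal.add_ne_top.mpr ⟨hlamtop, ENNReal.ofReal_ne_top⟩
      _ = lam.toReal + 1/(j+1) := h2
  set U : Ultrafilter ℕ := Ultrafilter.of Filter.atTop with hU
  have hUle : (U : Filter ℕ) ≤ Filter.atTop := Ultrafilter.of_le _
  obtain ⟨g, hgD, hgT⟩ := ultra_limit hDc U f hfD
  have hgdist : ∀ s ∈ Set.Icc (0:ℝ) 1, ∀ t ∈ Set.Icc (0:ℝ) 1,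
      dist (g s) (g t) ≤ lam.toReal * dist s t := by
    intro s hs t ht
    have h1 : Tendsto (fun j => dist (f j s) (f j t)) (U : Filter ℕ)
        (𝓝 (dist (g s) (g t))) := (hgT s hs).dist (hgT t ht)
    have h2 : Tendsto (fun j : ℕ => (lam.toReal + 1/(j+1)) * dist s t) (U : Filter ℕ)
        (𝓝 (lam.toReal * dist s t)) := by
      have ha : Tendsto (fun j : ℕ => lam.toReal + 1/(j+1)) Filter.atTop (𝓝 (lam.toReal + 0)) :=
        tendsto_const_nhds.add tendsto_one_div_add_atTop_nhds_zero_nat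
      rw [add_zero] at ha
      exact (ha.mul_const (dist s t)).mono_left hUle
    apply le_of_tendsto_of_tendsto' h1 h2
    intro j
    calc dist (f j s) (f j t) ≤ (L' j : ℝ) * dist s t :=
          lipschitzOnWith_iff_dist_le_mul.mp (hlip j) s hs t ht
      _ ≤ (lam.toReal + 1/(j+1)) * dist s t := by
          apply mul_le_mul_of_nonneg_right (hL'bound j) dist_nonneg
  refine ⟨g, ?_, ?_, ?_, hgD⟩
  · rw [lipschitzOnWith_iff_dist_le_mul]
    intro s hs t ht
    have : (lam.toNNReal : ℝ) = lam.toReal := rfl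
    rw [this]
    exact hgdist s hs t ht
  · exact tendsto_nhds_unique (hgT 0 (by norm_num))
      (by simp only [hf0]; exact tendsto_const_nhds)
  · exact tendsto_nhds_unique (hgT 1 (by norm_num))
      (by simp only [hf1]; exact tendsto_const_nhds)

lemma min_curve_injOn {D : Set X} {x y : X} (hxy : x ≠ y)
    (hA : (CurveSet D x y).Nonempty)
    {g : ℝ → X} (hg : LipschitzOnWith (sInf (CurveSet D x y)).toNNReal g (Set.Icc 0 1))
    (hg0 : g 0 = x) (hg1 : g 1 = y) (hgD : ∀ t ∈ Set.Icc (0:ℝ) 1, g t ∈ D) :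
    Set.InjOn g (Set.Icc 0 1) := by
  set lam := sInf (CurveSet D x y) with hlam
  have hlamtop : lam ≠ ⊤ := curveSet_inf_ne_top hA
  have hlamne : lam ≠ 0 := by
    intro h0
    apply hxy
    have := lipschitzOnWith_iff_dist_le_mul.mp hg 0 (by norm_num) 1 (by norm_num)
    rw [h0] at this
    simp only [ENNReal.toNNReal_zero, NNReal.coe_zero, zero_mul] at this
    have : dist (g 0) (g 1) = 0 := le_antisymm this dist_nonneg
    rw [← hg0, ← hg1]
    exact dist_le_zero.mp this.le
  have lamr : ℝ := lam.toReal
  have key : ∀ s t : ℝ, s ∈ Set.Icc (0:ℝ) 1 → t ∈ Set.Icc (0:ℝ) 1 → s < t → g s ≠ g t := by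
    intro s t hs ht hst hgst
    set c : ℝ := s + 1 - t with hc
    have hc0 : 0 ≤ c := by
      have := hs.1; have := ht.2; simp only [hc]; linarith
    have hc1 : c < 1 := by simp only [hc]; linarith
    have hcne : c ≠ 0 := by
      intro h0
      have hs0 : s = 0 := by have := hs.1; have := ht.2; simp only [hc] at h0; linarith
      have ht1 : t = 1 := by have := hs.1; have := ht.2; simp only [hc] at h0; linarith
      apply hxy
      rw [← hg0, ← hg1, ← hs0, ← ht1, hgst]
    have hcpos : 0 < c := lt_of_le_of_ne hc0 (Ne.symm hcne)
    set σ : ℝ → ℝ := fun u => if u * c ≤ s then u * c else u * c + (t - s) with hσ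
    have hσmem : ∀ u ∈ Set.Icc (0:ℝ) 1, σ u ∈ Set.Icc (0:ℝ) 1 := by
      intro u hu
      simp only [hσ]
      by_cases hb : u * c ≤ s
      · rw [if_pos hb]
        constructor
        · exact mul_nonneg hu.1 hc0
        · have := hs.2; linarith
      · rw [if_neg hb]
        push_neg at hb
        constructor
        · have := hs.1; nlinarith
        · have huc : u * c ≤ c := by nlinarith [hu.2]
          simp only [hc] at huc ⊢; linarith
    set lr : ℝ := lam.toReal with hlr
    have hlr0 : 0 ≤ lr := ENNReal.toReal_nonneg
    have hgl : ∀ a ∈ Set.Icc (0:ℝ) 1, ∀ b ∈ Set.Icc (0:ℝ) 1, dist (g a) (g b) ≤ lr * |a - b| := by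
      intro a ha b hb
      have := lipschitzOnWith_iff_dist_le_mul.mp hg a ha b hb
      rwa [Real.dist_eq] at this
    have hσdist : ∀ u ∈ Set.Icc (0:ℝ) 1, ∀ v ∈ Set.Icc (0:ℝ) 1, u ≤ v →
        dist (g (σ u)) (g (σ v)) ≤ (lr * c) * (v - u) := by
      intro u hu v hv huv
      have huc : u * c ≤ v * c := by nlinarith
      by_cases hbu : u * c ≤ s
      · by_cases hbv : v * c ≤ s
        · have hu' : u * c ∈ Set.Icc (0:ℝ) 1 := by
            have := hσmem u hu; simpa [hσ, if_pos hbu] using this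
          have hv' : v * c ∈ Set.Icc (0:ℝ) 1 := by
            have := hσmem v hv; simpa [hσ, if_pos hbv] using this
          simp only [hσ, if_pos hbu, if_pos hbv]
          calc dist (g (u*c)) (g (v*c)) ≤ lr * |u*c - v*c| := hgl _ hu' _ hv'
            _ = (lr * c) * (v - u) := by
                rw [abs_of_nonpos (by linarith)]; ring
        · push_neg at hbv
          have hu' : u * c ∈ Set.Icc (0:ℝ) 1 := by
            have := hσmem u hu; simpa [hσ, if_pos hbu] using this
          have hv' : v * c + (t - s) ∈ Set.Icc (0:ℝ) 1 := by
            have := hσmem v hv; simpa [hσ, if_neg (not_le.mpr hbv)] using this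
          simp only [hσ, if_pos hbu, if_neg (not_le.mpr hbv)]
          calc dist (g (u*c)) (g (v*c + (t-s)))
              ≤ dist (g (u*c)) (g s) + dist (g s) (g (v*c + (t-s))) := dist_triangle _ _ _
            _ = dist (g (u*c)) (g s) + dist (g t) (g (v*c + (t-s))) := by rw [hgst]
            _ ≤ lr * |u*c - s| + lr * |t - (v*c + (t-s))| := by
                gcongr
                · exact hgl _ hu' _ hs
                · exact hgl _ ht _ hv'
            _ = (lr * c) * (v - u) := by
                rw [abs_of_nonpos (by linarith), abs_of_nonpos (by linarith)]; ring
      · push_neg at hbu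
        have hbv : ¬ (v * c ≤ s) := by push_neg; linarith
        have hu' : u * c + (t - s) ∈ Set.Icc (0:ℝ) 1 := by
          have := hσmem u hu; simpa [hσ, if_neg (not_le.mpr hbu)] using this
        have hv' : v * c + (t - s) ∈ Set.Icc (0:ℝ) 1 := by
          have := hσmem v hv; simpa [hσ, if_neg hbv] using this
        simp only [hσ, if_neg (not_le.mpr hbu), if_neg hbv]
        calc dist (g (u*c + (t-s))) (g (v*c + (t-s)))
            ≤ lr * |(u*c + (t-s)) - (v*c + (t-s))| := hgl _ hu' _ hv'
          _ = (lr * c) * (v - u) := by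
              rw [show (u*c + (t-s)) - (v*c + (t-s)) = u*c - v*c by ring,
                abs_of_nonpos (by linarith)]; ring
    set K' : ℝ≥0 := lam.toNNReal * c.toNNReal with hK'
    have hK'r : (K' : ℝ) = lr * c := by
      simp only [hK', NNReal.coe_mul, Real.coe_toNNReal _ hc0]
      rfl
    have hhlip : LipschitzOnWith K' (g ∘ σ) (Set.Icc 0 1) := by
      rw [lipschitzOnWith_iff_dist_le_mul]
      intro a ha b hb
      simp only [Function.comp_apply]
      rw [hK'r, Real.dist_eq]
      rcases le_total a b with h | h
      · rw [abs_of_nonpos (by linarith), show lr * c * -(a-b) = lr * c * (b-a) by ring]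
        exact hσdist a ha b hb h
      · rw [abs_of_nonneg (by linarith)]
        rw [dist_comm]
        have h2 := hσdist b hb a ha h
        rw [show lr * c * (a - b) = lr * c * (a - b) from rfl]
        exact h2
    have hh0 : (g ∘ σ) 0 = x := by
      have : σ 0 = 0 := by simp only [hσ, zero_mul, if_pos hs.1]
      simp [this, hg0]
    have hh1 : (g ∘ σ) 1 = y := by
      simp only [Function.comp_apply, hσ, one_mul]
      by_cases hb : c ≤ s
      · rw [if_pos hb]
        have hceq : c = s := by
          have ht1 : (1:ℝ) ≤ t := by simp only [hc] at hb; linarith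
          have := ht.2
          have : t = 1 := le_antisymm this ht1
          simp only [hc, this]; ring
        rw [hceq, hgst]
        have : t = 1 := by
          have ht1 : (1:ℝ) ≤ t := by simp only [hc] at hb; linarith
          exact le_antisymm ht.2 ht1
        rw [this, hg1]
      · rw [if_neg hb]
        rw [show c + (t - s) = 1 by simp only [hc]; ring, hg1]
    have hmem : (K' : ℝ≥0∞) ∈ CurveSet D x y := by
      refine ⟨K', g ∘ σ, rfl, hhlip, hh0, hh1, ?_⟩
      intro u hu
      exact hgD (σ u) (hσmem u hu)
    have hlt : (K' : ℝ≥0∞) < lam := by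
      have h1 : (K' : ℝ≥0∞) = lam * (c.toNNReal : ℝ≥0∞) := by
        rw [hK', ENNReal.coe_mul, ENNReal.coe_toNNReal hlamtop]
      rw [h1]
      have h2 : (c.toNNReal : ℝ≥0∞) < 1 := by
        rw [show (1:ℝ≥0∞) = ((1:ℝ≥0):ℝ≥0∞) by simp, ENNReal.coe_lt_coe]
        rw [← Real.toNNReal_one]
        exact (Real.toNNReal_lt_toNNReal_iff one_pos).mpr hc1
      calc lam * (c.toNNReal : ℝ≥0∞) < lam * 1 :=
            (ENNReal.mul_lt_mul_iff_right hlamne hlamtop).mpr h2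
        _ = lam := mul_one _
    exact absurd (sInf_le hmem) (not_le.mpr hlt)
  intro s hs t ht hst
  rcases lt_trichotomy s t with h | h | h
  · exact absurd hst (key s t hs ht h)
  · exact h
  · exact absurd hst.symm (key t s ht hs h)


lemma H1_singleton_zero (a : X) : μH[1] ({a} : Set X) = 0 := by
  have hlip : LipschitzWith 0 (fun _ : ℝ => a) := LipschitzWith.const' a
  have h2 := (hlip.lipschitzOnWith (s := {(0:ℝ)})).hausdorffMeasure_image_le
    (d := 1) (by norm_num)
  simp only [Set.image_singleton] at h2
  refine le_antisymm (h2.trans ?_) zero_le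
  rw [ENNReal.coe_zero, ENNReal.zero_rpow_of_pos one_pos, zero_mul]

omit [MeasurableSpace X] [BorelSpace X] in
lemma evar_lip {g : ℝ → X} {L : ℝ≥0} {a b : ℝ} (hg : LipschitzOnWith L g (Set.Icc a b)) :
    eVariationOn g (Set.Icc a b) ≤ ENNReal.ofReal (L * (b - a)) := by
  by_cases hab : a ≤ b
  · unfold eVariationOn
    apply iSup_le
    rintro ⟨n, u, hu, us⟩
    calc ∑ i ∈ Finset.range n, edist (g (u (i+1))) (g (u i))
        ≤ ∑ i ∈ Finset.range n, ENNReal.ofReal ((L:ℝ) * (u (i+1) - u i)) := by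
          apply Finset.sum_le_sum
          intro i _
          rw [edist_dist]
          apply ENNReal.ofReal_le_ofReal
          have h1 := lipschitzOnWith_iff_dist_le_mul.mp hg (u (i+1)) (us _) (u i) (us _)
          rwa [Real.dist_eq, abs_of_nonneg (sub_nonneg.mpr (hu (Nat.le_succ i)))] at h1
      _ = ENNReal.ofReal (∑ i ∈ Finset.range n, (L:ℝ) * (u (i+1) - u i)) :=
          (ENNReal.ofReal_sum_of_nonneg (fun i _ =>
            mul_nonneg (NNReal.coe_nonneg L) (sub_nonneg.mpr (hu (Nat.le_succ i))))).symm
      _ ≤ ENNReal.ofReal ((L:ℝ) * (b - a)) := by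
          apply ENNReal.ofReal_le_ofReal
          rw [← Finset.mul_sum]
          have htel : ∑ i ∈ Finset.range n, (u (i+1) - u i) = u n - u 0 :=
            Finset.sum_range_sub (fun i => u i) n
          rw [htel]
          apply mul_le_mul_of_nonneg_left _ (NNReal.coe_nonneg L)
          have h1 := (us n).2
          have h2 := (us 0).1
          linarith
  · rw [Set.Icc_eq_empty hab, eVariationOn.subsingleton g subsingleton_empty]
    exact zero_le

omit [MeasurableSpace X] [BorelSpace X] in
lemma evar_Icc_add (g : ℝ → X) {a b c : ℝ} (hab : a ≤ b) (hbc : b ≤ c) :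
    eVariationOn g (Set.Icc a b) + eVariationOn g (Set.Icc b c) =
      eVariationOn g (Set.Icc a c) := by
  have h := eVariationOn.Icc_add_Icc g (s := Set.univ) hab hbc (Set.mem_univ b)
  simpa only [Set.univ_inter] using h

lemma evar_le_H1 {g : ℝ → X} (hcont : ContinuousOn g (Set.Icc 0 1))
    (hinj : Set.InjOn g (Set.Icc 0 1)) :
    eVariationOn g (Set.Icc 0 1) ≤ μH[1] (g '' Set.Icc 0 1) := by
  unfold eVariationOn
  apply iSup_le
  rintro ⟨n, u, hu, us⟩
  set A : ℕ → Set X := fun i => g '' Set.Icc (u i) (u (i+1)) with hA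
  have hIccsub : ∀ i, Set.Icc (u i) (u (i+1)) ⊆ Set.Icc (0:ℝ) 1 :=
    fun i => Set.Icc_subset_Icc (us i).1 (us (i+1)).2
  have hAsub : ∀ i, A i ⊆ g '' Set.Icc 0 1 := fun i => Set.image_mono (hIccsub i)
  have hAcomp : ∀ i, IsCompact (A i) := fun i =>
    isCompact_Icc.image_of_continuousOn (hcont.mono (hIccsub i))
  have hedist : ∀ i, edist (g (u (i+1))) (g (u i)) ≤ μH[1] (A i) := by
    intro i
    rw [edist_dist]
    apply dist_le_H1' (isPreconnected_Icc.image g (hcont.mono (hIccsub i)))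
    · exact ⟨u (i+1), ⟨hu (Nat.le_succ i), le_rfl⟩, rfl⟩
    · exact ⟨u i, ⟨le_rfl, hu (Nat.le_succ i)⟩, rfl⟩
  have hdisj : (↑(Finset.range n) : Set ℕ).Pairwise (Function.onFun (MeasureTheory.AEDisjoint μH[1]) A) := by
    have key : ∀ i j, i < j → μH[1] (A i ∩ A j) = 0 := by
      intro i j hij
      have hsub : A i ∩ A j ⊆ {g (u j)} := by
        rintro z ⟨⟨α, hα, hzα⟩, ⟨β, hβ, hzβ⟩⟩
        have hαI : α ∈ Set.Icc (0:ℝ) 1 := hIccsub i hα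
        have hβI : β ∈ Set.Icc (0:ℝ) 1 := hIccsub j hβ
        have hαβ : α = β := hinj hαI hβI (hzα.trans hzβ.symm)
        have h1 : u (i+1) ≤ u j := hu hij
        have h2 : α = u j := le_antisymm (hα.2.trans h1) (by rw [hαβ]; exact hβ.1)
        rw [Set.mem_singleton_iff, ← hzα, h2]
      refine le_antisymm ?_ zero_le
      calc μH[1] (A i ∩ A j) ≤ μH[1] {g (u j)} := measure_mono hsub
        _ = 0 := H1_singleton_zero _
    intro i _ j _ hij
    rcases Nat.lt_or_ge i j with h | h
    · exact key i j h
    · have h3 := key j i (by omega)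
      show μH[1] (A i ∩ A j) = 0
      rw [Set.inter_comm]
      exact h3
  calc ∑ i ∈ Finset.range n, edist (g (u (i+1))) (g (u i))
      ≤ ∑ i ∈ Finset.range n, μH[1] (A i) := Finset.sum_le_sum (fun i _ => hedist i)
    _ = μH[1] (⋃ i ∈ Finset.range n, A i) :=
        (measure_biUnion_finset₀ hdisj (fun i _ =>
          ((hAcomp i).isClosed.measurableSet).nullMeasurableSet)).symm
    _ ≤ μH[1] (g '' Set.Icc 0 1) := measure_mono (Set.iUnion₂_subset (fun i _ => hAsub i))

omit [MeasurableSpace X] [BorelSpace X] in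
lemma reparam {g : ℝ → X} {L : ℝ≥0} (hg : LipschitzOnWith L g (Set.Icc 0 1)) :
    ∃ f : ℝ → X, LipschitzOnWith (eVariationOn g (Set.Icc 0 1)).toNNReal f (Set.Icc 0 1) ∧
      f 0 = g 0 ∧ f 1 = g 1 ∧ ∀ t ∈ Set.Icc (0:ℝ) 1, f t ∈ g '' Set.Icc 0 1 := by
  set ℓ : ℝ≥0∞ := eVariationOn g (Set.Icc 0 1) with hℓ
  have hℓtop : ℓ ≠ ⊤ := ((evar_lip hg).trans_lt ENNReal.ofReal_lt_top).ne
  set lr : ℝ := ℓ.toReal with hlr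
  have hlr0 : 0 ≤ lr := ENNReal.toReal_nonneg
  set τ : ℝ → ℝ := fun u => (eVariationOn g (Set.Icc 0 u)).toReal with hτ
  have hfin : ∀ u v : ℝ, 0 ≤ u → v ≤ 1 → eVariationOn g (Set.Icc u v) ≠ ⊤ := by
    intro u v h0 h1
    refine ne_top_of_le_ne_top hℓtop ?_
    exact eVariationOn.mono g (Set.Icc_subset_Icc h0 h1)
  have hτadd : ∀ u v : ℝ, 0 ≤ u → u ≤ v → v ≤ 1 →
      τ v = τ u + (eVariationOn g (Set.Icc u v)).toReal := by
    intro u v h0 huv h1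
    have h2 := evar_Icc_add g h0 huv
    simp only [hτ]
    rw [← h2, ENNReal.toReal_add (hfin 0 u le_rfl (by linarith)) (hfin u v h0 h1)]
  have hdistτ : ∀ u v : ℝ, u ∈ Set.Icc (0:ℝ) 1 → v ∈ Set.Icc (0:ℝ) 1 → u ≤ v →
      dist (g u) (g v) ≤ τ v - τ u := by
    intro u v hu hv huv
    have h1 : edist (g u) (g v) ≤ eVariationOn g (Set.Icc u v) :=
      eVariationOn.edist_le g (Set.left_mem_Icc.mpr huv) (Set.right_mem_Icc.mpr huv)
    have h2 : dist (g u) (g v) ≤ (eVariationOn g (Set.Icc u v)).toReal := by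
      rw [dist_edist]
      exact ENNReal.toReal_mono (hfin u v hu.1 hv.2) h1
    have h3 := hτadd u v hu.1 huv hv.2
    linarith
  have hτ0 : τ 0 = 0 := by
    simp only [hτ, Set.Icc_self]
    rw [eVariationOn.subsingleton g Set.subsingleton_singleton]
    rfl
  have hτ1 : τ 1 = lr := rfl
  have hτlip : LipschitzOnWith L τ (Set.Icc 0 1) := by
    rw [lipschitzOnWith_iff_dist_le_mul]
    have key : ∀ a b : ℝ, a ∈ Set.Icc (0:ℝ) 1 → b ∈ Set.Icc (0:ℝ) 1 → a ≤ b →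
        τ b - τ a ≤ (L:ℝ) * (b - a) ∧ 0 ≤ τ b - τ a := by
      intro a b ha hb hab
      have h1 := hτadd a b ha.1 hab hb.2
      have h2 : eVariationOn g (Set.Icc a b) ≤ ENNReal.ofReal ((L:ℝ) * (b - a)) :=
        evar_lip (hg.mono (Set.Icc_subset_Icc ha.1 hb.2))
      have h3 : (eVariationOn g (Set.Icc a b)).toReal ≤ (L:ℝ) * (b - a) := by
        have h4 := ENNReal.toReal_mono ENNReal.ofReal_ne_top h2
        rwa [ENNReal.toReal_ofReal
          (mul_nonneg (NNReal.coe_nonneg L) (sub_nonneg.mpr hab))] at h4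
      have h5 : 0 ≤ (eVariationOn g (Set.Icc a b)).toReal := ENNReal.toReal_nonneg
      exact ⟨by linarith, by linarith⟩
    intro a ha b hb
    rw [Real.dist_eq, Real.dist_eq]
    rcases le_total a b with h | h
    · obtain ⟨h1, h2⟩ := key a b ha hb h
      rw [abs_of_nonpos (by linarith), abs_of_nonpos (by linarith)]
      linarith
    · obtain ⟨h1, h2⟩ := key b a hb ha h
      rw [abs_of_nonneg (by linarith), abs_of_nonneg (by linarith)]
      linarith
  have hτcont : ContinuousOn τ (Set.Icc 0 1) := hτlip.continuousOn
  have hIVT : ∀ v, v ∈ Set.Icc (0:ℝ) lr → ∃ u, u ∈ Set.Icc (0:ℝ) 1 ∧ τ u = v := by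
    intro v hv
    have h1 : Set.Icc (τ 0) (τ 1) ⊆ τ '' Set.Icc 0 1 :=
      intermediate_value_Icc zero_le_one hτcont
    rw [hτ0, hτ1] at h1
    obtain ⟨u, hu, hτu⟩ := h1 hv
    exact ⟨u, hu, hτu⟩
  choose uv huv hτuv using hIVT
  have hmem : ∀ v ∈ Set.Icc (0:ℝ) 1, lr * v ∈ Set.Icc (0:ℝ) lr := by
    intro v hv
    constructor
    · exact mul_nonneg hlr0 hv.1
    · calc lr * v ≤ lr * 1 := by
            apply mul_le_mul_of_nonneg_left hv.2 hlr0
        _ = lr := mul_one lr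
  set f : ℝ → X := fun v => if h : lr * v ∈ Set.Icc (0:ℝ) lr then g (uv _ h) else g 0 with hf
  have hgdist2 : ∀ a b : ℝ, a ∈ Set.Icc (0:ℝ) 1 → b ∈ Set.Icc (0:ℝ) 1 →
      ∀ (h1 : lr * a ∈ Set.Icc (0:ℝ) lr) (h2 : lr * b ∈ Set.Icc (0:ℝ) lr),
      dist (g (uv _ h1)) (g (uv _ h2)) ≤ |lr * b - lr * a| := by
    intro a b _ _ h1 h2
    rcases le_total (uv _ h1) (uv _ h2) with h | h
    · have := hdistτ _ _ (huv _ h1) (huv _ h2) h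
      rw [hτuv _ h1, hτuv _ h2] at this
      exact this.trans (le_abs_self _)
    · have := hdistτ _ _ (huv _ h2) (huv _ h1) h
      rw [hτuv _ h1, hτuv _ h2] at this
      rw [dist_comm]
      refine this.trans ?_
      rw [abs_sub_comm]
      exact le_abs_self _
  refine ⟨f, ?_, ?_, ?_, ?_⟩
  · rw [lipschitzOnWith_iff_dist_le_mul]
    intro a ha b hb
    have h1 := hmem a ha
    have h2 := hmem b hb
    simp only [hf, dif_pos h1, dif_pos h2]
    have h3 := hgdist2 a b ha hb h1 h2
    have h4 : ((ℓ.toNNReal : ℝ≥0) : ℝ) = lr := rfl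
    rw [h4, Real.dist_eq]
    calc dist (g (uv _ h1)) (g (uv _ h2)) ≤ |lr * b - lr * a| := h3
      _ = lr * |a - b| := by
          rw [show lr * b - lr * a = lr * (b - a) by ring, abs_mul, abs_of_nonneg hlr0,
            abs_sub_comm]
  · have h1 : lr * 0 ∈ Set.Icc (0:ℝ) lr := hmem 0 (by norm_num)
    simp only [hf, dif_pos h1]
    have hu0 : τ (uv _ h1) = 0 := by rw [hτuv _ h1, mul_zero]
    have := hdistτ 0 (uv _ h1) (by norm_num) (huv _ h1) (huv _ h1).1
    rw [hu0, hτ0, sub_zero] at this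
    have : dist (g 0) (g (uv _ h1)) = 0 := le_antisymm (by linarith) dist_nonneg
    exact (dist_eq_zero.mp this).symm
  · have h1 : lr * 1 ∈ Set.Icc (0:ℝ) lr := hmem 1 (by norm_num)
    simp only [hf, dif_pos h1]
    have hu1 : τ (uv _ h1) = lr := by rw [hτuv _ h1, mul_one]
    have h2 := hdistτ (uv _ h1) 1 (huv _ h1) (by norm_num) (huv _ h1).2
    rw [hu1, hτ1, sub_self] at h2
    have : dist (g (uv _ h1)) (g 1) = 0 := le_antisymm h2 dist_nonneg
    exact dist_eq_zero.mp this
  · intro t ht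
    have h1 := hmem t ht
    simp only [hf, dif_pos h1]
    exact ⟨uv _ h1, huv _ h1, rfl⟩


lemma exists_curve_le_H1 {D : Set X} (hDc : IsCompact D) (hD : IsPreconnected D) {x y : X}
    (hx : x ∈ D) (hy : y ∈ D) (hxy : x ≠ y) (hfin : μH[1] D ≠ ⊤) :
    ∃ f : ℝ → X, LipschitzOnWith (μH[1] D).toNNReal f (Set.Icc 0 1) ∧
      f 0 = x ∧ f 1 = y ∧ ∀ t ∈ Set.Icc (0:ℝ) 1, f t ∈ D := by
  obtain ⟨B, f0, hlip0, h00, h01, h0D⟩ := exists_lipschitz_curve hDc hD hx hy hxy hfin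
  have hA : (CurveSet D x y).Nonempty := ⟨(B : ℝ≥0∞), B, f0, rfl, hlip0, h00, h01, h0D⟩
  obtain ⟨g, hg, hg0, hg1, hgD⟩ := exists_min_curve hDc hA
  have hinj := min_curve_injOn hxy hA hg hg0 hg1 hgD
  have h1 : eVariationOn g (Set.Icc 0 1) ≤ μH[1] (g '' Set.Icc 0 1) :=
    evar_le_H1 hg.continuousOn hinj
  have h2 : μH[1] (g '' Set.Icc 0 1) ≤ μH[1] D := measure_mono (by
    rintro z ⟨t, ht, rfl⟩
    exact hgD t ht)
  obtain ⟨f, hflip, hf0, hf1, hfD⟩ := reparam hg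
  have hweak : LipschitzOnWith (μH[1] D).toNNReal f (Set.Icc 0 1) := by
    intro a ha b hb
    refine (hflip ha hb).trans ?_
    exact mul_le_mul_left
      (ENNReal.coe_le_coe.mpr (ENNReal.toNNReal_mono hfin (h1.trans h2))) _
  refine ⟨f, hweak, hf0.trans hg0, hf1.trans hg1, fun t ht => ?_⟩
  obtain ⟨u, hu, huv⟩ := hfD t ht
  rw [← huv]
  exact hgD u hu

end Aux

/-- **Hopf–Rinow via Steiner realization.** In a proper metric space `X`, if
`St({x,y},X) < ∞` for two points `x, y`, then there is a continuum `C` containing `x`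
and `y` with `H¹(C) = St({x,y},X)`. -/
theorem hopf_rinow_steiner (X : Type*) [MetricSpace X] [ProperSpace X]
    (x y : X) (hfin : relSteiner X {x, y} < ⊤) :
    ∃ C : Set X, IsCompact C ∧ IsConnected C ∧ x ∈ C ∧ y ∈ C ∧
      H1 X C = relSteiner X {x, y} := by
  classical
  letI : MeasurableSpace X := borel X
  haveI : BorelSpace X := ⟨rfl⟩
  have hH1 : ∀ A : Set X, H1 X A = μH[1] A := fun A => rfl
  set m := relSteiner X {x, y} with hm
  have hmtop : m ≠ ⊤ := hfin.ne
  by_cases hxy : x = y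
  · subst hxy
    refine ⟨{x}, isCompact_singleton, isConnected_singleton, rfl, rfl, ?_⟩
    have h1 : m ≤ H1 X {x} := by
      apply sInf_le
      have hun : ({x} : Set X) ∪ {x, x} = {x} := by simp
      exact ⟨{x}, isCompact_singleton, isConnected_singleton,
        by rw [hun]; exact isCompact_singleton,
        by rw [hun]; exact isConnected_singleton, rfl⟩
    have h2 : H1 X {x} = 0 := by rw [hH1]; exact H1_singleton_zero x
    rw [h2] at h1 ⊢
    exact (le_antisymm h1 zero_le).symm
  · have hxyne : x ≠ y := hxy
    have hcand : ∀ j : ℕ, ∃ D : Set X, IsCompact D ∧ IsConnected D ∧ x ∈ D ∧ y ∈ D ∧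
        μH[1] D < m + ENNReal.ofReal (1/(j+1)) := by
      intro j
      have h1 : m < m + ENNReal.ofReal (1/(j+1)) :=
        ENNReal.lt_add_right hmtop (by positivity)
      rw [hm] at h1
      rw [show relSteiner X {x, y} = sInf {r : ℝ≥0∞ | ∃ C : Set X, IsCompact C ∧
        IsConnected C ∧ IsCompact (C ∪ {x, y}) ∧ IsConnected (C ∪ {x, y}) ∧ r = H1 X C}
        from rfl] at h1
      obtain ⟨r, hr, hrlt⟩ := sInf_lt_iff.mp h1
      obtain ⟨C, hCc, hCconn, hCSc, hCSconn, hreq⟩ := hr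
      refine ⟨C ∪ {x, y}, hCSc, hCSconn,
        Set.mem_union_right _ (by simp), Set.mem_union_right _ (by simp), ?_⟩
      have h2 : μH[1] (C ∪ {x, y}) ≤ μH[1] C := by
        have hxy2 : ({x, y} : Set X) = {x} ∪ {y} := by
          rw [Set.singleton_union]
        calc μH[1] (C ∪ {x, y}) ≤ μH[1] C + μH[1] ({x, y} : Set X) := measure_union_le _ _
          _ ≤ μH[1] C + (μH[1] ({x} : Set X) + μH[1] ({y} : Set X)) := by
              gcongr
              rw [hxy2]
              exact measure_union_le _ _
          _ = μH[1] C := by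
              rw [H1_singleton_zero, H1_singleton_zero, add_zero, add_zero]
      rw [hH1] at hreq
      calc μH[1] (C ∪ {x, y}) ≤ μH[1] C := h2
        _ = r := hreq.symm
        _ < _ := hrlt
    choose D hDc hDconn hDx hDy hDlt using hcand
    have hDfin : ∀ j : ℕ, μH[1] (D j) ≠ ⊤ := by
      intro j
      have h1 : m + ENNReal.ofReal (1/((j:ℝ)+1)) < ⊤ :=
        ENNReal.add_lt_top.mpr ⟨hfin, ENNReal.ofReal_lt_top⟩
      exact ((hDlt j).trans h1).ne
    have htoReal : ∀ j : ℕ, ((μH[1] (D j)).toNNReal : ℝ) ≤ m.toReal + 1/(j+1) := by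
      intro j
      have h4 := ENNReal.toReal_mono
        (ENNReal.add_ne_top.mpr ⟨hmtop, ENNReal.ofReal_ne_top⟩) (hDlt j).le
      rwa [ENNReal.toReal_add hmtop ENNReal.ofReal_ne_top,
        ENNReal.toReal_ofReal (by positivity)] at h4
    have hcurve : ∀ j : ℕ, ∃ f : ℝ → X,
        LipschitzOnWith (μH[1] (D j)).toNNReal f (Set.Icc 0 1) ∧
        f 0 = x ∧ f 1 = y ∧ ∀ t ∈ Set.Icc (0:ℝ) 1, f t ∈ D j :=
      fun j => exists_curve_le_H1 (hDc j) (hDconn j).isPreconnected (hDx j) (hDy j)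
        hxyne (hDfin j)
    choose f hflip hf0 hf1 hfD using hcurve
    set K0 : Set X := Metric.closedBall x (m.toReal + 1) with hK0
    have hDK0 : ∀ j, D j ⊆ K0 := by
      intro j z hz
      have h1 : ENNReal.ofReal (dist x z) ≤ μH[1] (D j) :=
        dist_le_H1' (hDconn j).isPreconnected (hDx j) hz
      have h2 : dist x z ≤ (μH[1] (D j)).toReal := by
        have h3 := ENNReal.toReal_mono (hDfin j) h1
        rwa [ENNReal.toReal_ofReal dist_nonneg] at h3
      have h3 : (μH[1] (D j)).toReal ≤ m.toReal + 1/(j+1) := htoReal j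
      have h5 : 1/((j:ℝ)+1) ≤ 1 := by
        rw [div_le_one (by positivity)]
        linarith [Nat.cast_nonneg (α := ℝ) j]
      rw [Metric.mem_closedBall, dist_comm]
      linarith
    have hK0c : IsCompact K0 := isCompact_closedBall x _
    set U : Ultrafilter ℕ := Ultrafilter.of Filter.atTop with hU
    have hUle : (U : Filter ℕ) ≤ Filter.atTop := Ultrafilter.of_le _
    obtain ⟨G, hGK, hGT⟩ := ultra_limit hK0c U f (fun j t ht => hDK0 j (hfD j t ht))
    have hGdist : ∀ s ∈ Set.Icc (0:ℝ) 1, ∀ t ∈ Set.Icc (0:ℝ) 1,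
        dist (G s) (G t) ≤ m.toReal * dist s t := by
      intro s hs t ht
      have h1 : Tendsto (fun j => dist (f j s) (f j t)) (U : Filter ℕ)
          (𝓝 (dist (G s) (G t))) := (hGT s hs).dist (hGT t ht)
      have h2 : Tendsto (fun j : ℕ => (m.toReal + 1/(j+1)) * dist s t) (U : Filter ℕ)
          (𝓝 (m.toReal * dist s t)) := by
        have ha : Tendsto (fun j : ℕ => m.toReal + 1/(j+1)) Filter.atTop
            (𝓝 (m.toReal + 0)) :=
          tendsto_const_nhds.add tendsto_one_div_add_atTop_nhds_zero_nat
        rw [add_zero] at ha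
        exact (ha.mul_const _).mono_left hUle
      apply le_of_tendsto_of_tendsto' h1 h2
      intro j
      calc dist (f j s) (f j t) ≤ ((μH[1] (D j)).toNNReal : ℝ) * dist s t :=
            lipschitzOnWith_iff_dist_le_mul.mp (hflip j) s hs t ht
        _ ≤ (m.toReal + 1/(j+1)) * dist s t :=
            mul_le_mul_of_nonneg_right (htoReal j) dist_nonneg
    have hGlip : LipschitzOnWith m.toNNReal G (Set.Icc 0 1) := by
      rw [lipschitzOnWith_iff_dist_le_mul]
      intro s hs t ht
      exact hGdist s hs t ht
    have hG0 : G 0 = x := tendsto_nhds_unique (hGT 0 (by norm_num))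
      (by simp only [hf0]; exact tendsto_const_nhds)
    have hG1 : G 1 = y := tendsto_nhds_unique (hGT 1 (by norm_num))
      (by simp only [hf1]; exact tendsto_const_nhds)
    set Cs : Set X := G '' Set.Icc 0 1 with hCs
    have hCscomp : IsCompact Cs := isCompact_Icc.image_of_continuousOn hGlip.continuousOn
    have hCsconn : IsConnected Cs := (isConnected_Icc zero_le_one).image G hGlip.continuousOn
    have hxCs : x ∈ Cs := ⟨0, by norm_num, hG0⟩
    have hyCs : y ∈ Cs := ⟨1, by norm_num, hG1⟩
    have hupper : μH[1] Cs ≤ m := by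
      have h1 := hGlip.hausdorffMeasure_image_le (d := 1) (by norm_num)
      rw [MeasureTheory.hausdorffMeasure_real, Real.volume_Icc, sub_zero,
        ENNReal.ofReal_one, mul_one, ENNReal.rpow_one, ENNReal.coe_toNNReal hmtop] at h1
      exact h1
    have hlower : m ≤ μH[1] Cs := by
      rw [hm]
      apply sInf_le
      have hsub : ({x, y} : Set X) ⊆ Cs :=
        Set.insert_subset_iff.mpr ⟨hxCs, Set.singleton_subset_iff.mpr hyCs⟩
      have hun : Cs ∪ {x, y} = Cs := Set.union_eq_self_of_subset_right hsub
      exact ⟨Cs, hCscomp, hCsconn, by rw [hun]; exact hCscomp,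
        by rw [hun]; exact hCsconn, (hH1 Cs).symm⟩
    refine ⟨Cs, hCscomp, hCsconn, hxCs, hyCs, ?_⟩
    rw [hH1]
    exact le_antisymm hupper hlower
end
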